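/- In G₀, let x = [a,b] and define the quadruple A₀ = (A₀,₁, A₀,₂, A₀,₃, A₀,₄) = ((x²)⁻¹(x²)^{ca}, ((x²)^{ca})⁻¹ x² (x²)^{cab}, ((x²)^{cab})⁻¹ (x²)⁻¹, x²), and for n ≥ 0 set A_{n+1,i} = A_{n,i}⁻¹ A_{n,σ(i)} where σ cyclically permutes (1,2,3,4). Then for each i = 1,…,4 the element A₉,ᵢ is nontrivial, fixes the word 111112 ∈ X*, and satisfies A₉,ᵢ@111112 = A₀,ᵢ. -/
import Mathlib


namespace AutSG

variable {X Q : Type*}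

/-- The action of a state `q` of a Mealy automaton with transition function `δ`
and output function `out` on finite words over the alphabet `X`. -/
def mAct (δ : Q → X → Q) (out : Q → X → X) : Q → List X → List X
  | _, [] => []
  | q, x :: w => out q x :: mAct δ out (δ q x) w

theorem mAct_bijective (δ : Q → X → Q) (out : Q → X → X)
    (hout : ∀ q, Function.Bijective (out q)) (q : Q) :
    Function.Bijective (mAct δ out q) := by
  have key : ∀ (l₁ : List X) (q : Q) (l₂ : List X),
      mAct δ out q l₁ = mAct δ out q l₂ → l₁ = l₂ := by
    intro l₁
    induction l₁ with
    | nil =>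
      intro q l₂ h
      cases l₂ with
      | nil => rfl
      | cons y u => exact absurd h (by simp [mAct])
    | cons x w ih =>
      intro q l₂ h
      cases l₂ with
      | nil => exact absurd h (by simp [mAct])
      | cons y u =>
        simp only [mAct, List.cons.injEq] at h
        obtain rfl : x = y := (hout q).1 h.1
        rw [ih (δ q x) u h.2]
  have key2 : ∀ (l : List X) (q : Q), ∃ m, mAct δ out q m = l := by
    intro l
    induction l with
    | nil => exact fun q => ⟨[], rfl⟩
    | cons y u ih =>
      intro q
      obtain ⟨x, hx⟩ := (hout q).2 y
      obtain ⟨m, hm⟩ := ih (δ q x)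
      exact ⟨x :: m, by simp [mAct, hx, hm]⟩
  exact ⟨fun {l₁ l₂} h => key l₁ q l₂ h, fun l => key2 l q⟩

/-- The permutation of `X*` induced by the state `q` of an invertible Mealy automaton,
as an element of `Equiv.Perm (List X)`.  We use the convention that permutations act
on the *right* via `rApp` below, so that the Lean group multiplication `g * h`
corresponds to "first `g`, then `h`", as in the usual convention for automaton groups. -/
noncomputable def genPerm (δ : Q → X → Q) (out : Q → X → X)
    (hout : ∀ q, Function.Bijective (out q)) (q : Q) : Equiv.Perm (List X) :=
  (Equiv.ofBijective _ (mAct_bijective δ out hout q))⁻¹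

/-- Right action of a permutation on words: `rApp g w` is `w^g`.
Note `rApp (g * h) w = rApp h (rApp g w)`. -/
def rApp (g : Equiv.Perm (List X)) (w : List X) : List X := g⁻¹ w

theorem rApp_genPerm (δ : Q → X → Q) (out : Q → X → X)
    (hout : ∀ q, Function.Bijective (out q)) (q : Q) (w : List X) :
    rApp (genPerm δ out hout q) w = mAct δ out q w := by
  simp [rApp, genPerm, Equiv.ofBijective]

/-- Commutator with the convention `[x,y] = x⁻¹y⁻¹xy`. -/
def comm {G : Type*} [Group G] (x y : G) : G := x⁻¹ * y⁻¹ * x * y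

/-- Conjugation with the convention `y^z = z⁻¹yz`. -/
def conj {G : Type*} [Group G] (y z : G) : G := z⁻¹ * y * z

/-- Iterated commutators: `E₀(g,h) = g`, `E_{c+1}(g,h) = [E_c(g,h), h]`. -/
def engel {G : Type*} [Group G] : ℕ → G → G → G
  | 0, g, _ => g
  | c + 1, g, h => comm (engel c g h) h

/-- `vStar v k` is the permutation `v*k` of `X*`: it maps `v ++ w` to `v ++ w^k`
(with respect to the right action `rApp`) and fixes every word not having `v`
as a prefix. -/
def vStar [DecidableEq X] (v : List X) (k : Equiv.Perm (List X)) :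
    Equiv.Perm (List X) where
  toFun w := if v <+: w then v ++ k (w.drop v.length) else w
  invFun w := if v <+: w then v ++ k.symm (w.drop v.length) else w
  left_inv w := by
    by_cases h : v <+: w
    · simp only [if_pos h, if_pos (List.prefix_append v _), List.drop_left,
        Equiv.symm_apply_apply]
      exact List.prefix_iff_eq_append.mp h
    · simp only [if_neg h]
  right_inv w := by
    by_cases h : v <+: w
    · simp only [if_pos h, if_pos (List.prefix_append v _), List.drop_left,
        Equiv.apply_symm_apply]
      exact List.prefix_iff_eq_append.mp h
    · simp only [if_neg h]

end AutSG
namespace AutSG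

/-- States of the Grigorchuk automaton: `a`, `b`, `c`, `d` and the identity state `e`. -/
inductive GrigQ | a | b | c | d | e
deriving DecidableEq

/-- Transition function of the Grigorchuk automaton (letter `1` is `0 : Fin 2`,
letter `2` is `1 : Fin 2`). -/
def grigδ : GrigQ → Fin 2 → GrigQ
  | .a, _ => .e
  | .b, 0 => .a
  | .b, _ => .c
  | .c, 0 => .a
  | .c, _ => .d
  | .d, 0 => .e
  | .d, _ => .b
  | .e, _ => .e

/-- Output function of the Grigorchuk automaton: `a` swaps the two letters,
all other states act trivially on letters. -/
def grigOut : GrigQ → Fin 2 → Fin 2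
  | .a, x => x + 1
  | _, x => x

theorem grigOut_bij : ∀ q, Function.Bijective (grigOut q) := by
  intro q; cases q <;> decide

/-- The generator `a` of the first Grigorchuk group: `(1w)^a = 2w`, `(2w)^a = 1w`. -/
noncomputable def ga : Equiv.Perm (List (Fin 2)) := genPerm grigδ grigOut grigOut_bij .a
/-- The generator `b`: `(1w)^b = 1(w^a)`, `(2w)^b = 2(w^c)`. -/
noncomputable def gb : Equiv.Perm (List (Fin 2)) := genPerm grigδ grigOut grigOut_bij .b
/-- The generator `c`: `(1w)^c = 1(w^a)`, `(2w)^c = 2(w^d)`. -/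
noncomputable def gc : Equiv.Perm (List (Fin 2)) := genPerm grigδ grigOut grigOut_bij .c
/-- The generator `d`: `(1w)^d = 1w`, `(2w)^d = 2(w^b)`. -/
noncomputable def gd : Equiv.Perm (List (Fin 2)) := genPerm grigδ grigOut grigOut_bij .d

/-- The first Grigorchuk group `G₀`, as the subgroup of the permutation group of
`{1,2}*` generated by `a`, `b`, `c`, `d`. -/
noncomputable def Grigorchuk : Subgroup (Equiv.Perm (List (Fin 2))) :=
  Subgroup.closure {ga, gb, gc, gd}

end AutSG

namespace AutSG

/-- `x² = [a,b]²`. -/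
noncomputable def grigX2 : Equiv.Perm (List (Fin 2)) := (comm ga gb) ^ 2

/-- The quadruples `A_n` of the key computation: `A₀` is as in the paper, and
`A_{n+1,i} = A_{n,i}⁻¹ A_{n,σ(i)}` for the cyclic permutation `σ` of the indices. -/
noncomputable def grigA : ℕ → Fin 4 → Equiv.Perm (List (Fin 2))
  | 0 => ![grigX2⁻¹ * conj grigX2 (gc * ga),
           (conj grigX2 (gc * ga))⁻¹ * grigX2 * conj grigX2 (gc * ga * gb),
           (conj grigX2 (gc * ga * gb))⁻¹ * grigX2⁻¹,
           grigX2]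
  | n + 1 => fun i => (grigA n i)⁻¹ * grigA n (i + 1)

/-- The word `111112` (letter `1` is `0 : Fin 2`, letter `2` is `1 : Fin 2`). -/
def grigWord : List (Fin 2) := [0, 0, 0, 0, 0, 1]


open GrigQ

/-- Abbreviation for the Grigorchuk automaton action. -/
def M (q : GrigQ) (w : List (Fin 2)) : List (Fin 2) := mAct grigδ grigOut q w

/-- Action of a word of states (applied left to right). -/
def wact (l : List GrigQ) (w : List (Fin 2)) : List (Fin 2) :=
  l.foldl (fun w q => M q w) w

/-- State of a single automaton state after reading a word. -/
def stQ (q : GrigQ) (v : List (Fin 2)) : GrigQ := v.foldl grigδ q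

/-- States of a word of automaton states after reading `v`. -/
def wstates : List GrigQ → List (Fin 2) → List GrigQ
  | [], _ => []
  | q :: l, v => stQ q v :: wstates l (M q v)

theorem M_nil (q : GrigQ) : M q [] = [] := rfl

theorem M_cons (q : GrigQ) (x : Fin 2) (w : List (Fin 2)) :
    M q (x :: w) = grigOut q x :: M (grigδ q x) w := rfl

theorem wact_nil_word : ∀ l : List GrigQ, wact l [] = [] := by
  intro l
  induction l with
  | nil => rfl
  | cons q l ih => simpa [wact, M_nil] using ih

theorem wact_cons (q : GrigQ) (l : List GrigQ) (w : List (Fin 2)) :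
    wact (q :: l) w = wact l (M q w) := rfl

theorem wact_append_gens (l₁ l₂ : List GrigQ) (w : List (Fin 2)) :
    wact (l₁ ++ l₂) w = wact l₂ (wact l₁ w) := List.foldl_append ..

theorem mAct_e : ∀ w : List (Fin 2), M e w = w := by
  intro w
  induction w with
  | nil => rfl
  | cons x w ih => simp [M_cons, grigOut, grigδ, ih]

theorem mAct_ids : ∀ w : List (Fin 2),
    M a (M a w) = w ∧ M b (M b w) = w ∧ M c (M c w) = w ∧ M d (M d w) = w ∧
    M c (M b w) = M d w ∧ M b (M c w) = M d w ∧
    M d (M c w) = M b w ∧ M c (M d w) = M b w ∧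
    M d (M b w) = M c w ∧ M b (M d w) = M c w := by
  intro w
  induction w with
  | nil => simp [M_nil]
  | cons x w ih =>
    obtain ⟨haa, hbb, hcc, hdd, hcb, hbc, hdc, hcd, hdb, hbd⟩ := ih
    fin_cases x <;>
      simp [M_cons, grigOut, grigδ, mAct_e, haa, hbb, hcc, hdd, hcb, hbc, hdc, hcd, hdb, hbd]

theorem mAct_aa (w : List (Fin 2)) : M a (M a w) = w := (mAct_ids w).1
theorem mAct_bb (w : List (Fin 2)) : M b (M b w) = w := (mAct_ids w).2.1
theorem mAct_cc (w : List (Fin 2)) : M c (M c w) = w := (mAct_ids w).2.2.1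
theorem mAct_dd (w : List (Fin 2)) : M d (M d w) = w := (mAct_ids w).2.2.2.1
theorem mAct_cb (w : List (Fin 2)) : M c (M b w) = M d w := (mAct_ids w).2.2.2.2.1
theorem mAct_bc (w : List (Fin 2)) : M b (M c w) = M d w := (mAct_ids w).2.2.2.2.2.1
theorem mAct_dc (w : List (Fin 2)) : M d (M c w) = M b w := (mAct_ids w).2.2.2.2.2.2.1
theorem mAct_cd (w : List (Fin 2)) : M c (M d w) = M b w := (mAct_ids w).2.2.2.2.2.2.2.1
theorem mAct_db (w : List (Fin 2)) : M d (M b w) = M c w := (mAct_ids w).2.2.2.2.2.2.2.2.1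
theorem mAct_bd (w : List (Fin 2)) : M b (M d w) = M c w := (mAct_ids w).2.2.2.2.2.2.2.2.2

theorem mAct_invol : ∀ (q : GrigQ) (w : List (Fin 2)), M q (M q w) = w := by
  intro q w
  cases q
  · exact mAct_aa w
  · exact mAct_bb w
  · exact mAct_cc w
  · exact mAct_dd w
  · rw [mAct_e, mAct_e]

theorem M_append : ∀ (v : List (Fin 2)) (q : GrigQ) (w : List (Fin 2)),
    M q (v ++ w) = M q v ++ M (stQ q v) w := by
  intro v
  induction v with
  | nil => intro q w; rfl
  | cons x v ih =>
    intro q w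
    simp only [List.cons_append, M_cons, ih, stQ, List.foldl_cons]

theorem wact_append : ∀ (l : List GrigQ) (v w : List (Fin 2)),
    wact l (v ++ w) = wact l v ++ wact (wstates l v) w := by
  intro l
  induction l with
  | nil => intro v w; rfl
  | cons q l ih =>
    intro v w
    rw [wact_cons, M_append, ih, wstates]
    rfl

/-- One step of the rewriting system for words in the Grigorchuk generators. -/
def push : List GrigQ → GrigQ → List GrigQ
  | acc, .e => acc
  | .a :: rest, .a => rest
  | .b :: rest, .b => rest
  | .c :: rest, .c => rest
  | .d :: rest, .d => rest
  | .b :: rest, .c => .d :: rest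
  | .b :: rest, .d => .c :: rest
  | .c :: rest, .b => .d :: rest
  | .c :: rest, .d => .b :: rest
  | .d :: rest, .b => .c :: rest
  | .d :: rest, .c => .b :: rest
  | acc, q => q :: acc

def red1 : List GrigQ → List GrigQ → List GrigQ
  | acc, [] => acc.reverse
  | acc, q :: l => red1 (push acc q) l

/-- Reduction of a word to normal form. -/
def red (l : List GrigQ) : List GrigQ := red1 [] l

theorem push_sound : ∀ (acc : List GrigQ) (q : GrigQ) (w : List (Fin 2)),
    wact (push acc q).reverse w = M q (wact acc.reverse w) := by
  intro acc q w
  cases q <;> rcases acc with _ | ⟨_ | _ | _ | _ | _, rest⟩ <;>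
    simp [push, wact_append_gens, wact_cons, wact, mAct_e,
      mAct_aa, mAct_bb, mAct_cc, mAct_dd, mAct_cb, mAct_bc, mAct_dc, mAct_cd, mAct_db, mAct_bd]

theorem red1_sound : ∀ (l acc : List GrigQ) (w : List (Fin 2)),
    wact (red1 acc l) w = wact l (wact acc.reverse w) := by
  intro l
  induction l with
  | nil => intro acc w; rfl
  | cons q l ih =>
    intro acc w
    rw [red1, ih, push_sound, ← wact_cons]

theorem red_sound (l : List GrigQ) (w : List (Fin 2)) : wact (red l) w = wact l w := by
  rw [red, red1_sound]; rfl

/-- Bisimulation principle: a finite list of pairs of words closed under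
transitions with matching outputs consists of pairs acting identically. -/
theorem bisim (R : List (List GrigQ × List GrigQ))
    (h : ∀ p ∈ R, ∀ x : Fin 2, wact p.1 [x] = wact p.2 [x] ∧
      (red (wstates p.1 [x]), red (wstates p.2 [x])) ∈ R) :
    ∀ (w : List (Fin 2)) (p : _), p ∈ R → wact p.1 w = wact p.2 w := by
  intro w
  induction w with
  | nil => intro p _; rw [wact_nil_word, wact_nil_word]
  | cons x w ih =>
    intro p hp
    obtain ⟨hout, hmem⟩ := h p hp x
    have h1 : (x :: w) = [x] ++ w := rfl
    rw [h1, wact_append, wact_append, hout,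
      ← red_sound (wstates p.1 [x]), ← red_sound (wstates p.2 [x]),
      ih _ hmem]


open GrigQ

/-- Uniform notation for the generators. -/
noncomputable def gp (q : GrigQ) : Equiv.Perm (List (Fin 2)) :=
  genPerm grigδ grigOut grigOut_bij q

theorem rApp_one (w : List (Fin 2)) : rApp (1 : Equiv.Perm (List (Fin 2))) w = w := by
  simp [rApp]

theorem rApp_mul (g h : Equiv.Perm (List (Fin 2))) (w : List (Fin 2)) :
    rApp (g * h) w = rApp h (rApp g w) := by
  simp [rApp, mul_inv_rev]

theorem perm_eq_of_rApp (g h : Equiv.Perm (List (Fin 2)))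
    (H : ∀ w, rApp g w = rApp h w) : g = h :=
  inv_injective (Equiv.ext H)

theorem rApp_gp (q : GrigQ) (w : List (Fin 2)) : rApp (gp q) w = M q w :=
  rApp_genPerm grigδ grigOut grigOut_bij q w

theorem gp_sq (q : GrigQ) : gp q * gp q = 1 := by
  apply perm_eq_of_rApp
  intro w
  rw [rApp_mul, rApp_gp, rApp_gp, mAct_invol, rApp_one]

theorem gp_inv (q : GrigQ) : (gp q)⁻¹ = gp q :=
  inv_eq_of_mul_eq_one_right (gp_sq q)

/-- The product of the generators indexed by a word. -/
noncomputable def prodW (l : List GrigQ) : Equiv.Perm (List (Fin 2)) :=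
  (l.map gp).prod

theorem prodW_nil : prodW [] = 1 := rfl

theorem prodW_cons (q : GrigQ) (l : List GrigQ) : prodW (q :: l) = gp q * prodW l := by
  simp [prodW]

theorem prodW_append (l₁ l₂ : List GrigQ) : prodW (l₁ ++ l₂) = prodW l₁ * prodW l₂ := by
  simp [prodW]

theorem prodW_reverse (l : List GrigQ) : prodW l.reverse = (prodW l)⁻¹ := by
  induction l with
  | nil => simp [prodW]
  | cons q l ih =>
    rw [List.reverse_cons, prodW_append, ih, prodW_cons, prodW_nil, mul_one,
      prodW_cons, mul_inv_rev, gp_inv]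

theorem rApp_prodW : ∀ (l : List GrigQ) (w : List (Fin 2)),
    rApp (prodW l) w = wact l w := by
  intro l
  induction l with
  | nil => intro w; rw [prodW_nil, rApp_one]; rfl
  | cons q l ih =>
    intro w
    rw [prodW_cons, rApp_mul, rApp_gp, wact_cons, ih]

def x2w : List GrigQ := [a, b, a, b, a, b, a, b]
def c1w : List GrigQ := [a, c] ++ x2w ++ [c, a]
def c2w : List GrigQ := [b, a, c] ++ x2w ++ [c, a, b]

/-- The words representing the quadruples `A_n`. -/
def W : ℕ → Fin 4 → List GrigQ
  | 0 => ![x2w.reverse ++ c1w, c1w.reverse ++ (x2w ++ c2w), c2w.reverse ++ x2w.reverse, x2w]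
  | n + 1 => fun i => (W n i).reverse ++ W n (i + 1)

theorem ga_eq : ga = gp a := rfl
theorem gb_eq : gb = gp b := rfl
theorem gc_eq : gc = gp c := rfl

theorem grigX2_eq : grigX2 = prodW x2w := by
  rw [grigX2, comm, ga_eq, gb_eq, gp_inv, gp_inv, sq]
  simp [x2w, prodW_cons, prodW_nil, mul_assoc]

theorem conj1_eq : conj grigX2 (gc * ga) = prodW c1w := by
  rw [conj, grigX2_eq, c1w, prodW_append, prodW_append, ga_eq, gc_eq, mul_inv_rev,
    gp_inv, gp_inv]
  simp [prodW_cons, prodW_nil, mul_assoc]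

theorem conj2_eq : conj grigX2 (gc * ga * gb) = prodW c2w := by
  rw [conj, grigX2_eq, c2w, prodW_append, prodW_append, ga_eq, gc_eq, gb_eq,
    mul_inv_rev, mul_inv_rev, gp_inv, gp_inv, gp_inv]
  simp [prodW_cons, prodW_nil, mul_assoc]

theorem grigA_word : ∀ (n : ℕ) (i : Fin 4), grigA n i = prodW (W n i) := by
  intro n
  induction n with
  | zero =>
    intro i
    fin_cases i
    · show grigX2⁻¹ * conj grigX2 (gc * ga) = _
      rw [conj1_eq, grigX2_eq, ← prodW_reverse, ← prodW_append]
      rfl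
    · show (conj grigX2 (gc * ga))⁻¹ * grigX2 * conj grigX2 (gc * ga * gb) = _
      rw [conj1_eq, conj2_eq, grigX2_eq, ← prodW_reverse, mul_assoc,
        ← prodW_append, ← prodW_append]
      rfl
    · show (conj grigX2 (gc * ga * gb))⁻¹ * grigX2⁻¹ = _
      rw [conj2_eq, grigX2_eq, ← prodW_reverse, ← prodW_reverse, ← prodW_append]
      rfl
    · exact grigX2_eq
  | succ n ih =>
    intro i
    show (grigA n i)⁻¹ * grigA n (i + 1) = _
    rw [ih, ih, ← prodW_reverse, ← prodW_append]
    rfl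

/-- Output of a word of states on a single letter (strict version). -/
def wOut : List GrigQ → Fin 2 → Fin 2
  | [], x => x
  | q :: l, x =>
    match grigOut q x with
    | ⟨0, h⟩ => wOut l ⟨0, h⟩
    | ⟨n + 1, h⟩ => wOut l ⟨n + 1, h⟩

/-- Transition of a word of states on a single letter (strict version). -/
def wTrans : List GrigQ → Fin 2 → List GrigQ
  | [], _ => []
  | q :: l, x =>
    grigδ q x ::
      (match grigOut q x with
        | ⟨0, h⟩ => wTrans l ⟨0, h⟩
        | ⟨n + 1, h⟩ => wTrans l ⟨n + 1, h⟩)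

/-- Letter-by-letter version of `wact`, suitable for kernel evaluation. -/
def wact2 : List GrigQ → List (Fin 2) → List (Fin 2)
  | _, [] => []
  | l, x :: w => wOut l x :: wact2 (wTrans l x) w

theorem wOut_cons (q : GrigQ) (l : List GrigQ) (x : Fin 2) :
    wOut (q :: l) x = wOut l (grigOut q x) := by
  rcases h : grigOut q x with ⟨_ | n, hh⟩ <;> simp [wOut, h]

theorem wTrans_cons (q : GrigQ) (l : List GrigQ) (x : Fin 2) :
    wTrans (q :: l) x = grigδ q x :: wTrans l (grigOut q x) := by
  rcases h : grigOut q x with ⟨_ | n, hh⟩ <;> simp [wTrans, h]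

theorem wact_step : ∀ (l : List GrigQ) (x : Fin 2) (w : List (Fin 2)),
    wact l (x :: w) = wOut l x :: wact (wTrans l x) w := by
  intro l
  induction l with
  | nil => intro x w; rfl
  | cons q l ih =>
    intro x w
    rw [wact_cons, M_cons, ih, wOut_cons, wTrans_cons, wact_cons]

theorem wact_eq_wact2 : ∀ (w : List (Fin 2)) (l : List GrigQ), wact l w = wact2 l w := by
  intro w
  induction w with
  | nil => intro l; rw [wact_nil_word]; rfl
  | cons x w ih => intro l; rw [wact_step, wact2, ih]

theorem wstates_nil : ∀ l : List GrigQ, wstates l [] = l := by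
  intro l
  induction l with
  | nil => rfl
  | cons q l ih => rw [wstates, M_nil, ih]; rfl

theorem wstates_letter : ∀ (l : List GrigQ) (x : Fin 2) (v : List (Fin 2)),
    wstates l (x :: v) = wstates (wTrans l x) v := by
  intro l
  induction l with
  | nil => intro x v; rfl
  | cons q l ih =>
    intro x v
    rw [wstates, wTrans_cons, wstates, M_cons, ih]
    rfl

/-- The state word of `l` after reading `grigWord`, in computable form. -/
def sAfter (l : List GrigQ) : List GrigQ :=
  wTrans (wTrans (wTrans (wTrans (wTrans (wTrans l 0) 0) 0) 0) 0) 1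

theorem wstates_grigWord (l : List GrigQ) : wstates l grigWord = sAfter l := by
  show wstates l (0 :: 0 :: 0 :: 0 :: 0 :: 1 :: []) = _
  rw [wstates_letter, wstates_letter, wstates_letter, wstates_letter, wstates_letter,
    wstates_letter, wstates_nil]
  rfl
theorem wstates_append : ∀ (l₁ l₂ : List GrigQ) (v : List (Fin 2)),
    wstates (l₁ ++ l₂) v = wstates l₁ v ++ wstates l₂ (wact l₁ v) := by
  intro l₁
  induction l₁ with
  | nil => intro l₂ v; rfl
  | cons q l ih =>
    intro l₂ v
    show wstates (q :: (l ++ l₂)) v = _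
    rw [wstates, ih, wstates, List.cons_append, wact_cons]

/-- Iterated transition on a word of letters. -/
def stW : List (Fin 2) → List GrigQ → List GrigQ
  | [], l => l
  | x :: v, l => stW v (wTrans l x)

theorem wstates_eq_stW : ∀ (v : List (Fin 2)) (l : List GrigQ),
    wstates l v = stW v l := by
  intro v
  induction v with
  | nil => intro l; rw [wstates_nil]; rfl
  | cons x v ih => intro l; rw [wstates_letter, ih]; rfl

theorem wact2_append (l₁ l₂ : List GrigQ) (v : List (Fin 2)) :
    wact2 (l₁ ++ l₂) v = wact2 l₂ (wact2 l₁ v) := by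
  rw [← wact_eq_wact2, ← wact_eq_wact2, ← wact_eq_wact2, wact_append_gens]

theorem stW_append (l₁ l₂ : List GrigQ) (v : List (Fin 2)) :
    stW v (l₁ ++ l₂) = stW v l₁ ++ stW (wact2 l₁ v) l₂ := by
  rw [← wstates_eq_stW, ← wstates_eq_stW, ← wstates_eq_stW, wstates_append, wact_eq_wact2]

/-- The reversed words `(W n i).reverse`, with their own recursion. -/
def Wr : ℕ → Fin 4 → List GrigQ
  | 0 => fun i => (W 0 i).reverse
  | n + 1 => fun i => Wr n (i + 1) ++ W n i

theorem Wr_eq : ∀ (n : ℕ) (i : Fin 4), Wr n i = (W n i).reverse := by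
  intro n
  induction n with
  | zero => intro i; rfl
  | succ n ih =>
    intro i
    show Wr n (i + 1) ++ W n i = ((W n i).reverse ++ W n (i + 1)).reverse
    rw [ih, List.reverse_append, List.reverse_reverse]


open GrigQ

/-- The bisimulation relation: a list of pairs of reduced words acting identically. -/
def Rlist : List (List GrigQ × List GrigQ) := [
  ([], []),
  ([.a], [.a]),
  ([.a, .b], [.a, .b]),
  ([.a, .b, .a, .b, .a, .c, .a, .d, .a, .d, .a, .c], [.a, .b, .a, .b, .a, .b, .a, .b]),
  ([.a, .b, .a, .c, .a, .b, .a, .c], [.a, .b, .a, .c, .a, .b, .a, .c]),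
  ([.a, .c, .a, .b, .a, .c, .a, .b], [.a, .c, .a, .b, .a, .c, .a, .b]),
  ([.a, .c, .a, .c], [.a, .c, .a, .c]),
  ([.a, .d], [.a, .d]),
  ([.a, .d, .a, .c, .a, .c], [.a, .d, .a, .c, .a, .c]),
  ([.a, .d, .a, .d], [.a, .d, .a, .d]),
  ([.b], [.b]),
  ([.b, .a], [.b, .a]),
  ([.b, .a, .c, .a, .b, .a, .b, .a, .c, .a, .b, .a], [.b, .a, .c, .a, .b, .a, .b, .a, .c, .a, .b, .a]),
  ([.b, .a, .d], [.b, .a, .d]),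
  ([.b, .a, .d, .a, .b, .a, .b, .a, .c, .a, .d, .a, .c, .a, .b, .a], [.b, .a, .d, .a, .b, .a, .b, .a, .b, .a, .d, .a, .b, .a, .b, .a]),
  ([.c], [.c]),
  ([.c, .a, .c, .a], [.c, .a, .c, .a]),
  ([.c, .a, .c, .a, .d, .a], [.c, .a, .c, .a, .d, .a]),
  ([.c, .a, .d, .a, .d, .a, .c, .a, .c, .a, .d, .a, .c, .a, .b, .a, .c, .a, .d, .a, .d], [.b, .a, .b, .a, .b, .a, .d, .a, .b, .a, .b, .a, .b, .a, .d, .a]),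
  ([.d], [.d]),
  ([.d, .a], [.d, .a]),
  ([.d, .a, .b], [.d, .a, .b]),
  ([.d, .a, .d, .a], [.d, .a, .d, .a]),
  ([.d, .a, .d, .a, .c, .a, .b, .a, .c, .a, .d, .a, .b, .a, .d, .a, .c, .a, .b, .a, .b, .a, .d, .a, .b], [.a, .d, .a, .b, .a, .b, .a, .b, .a, .d, .a, .b, .a, .d, .a, .b, .a, .b, .a, .b, .a, .d, .a, .b])
]

theorem hRlist : ∀ p ∈ Rlist, ∀ x : Fin 2, wact p.1 [x] = wact p.2 [x] ∧
    (red (wstates p.1 [x]), red (wstates p.2 [x])) ∈ Rlist := by decide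

theorem Rsp_1_0 : Wr 1 0 = Wr 0 1 ++ W 0 0 := rfl
theorem Rsp_1_1 : Wr 1 1 = Wr 0 2 ++ W 0 1 := rfl
theorem Rsp_1_2 : Wr 1 2 = Wr 0 3 ++ W 0 2 := rfl
theorem Rsp_1_3 : Wr 1 3 = Wr 0 0 ++ W 0 3 := rfl
theorem Rsp_2_0 : Wr 2 0 = Wr 1 1 ++ W 1 0 := rfl
theorem Rsp_2_1 : Wr 2 1 = Wr 1 2 ++ W 1 1 := rfl
theorem Rsp_2_2 : Wr 2 2 = Wr 1 3 ++ W 1 2 := rfl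
theorem Rsp_2_3 : Wr 2 3 = Wr 1 0 ++ W 1 3 := rfl
theorem Rsp_3_0 : Wr 3 0 = Wr 2 1 ++ W 2 0 := rfl
theorem Rsp_3_1 : Wr 3 1 = Wr 2 2 ++ W 2 1 := rfl
theorem Rsp_3_2 : Wr 3 2 = Wr 2 3 ++ W 2 2 := rfl
theorem Rsp_3_3 : Wr 3 3 = Wr 2 0 ++ W 2 3 := rfl
theorem Rsp_4_0 : Wr 4 0 = Wr 3 1 ++ W 3 0 := rfl
theorem Rsp_4_1 : Wr 4 1 = Wr 3 2 ++ W 3 1 := rfl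
theorem Rsp_4_2 : Wr 4 2 = Wr 3 3 ++ W 3 2 := rfl
theorem Rsp_4_3 : Wr 4 3 = Wr 3 0 ++ W 3 3 := rfl
theorem Rsp_5_0 : Wr 5 0 = Wr 4 1 ++ W 4 0 := rfl
theorem Rsp_5_1 : Wr 5 1 = Wr 4 2 ++ W 4 1 := rfl
theorem Rsp_5_2 : Wr 5 2 = Wr 4 3 ++ W 4 2 := rfl
theorem Rsp_5_3 : Wr 5 3 = Wr 4 0 ++ W 4 3 := rfl
theorem Rsp_6_0 : Wr 6 0 = Wr 5 1 ++ W 5 0 := rfl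
theorem Rsp_6_1 : Wr 6 1 = Wr 5 2 ++ W 5 1 := rfl
theorem Rsp_6_2 : Wr 6 2 = Wr 5 3 ++ W 5 2 := rfl
theorem Rsp_6_3 : Wr 6 3 = Wr 5 0 ++ W 5 3 := rfl
theorem Rsp_7_0 : Wr 7 0 = Wr 6 1 ++ W 6 0 := rfl
theorem Rsp_7_1 : Wr 7 1 = Wr 6 2 ++ W 6 1 := rfl
theorem Rsp_7_2 : Wr 7 2 = Wr 6 3 ++ W 6 2 := rfl
theorem Rsp_7_3 : Wr 7 3 = Wr 6 0 ++ W 6 3 := rfl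
theorem Rsp_8_0 : Wr 8 0 = Wr 7 1 ++ W 7 0 := rfl
theorem Rsp_8_1 : Wr 8 1 = Wr 7 2 ++ W 7 1 := rfl
theorem Rsp_8_2 : Wr 8 2 = Wr 7 3 ++ W 7 2 := rfl
theorem Rsp_8_3 : Wr 8 3 = Wr 7 0 ++ W 7 3 := rfl
theorem Wsp_1_0 : W 1 0 = Wr 0 0 ++ W 0 1 := by rw [Wr_eq]; rfl
theorem Wsp_1_1 : W 1 1 = Wr 0 1 ++ W 0 2 := by rw [Wr_eq]; rfl
theorem Wsp_1_2 : W 1 2 = Wr 0 2 ++ W 0 3 := by rw [Wr_eq]; rfl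
theorem Wsp_1_3 : W 1 3 = Wr 0 3 ++ W 0 0 := by rw [Wr_eq]; rfl
theorem Wsp_2_0 : W 2 0 = Wr 1 0 ++ W 1 1 := by rw [Wr_eq]; rfl
theorem Wsp_2_1 : W 2 1 = Wr 1 1 ++ W 1 2 := by rw [Wr_eq]; rfl
theorem Wsp_2_2 : W 2 2 = Wr 1 2 ++ W 1 3 := by rw [Wr_eq]; rfl
theorem Wsp_2_3 : W 2 3 = Wr 1 3 ++ W 1 0 := by rw [Wr_eq]; rfl
theorem Wsp_3_0 : W 3 0 = Wr 2 0 ++ W 2 1 := by rw [Wr_eq]; rfl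
theorem Wsp_3_1 : W 3 1 = Wr 2 1 ++ W 2 2 := by rw [Wr_eq]; rfl
theorem Wsp_3_2 : W 3 2 = Wr 2 2 ++ W 2 3 := by rw [Wr_eq]; rfl
theorem Wsp_3_3 : W 3 3 = Wr 2 3 ++ W 2 0 := by rw [Wr_eq]; rfl
theorem Wsp_4_0 : W 4 0 = Wr 3 0 ++ W 3 1 := by rw [Wr_eq]; rfl
theorem Wsp_4_1 : W 4 1 = Wr 3 1 ++ W 3 2 := by rw [Wr_eq]; rfl
theorem Wsp_4_2 : W 4 2 = Wr 3 2 ++ W 3 3 := by rw [Wr_eq]; rfl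
theorem Wsp_4_3 : W 4 3 = Wr 3 3 ++ W 3 0 := by rw [Wr_eq]; rfl
theorem Wsp_5_0 : W 5 0 = Wr 4 0 ++ W 4 1 := by rw [Wr_eq]; rfl
theorem Wsp_5_1 : W 5 1 = Wr 4 1 ++ W 4 2 := by rw [Wr_eq]; rfl
theorem Wsp_5_2 : W 5 2 = Wr 4 2 ++ W 4 3 := by rw [Wr_eq]; rfl
theorem Wsp_5_3 : W 5 3 = Wr 4 3 ++ W 4 0 := by rw [Wr_eq]; rfl
theorem Wsp_6_0 : W 6 0 = Wr 5 0 ++ W 5 1 := by rw [Wr_eq]; rfl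
theorem Wsp_6_1 : W 6 1 = Wr 5 1 ++ W 5 2 := by rw [Wr_eq]; rfl
theorem Wsp_6_2 : W 6 2 = Wr 5 2 ++ W 5 3 := by rw [Wr_eq]; rfl
theorem Wsp_6_3 : W 6 3 = Wr 5 3 ++ W 5 0 := by rw [Wr_eq]; rfl
theorem Wsp_7_0 : W 7 0 = Wr 6 0 ++ W 6 1 := by rw [Wr_eq]; rfl
theorem Wsp_7_1 : W 7 1 = Wr 6 1 ++ W 6 2 := by rw [Wr_eq]; rfl
theorem Wsp_7_2 : W 7 2 = Wr 6 2 ++ W 6 3 := by rw [Wr_eq]; rfl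
theorem Wsp_7_3 : W 7 3 = Wr 6 3 ++ W 6 0 := by rw [Wr_eq]; rfl
theorem Wsp_8_0 : W 8 0 = Wr 7 0 ++ W 7 1 := by rw [Wr_eq]; rfl
theorem Wsp_8_1 : W 8 1 = Wr 7 1 ++ W 7 2 := by rw [Wr_eq]; rfl
theorem Wsp_8_2 : W 8 2 = Wr 7 2 ++ W 7 3 := by rw [Wr_eq]; rfl
theorem Wsp_8_3 : W 8 3 = Wr 7 3 ++ W 7 0 := by rw [Wr_eq]; rfl
theorem Wsp_9_0 : W 9 0 = Wr 8 0 ++ W 8 1 := by rw [Wr_eq]; rfl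
theorem Wsp_9_1 : W 9 1 = Wr 8 1 ++ W 8 2 := by rw [Wr_eq]; rfl
theorem Wsp_9_2 : W 9 2 = Wr 8 2 ++ W 8 3 := by rw [Wr_eq]; rfl
theorem Wsp_9_3 : W 9 3 = Wr 8 3 ++ W 8 0 := by rw [Wr_eq]; rfl
theorem lemA_0 : wact2 (Wr 0 0) [0, 0, 0, 0, 0, 1] = [0, 0, 0, 0, 1, 1] := by decide
theorem lemS_0 (w : List (Fin 2)) : wact (stW [0, 0, 0, 0, 0, 1] (Wr 0 0)) w = wact [] w := by
  rw [← red_sound (stW [0, 0, 0, 0, 0, 1] (Wr 0 0)) w, show red (stW [0, 0, 0, 0, 0, 1] (Wr 0 0)) = [] from by decide]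
theorem lemA_1 : wact2 (W 0 3) [0, 0, 0, 0, 1, 1] = [0, 0, 1, 0, 0, 1] := by decide
theorem lemS_1 (w : List (Fin 2)) : wact (stW [0, 0, 0, 0, 1, 1] (W 0 3)) w = wact [] w := by
  rw [← red_sound (stW [0, 0, 0, 0, 1, 1] (W 0 3)) w, show red (stW [0, 0, 0, 0, 1, 1] (W 0 3)) = [] from by decide]
theorem lemA_2 : wact2 (Wr 1 3) [0, 0, 0, 0, 0, 1] = [0, 0, 1, 0, 0, 1] := by
  rw [Rsp_1_3, wact2_append, lemA_0, lemA_1]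
theorem lemS_2 (w : List (Fin 2)) : wact (stW [0, 0, 0, 0, 0, 1] (Wr 1 3)) w = wact [] w := by
  rw [Rsp_1_3, stW_append, lemA_0, wact_append_gens, lemS_0, lemS_1, ← wact_append_gens,
    ← red_sound ([] ++ []) w, show red ([] ++ []) = [] from by decide]
theorem lemA_3 : wact2 (Wr 0 2) [0, 0, 1, 0, 0, 1] = [0, 0, 1, 1, 0, 0] := by decide
theorem lemS_3 (w : List (Fin 2)) : wact (stW [0, 0, 1, 0, 0, 1] (Wr 0 2)) w = wact [] w := by
  rw [← red_sound (stW [0, 0, 1, 0, 0, 1] (Wr 0 2)) w, show red (stW [0, 0, 1, 0, 0, 1] (Wr 0 2)) = [] from by decide]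
theorem lemA_4 : wact2 (W 0 3) [0, 0, 1, 1, 0, 0] = [0, 0, 0, 1, 0, 0] := by decide
theorem lemS_4 (w : List (Fin 2)) : wact (stW [0, 0, 1, 1, 0, 0] (W 0 3)) w = wact [] w := by
  rw [← red_sound (stW [0, 0, 1, 1, 0, 0] (W 0 3)) w, show red (stW [0, 0, 1, 1, 0, 0] (W 0 3)) = [] from by decide]
theorem lemA_5 : wact2 (W 1 2) [0, 0, 1, 0, 0, 1] = [0, 0, 0, 1, 0, 0] := by
  rw [Wsp_1_2, wact2_append, lemA_3, lemA_4]
theorem lemS_5 (w : List (Fin 2)) : wact (stW [0, 0, 1, 0, 0, 1] (W 1 2)) w = wact [] w := by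
  rw [Wsp_1_2, stW_append, lemA_3, wact_append_gens, lemS_3, lemS_4, ← wact_append_gens,
    ← red_sound ([] ++ []) w, show red ([] ++ []) = [] from by decide]
theorem lemA_6 : wact2 (Wr 2 2) [0, 0, 0, 0, 0, 1] = [0, 0, 0, 1, 0, 0] := by
  rw [Rsp_2_2, wact2_append, lemA_2, lemA_5]
theorem lemS_6 (w : List (Fin 2)) : wact (stW [0, 0, 0, 0, 0, 1] (Wr 2 2)) w = wact [] w := by
  rw [Rsp_2_2, stW_append, lemA_2, wact_append_gens, lemS_2, lemS_5, ← wact_append_gens,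
    ← red_sound ([] ++ []) w, show red ([] ++ []) = [] from by decide]
theorem lemA_7 : wact2 (Wr 0 2) [0, 0, 0, 1, 0, 0] = [0, 0, 0, 0, 0, 1] := by decide
theorem lemS_7 (w : List (Fin 2)) : wact (stW [0, 0, 0, 1, 0, 0] (Wr 0 2)) w = wact [] w := by
  rw [← red_sound (stW [0, 0, 0, 1, 0, 0] (Wr 0 2)) w, show red (stW [0, 0, 0, 1, 0, 0] (Wr 0 2)) = [] from by decide]
theorem lemA_8 : wact2 (W 0 1) [0, 0, 0, 0, 0, 1] = [0, 0, 1, 1, 1, 1] := by decide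
theorem lemS_8 (w : List (Fin 2)) : wact (stW [0, 0, 0, 0, 0, 1] (W 0 1)) w = wact [GrigQ.d] w := by
  rw [← red_sound (stW [0, 0, 0, 0, 0, 1] (W 0 1)) w, show red (stW [0, 0, 0, 0, 0, 1] (W 0 1)) = [GrigQ.d] from by decide]
theorem lemA_9 : wact2 (Wr 1 1) [0, 0, 0, 1, 0, 0] = [0, 0, 1, 1, 1, 1] := by
  rw [Rsp_1_1, wact2_append, lemA_7, lemA_8]
theorem lemS_9 (w : List (Fin 2)) : wact (stW [0, 0, 0, 1, 0, 0] (Wr 1 1)) w = wact [GrigQ.d] w := by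
  rw [Rsp_1_1, stW_append, lemA_7, wact_append_gens, lemS_7, lemS_8, ← wact_append_gens,
    ← red_sound ([] ++ [GrigQ.d]) w, show red ([] ++ [GrigQ.d]) = [GrigQ.d] from by decide]
theorem lemA_10 : wact2 (Wr 0 2) [0, 0, 1, 1, 1, 1] = [0, 0, 1, 0, 1, 1] := by decide
theorem lemS_10 (w : List (Fin 2)) : wact (stW [0, 0, 1, 1, 1, 1] (Wr 0 2)) w = wact [] w := by
  rw [← red_sound (stW [0, 0, 1, 1, 1, 1] (Wr 0 2)) w, show red (stW [0, 0, 1, 1, 1, 1] (Wr 0 2)) = [] from by decide]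
theorem lemA_11 : wact2 (W 0 3) [0, 0, 1, 0, 1, 1] = [0, 0, 0, 0, 1, 1] := by decide
theorem lemS_11 (w : List (Fin 2)) : wact (stW [0, 0, 1, 0, 1, 1] (W 0 3)) w = wact [] w := by
  rw [← red_sound (stW [0, 0, 1, 0, 1, 1] (W 0 3)) w, show red (stW [0, 0, 1, 0, 1, 1] (W 0 3)) = [] from by decide]
theorem lemA_12 : wact2 (W 1 2) [0, 0, 1, 1, 1, 1] = [0, 0, 0, 0, 1, 1] := by
  rw [Wsp_1_2, wact2_append, lemA_10, lemA_11]
theorem lemS_12 (w : List (Fin 2)) : wact (stW [0, 0, 1, 1, 1, 1] (W 1 2)) w = wact [] w := by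
  rw [Wsp_1_2, stW_append, lemA_10, wact_append_gens, lemS_10, lemS_11, ← wact_append_gens,
    ← red_sound ([] ++ []) w, show red ([] ++ []) = [] from by decide]
theorem lemA_13 : wact2 (W 2 1) [0, 0, 0, 1, 0, 0] = [0, 0, 0, 0, 1, 1] := by
  rw [Wsp_2_1, wact2_append, lemA_9, lemA_12]
theorem lemS_13 (w : List (Fin 2)) : wact (stW [0, 0, 0, 1, 0, 0] (W 2 1)) w = wact [GrigQ.d] w := by
  rw [Wsp_2_1, stW_append, lemA_9, wact_append_gens, lemS_9, lemS_12, ← wact_append_gens,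
    ← red_sound ([GrigQ.d] ++ []) w, show red ([GrigQ.d] ++ []) = [GrigQ.d] from by decide]
theorem lemA_14 : wact2 (Wr 3 1) [0, 0, 0, 0, 0, 1] = [0, 0, 0, 0, 1, 1] := by
  rw [Rsp_3_1, wact2_append, lemA_6, lemA_13]
theorem lemS_14 (w : List (Fin 2)) : wact (stW [0, 0, 0, 0, 0, 1] (Wr 3 1)) w = wact [GrigQ.d] w := by
  rw [Rsp_3_1, stW_append, lemA_6, wact_append_gens, lemS_6, lemS_13, ← wact_append_gens,
    ← red_sound ([] ++ [GrigQ.d]) w, show red ([] ++ [GrigQ.d]) = [GrigQ.d] from by decide]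
theorem lemA_15 : wact2 (Wr 0 2) [0, 0, 0, 0, 1, 1] = [0, 0, 0, 1, 1, 1] := by decide
theorem lemS_15 (w : List (Fin 2)) : wact (stW [0, 0, 0, 0, 1, 1] (Wr 0 2)) w = wact [] w := by
  rw [← red_sound (stW [0, 0, 0, 0, 1, 1] (Wr 0 2)) w, show red (stW [0, 0, 0, 0, 1, 1] (Wr 0 2)) = [] from by decide]
theorem lemA_16 : wact2 (W 0 1) [0, 0, 0, 1, 1, 1] = [0, 0, 1, 0, 1, 1] := by decide
theorem lemS_16 (w : List (Fin 2)) : wact (stW [0, 0, 0, 1, 1, 1] (W 0 1)) w = wact [GrigQ.b] w := by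
  rw [← red_sound (stW [0, 0, 0, 1, 1, 1] (W 0 1)) w, show red (stW [0, 0, 0, 1, 1, 1] (W 0 1)) = [GrigQ.b] from by decide]
theorem lemA_17 : wact2 (Wr 1 1) [0, 0, 0, 0, 1, 1] = [0, 0, 1, 0, 1, 1] := by
  rw [Rsp_1_1, wact2_append, lemA_15, lemA_16]
theorem lemS_17 (w : List (Fin 2)) : wact (stW [0, 0, 0, 0, 1, 1] (Wr 1 1)) w = wact [GrigQ.b] w := by
  rw [Rsp_1_1, stW_append, lemA_15, wact_append_gens, lemS_15, lemS_16, ← wact_append_gens,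
    ← red_sound ([] ++ [GrigQ.b]) w, show red ([] ++ [GrigQ.b]) = [GrigQ.b] from by decide]
theorem lemA_18 : wact2 (Wr 0 0) [0, 0, 1, 0, 1, 1] = [0, 0, 1, 0, 0, 1] := by decide
theorem lemS_18 (w : List (Fin 2)) : wact (stW [0, 0, 1, 0, 1, 1] (Wr 0 0)) w = wact [] w := by
  rw [← red_sound (stW [0, 0, 1, 0, 1, 1] (Wr 0 0)) w, show red (stW [0, 0, 1, 0, 1, 1] (Wr 0 0)) = [] from by decide]
theorem lemA_19 : wact2 (W 0 1) [0, 0, 1, 0, 0, 1] = [0, 0, 0, 1, 0, 1] := by decide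
theorem lemS_19 (w : List (Fin 2)) : wact (stW [0, 0, 1, 0, 0, 1] (W 0 1)) w = wact [] w := by
  rw [← red_sound (stW [0, 0, 1, 0, 0, 1] (W 0 1)) w, show red (stW [0, 0, 1, 0, 0, 1] (W 0 1)) = [] from by decide]
theorem lemA_20 : wact2 (W 1 0) [0, 0, 1, 0, 1, 1] = [0, 0, 0, 1, 0, 1] := by
  rw [Wsp_1_0, wact2_append, lemA_18, lemA_19]
theorem lemS_20 (w : List (Fin 2)) : wact (stW [0, 0, 1, 0, 1, 1] (W 1 0)) w = wact [] w := by
  rw [Wsp_1_0, stW_append, lemA_18, wact_append_gens, lemS_18, lemS_19, ← wact_append_gens,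
    ← red_sound ([] ++ []) w, show red ([] ++ []) = [] from by decide]
theorem lemA_21 : wact2 (Wr 2 0) [0, 0, 0, 0, 1, 1] = [0, 0, 0, 1, 0, 1] := by
  rw [Rsp_2_0, wact2_append, lemA_17, lemA_20]
theorem lemS_21 (w : List (Fin 2)) : wact (stW [0, 0, 0, 0, 1, 1] (Wr 2 0)) w = wact [GrigQ.b] w := by
  rw [Rsp_2_0, stW_append, lemA_17, wact_append_gens, lemS_17, lemS_20, ← wact_append_gens,
    ← red_sound ([GrigQ.b] ++ []) w, show red ([GrigQ.b] ++ []) = [GrigQ.b] from by decide]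
theorem lemA_22 : wact2 (Wr 0 2) [0, 0, 0, 1, 0, 1] = [0, 0, 0, 0, 0, 0] := by decide
theorem lemS_22 (w : List (Fin 2)) : wact (stW [0, 0, 0, 1, 0, 1] (Wr 0 2)) w = wact [] w := by
  rw [← red_sound (stW [0, 0, 0, 1, 0, 1] (Wr 0 2)) w, show red (stW [0, 0, 0, 1, 0, 1] (Wr 0 2)) = [] from by decide]
theorem lemA_23 : wact2 (W 0 1) [0, 0, 0, 0, 0, 0] = [0, 0, 1, 1, 1, 0] := by decide
theorem lemS_23 (w : List (Fin 2)) : wact (stW [0, 0, 0, 0, 0, 0] (W 0 1)) w = wact [GrigQ.a] w := by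
  rw [← red_sound (stW [0, 0, 0, 0, 0, 0] (W 0 1)) w, show red (stW [0, 0, 0, 0, 0, 0] (W 0 1)) = [GrigQ.a] from by decide]
theorem lemA_24 : wact2 (Wr 1 1) [0, 0, 0, 1, 0, 1] = [0, 0, 1, 1, 1, 0] := by
  rw [Rsp_1_1, wact2_append, lemA_22, lemA_23]
theorem lemS_24 (w : List (Fin 2)) : wact (stW [0, 0, 0, 1, 0, 1] (Wr 1 1)) w = wact [GrigQ.a] w := by
  rw [Rsp_1_1, stW_append, lemA_22, wact_append_gens, lemS_22, lemS_23, ← wact_append_gens,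
    ← red_sound ([] ++ [GrigQ.a]) w, show red ([] ++ [GrigQ.a]) = [GrigQ.a] from by decide]
theorem lemA_25 : wact2 (Wr 0 2) [0, 0, 1, 1, 1, 0] = [0, 0, 1, 0, 1, 0] := by decide
theorem lemS_25 (w : List (Fin 2)) : wact (stW [0, 0, 1, 1, 1, 0] (Wr 0 2)) w = wact [] w := by
  rw [← red_sound (stW [0, 0, 1, 1, 1, 0] (Wr 0 2)) w, show red (stW [0, 0, 1, 1, 1, 0] (Wr 0 2)) = [] from by decide]
theorem lemA_26 : wact2 (W 0 3) [0, 0, 1, 0, 1, 0] = [0, 0, 0, 0, 1, 0] := by decide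
theorem lemS_26 (w : List (Fin 2)) : wact (stW [0, 0, 1, 0, 1, 0] (W 0 3)) w = wact [] w := by
  rw [← red_sound (stW [0, 0, 1, 0, 1, 0] (W 0 3)) w, show red (stW [0, 0, 1, 0, 1, 0] (W 0 3)) = [] from by decide]
theorem lemA_27 : wact2 (W 1 2) [0, 0, 1, 1, 1, 0] = [0, 0, 0, 0, 1, 0] := by
  rw [Wsp_1_2, wact2_append, lemA_25, lemA_26]
theorem lemS_27 (w : List (Fin 2)) : wact (stW [0, 0, 1, 1, 1, 0] (W 1 2)) w = wact [] w := by
  rw [Wsp_1_2, stW_append, lemA_25, wact_append_gens, lemS_25, lemS_26, ← wact_append_gens,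
    ← red_sound ([] ++ []) w, show red ([] ++ []) = [] from by decide]
theorem lemA_28 : wact2 (W 2 1) [0, 0, 0, 1, 0, 1] = [0, 0, 0, 0, 1, 0] := by
  rw [Wsp_2_1, wact2_append, lemA_24, lemA_27]
theorem lemS_28 (w : List (Fin 2)) : wact (stW [0, 0, 0, 1, 0, 1] (W 2 1)) w = wact [GrigQ.a] w := by
  rw [Wsp_2_1, stW_append, lemA_24, wact_append_gens, lemS_24, lemS_27, ← wact_append_gens,
    ← red_sound ([GrigQ.a] ++ []) w, show red ([GrigQ.a] ++ []) = [GrigQ.a] from by decide]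
theorem lemA_29 : wact2 (W 3 0) [0, 0, 0, 0, 1, 1] = [0, 0, 0, 0, 1, 0] := by
  rw [Wsp_3_0, wact2_append, lemA_21, lemA_28]
theorem lemS_29 (w : List (Fin 2)) : wact (stW [0, 0, 0, 0, 1, 1] (W 3 0)) w = wact [GrigQ.b, GrigQ.a] w := by
  rw [Wsp_3_0, stW_append, lemA_21, wact_append_gens, lemS_21, lemS_28, ← wact_append_gens,
    ← red_sound ([GrigQ.b] ++ [GrigQ.a]) w, show red ([GrigQ.b] ++ [GrigQ.a]) = [GrigQ.b, GrigQ.a] from by decide]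
theorem lemA_30 : wact2 (Wr 4 0) [0, 0, 0, 0, 0, 1] = [0, 0, 0, 0, 1, 0] := by
  rw [Rsp_4_0, wact2_append, lemA_14, lemA_29]
theorem lemS_30 (w : List (Fin 2)) : wact (stW [0, 0, 0, 0, 0, 1] (Wr 4 0)) w = wact [GrigQ.c, GrigQ.a] w := by
  rw [Rsp_4_0, stW_append, lemA_14, wact_append_gens, lemS_14, lemS_29, ← wact_append_gens,
    ← red_sound ([GrigQ.d] ++ [GrigQ.b, GrigQ.a]) w, show red ([GrigQ.d] ++ [GrigQ.b, GrigQ.a]) = [GrigQ.c, GrigQ.a] from by decide]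
theorem lemA_31 : wact2 (Wr 0 2) [0, 0, 0, 0, 1, 0] = [0, 0, 0, 1, 1, 0] := by decide
theorem lemS_31 (w : List (Fin 2)) : wact (stW [0, 0, 0, 0, 1, 0] (Wr 0 2)) w = wact [] w := by
  rw [← red_sound (stW [0, 0, 0, 0, 1, 0] (Wr 0 2)) w, show red (stW [0, 0, 0, 0, 1, 0] (Wr 0 2)) = [] from by decide]
theorem lemA_32 : wact2 (W 0 1) [0, 0, 0, 1, 1, 0] = [0, 0, 1, 0, 1, 0] := by decide
theorem lemS_32 (w : List (Fin 2)) : wact (stW [0, 0, 0, 1, 1, 0] (W 0 1)) w = wact [] w := by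
  rw [← red_sound (stW [0, 0, 0, 1, 1, 0] (W 0 1)) w, show red (stW [0, 0, 0, 1, 1, 0] (W 0 1)) = [] from by decide]
theorem lemA_33 : wact2 (Wr 1 1) [0, 0, 0, 0, 1, 0] = [0, 0, 1, 0, 1, 0] := by
  rw [Rsp_1_1, wact2_append, lemA_31, lemA_32]
theorem lemS_33 (w : List (Fin 2)) : wact (stW [0, 0, 0, 0, 1, 0] (Wr 1 1)) w = wact [] w := by
  rw [Rsp_1_1, stW_append, lemA_31, wact_append_gens, lemS_31, lemS_32, ← wact_append_gens,
    ← red_sound ([] ++ []) w, show red ([] ++ []) = [] from by decide]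
theorem lemA_34 : wact2 (Wr 0 0) [0, 0, 1, 0, 1, 0] = [0, 0, 1, 0, 0, 0] := by decide
theorem lemS_34 (w : List (Fin 2)) : wact (stW [0, 0, 1, 0, 1, 0] (Wr 0 0)) w = wact [] w := by
  rw [← red_sound (stW [0, 0, 1, 0, 1, 0] (Wr 0 0)) w, show red (stW [0, 0, 1, 0, 1, 0] (Wr 0 0)) = [] from by decide]
theorem lemA_35 : wact2 (W 0 1) [0, 0, 1, 0, 0, 0] = [0, 0, 0, 1, 0, 0] := by decide
theorem lemS_35 (w : List (Fin 2)) : wact (stW [0, 0, 1, 0, 0, 0] (W 0 1)) w = wact [] w := by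
  rw [← red_sound (stW [0, 0, 1, 0, 0, 0] (W 0 1)) w, show red (stW [0, 0, 1, 0, 0, 0] (W 0 1)) = [] from by decide]
theorem lemA_36 : wact2 (W 1 0) [0, 0, 1, 0, 1, 0] = [0, 0, 0, 1, 0, 0] := by
  rw [Wsp_1_0, wact2_append, lemA_34, lemA_35]
theorem lemS_36 (w : List (Fin 2)) : wact (stW [0, 0, 1, 0, 1, 0] (W 1 0)) w = wact [] w := by
  rw [Wsp_1_0, stW_append, lemA_34, wact_append_gens, lemS_34, lemS_35, ← wact_append_gens,
    ← red_sound ([] ++ []) w, show red ([] ++ []) = [] from by decide]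
theorem lemA_37 : wact2 (Wr 2 0) [0, 0, 0, 0, 1, 0] = [0, 0, 0, 1, 0, 0] := by
  rw [Rsp_2_0, wact2_append, lemA_33, lemA_36]
theorem lemS_37 (w : List (Fin 2)) : wact (stW [0, 0, 0, 0, 1, 0] (Wr 2 0)) w = wact [] w := by
  rw [Rsp_2_0, stW_append, lemA_33, wact_append_gens, lemS_33, lemS_36, ← wact_append_gens,
    ← red_sound ([] ++ []) w, show red ([] ++ []) = [] from by decide]
theorem lemA_38 : wact2 (Wr 0 0) [0, 0, 0, 1, 0, 0] = [0, 0, 0, 1, 0, 1] := by decide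
theorem lemS_38 (w : List (Fin 2)) : wact (stW [0, 0, 0, 1, 0, 0] (Wr 0 0)) w = wact [] w := by
  rw [← red_sound (stW [0, 0, 0, 1, 0, 0] (Wr 0 0)) w, show red (stW [0, 0, 0, 1, 0, 0] (Wr 0 0)) = [] from by decide]
theorem lemA_39 : wact2 (W 0 3) [0, 0, 0, 1, 0, 1] = [0, 0, 1, 1, 0, 0] := by decide
theorem lemS_39 (w : List (Fin 2)) : wact (stW [0, 0, 0, 1, 0, 1] (W 0 3)) w = wact [] w := by
  rw [← red_sound (stW [0, 0, 0, 1, 0, 1] (W 0 3)) w, show red (stW [0, 0, 0, 1, 0, 1] (W 0 3)) = [] from by decide]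
theorem lemA_40 : wact2 (Wr 1 3) [0, 0, 0, 1, 0, 0] = [0, 0, 1, 1, 0, 0] := by
  rw [Rsp_1_3, wact2_append, lemA_38, lemA_39]
theorem lemS_40 (w : List (Fin 2)) : wact (stW [0, 0, 0, 1, 0, 0] (Wr 1 3)) w = wact [] w := by
  rw [Rsp_1_3, stW_append, lemA_38, wact_append_gens, lemS_38, lemS_39, ← wact_append_gens,
    ← red_sound ([] ++ []) w, show red ([] ++ []) = [] from by decide]
theorem lemA_41 : wact2 (Wr 0 0) [0, 0, 1, 1, 0, 0] = [0, 0, 1, 1, 0, 1] := by decide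
theorem lemS_41 (w : List (Fin 2)) : wact (stW [0, 0, 1, 1, 0, 0] (Wr 0 0)) w = wact [] w := by
  rw [← red_sound (stW [0, 0, 1, 1, 0, 0] (Wr 0 0)) w, show red (stW [0, 0, 1, 1, 0, 0] (Wr 0 0)) = [] from by decide]
theorem lemA_42 : wact2 (W 0 1) [0, 0, 1, 1, 0, 1] = [0, 0, 0, 0, 0, 0] := by decide
theorem lemS_42 (w : List (Fin 2)) : wact (stW [0, 0, 1, 1, 0, 1] (W 0 1)) w = wact [] w := by
  rw [← red_sound (stW [0, 0, 1, 1, 0, 1] (W 0 1)) w, show red (stW [0, 0, 1, 1, 0, 1] (W 0 1)) = [] from by decide]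
theorem lemA_43 : wact2 (W 1 0) [0, 0, 1, 1, 0, 0] = [0, 0, 0, 0, 0, 0] := by
  rw [Wsp_1_0, wact2_append, lemA_41, lemA_42]
theorem lemS_43 (w : List (Fin 2)) : wact (stW [0, 0, 1, 1, 0, 0] (W 1 0)) w = wact [] w := by
  rw [Wsp_1_0, stW_append, lemA_41, wact_append_gens, lemS_41, lemS_42, ← wact_append_gens,
    ← red_sound ([] ++ []) w, show red ([] ++ []) = [] from by decide]
theorem lemA_44 : wact2 (W 2 3) [0, 0, 0, 1, 0, 0] = [0, 0, 0, 0, 0, 0] := by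
  rw [Wsp_2_3, wact2_append, lemA_40, lemA_43]
theorem lemS_44 (w : List (Fin 2)) : wact (stW [0, 0, 0, 1, 0, 0] (W 2 3)) w = wact [] w := by
  rw [Wsp_2_3, stW_append, lemA_40, wact_append_gens, lemS_40, lemS_43, ← wact_append_gens,
    ← red_sound ([] ++ []) w, show red ([] ++ []) = [] from by decide]
theorem lemA_45 : wact2 (Wr 3 3) [0, 0, 0, 0, 1, 0] = [0, 0, 0, 0, 0, 0] := by
  rw [Rsp_3_3, wact2_append, lemA_37, lemA_44]
theorem lemS_45 (w : List (Fin 2)) : wact (stW [0, 0, 0, 0, 1, 0] (Wr 3 3)) w = wact [] w := by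
  rw [Rsp_3_3, stW_append, lemA_37, wact_append_gens, lemS_37, lemS_44, ← wact_append_gens,
    ← red_sound ([] ++ []) w, show red ([] ++ []) = [] from by decide]
theorem lemA_46 : wact2 (Wr 0 2) [0, 0, 0, 0, 0, 0] = [0, 0, 0, 1, 0, 0] := by decide
theorem lemS_46 (w : List (Fin 2)) : wact (stW [0, 0, 0, 0, 0, 0] (Wr 0 2)) w = wact [] w := by
  rw [← red_sound (stW [0, 0, 0, 0, 0, 0] (Wr 0 2)) w, show red (stW [0, 0, 0, 0, 0, 0] (Wr 0 2)) = [] from by decide]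
theorem lemA_47 : wact2 (W 0 1) [0, 0, 0, 1, 0, 0] = [0, 0, 1, 0, 0, 1] := by decide
theorem lemS_47 (w : List (Fin 2)) : wact (stW [0, 0, 0, 1, 0, 0] (W 0 1)) w = wact [] w := by
  rw [← red_sound (stW [0, 0, 0, 1, 0, 0] (W 0 1)) w, show red (stW [0, 0, 0, 1, 0, 0] (W 0 1)) = [] from by decide]
theorem lemA_48 : wact2 (Wr 1 1) [0, 0, 0, 0, 0, 0] = [0, 0, 1, 0, 0, 1] := by
  rw [Rsp_1_1, wact2_append, lemA_46, lemA_47]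
theorem lemS_48 (w : List (Fin 2)) : wact (stW [0, 0, 0, 0, 0, 0] (Wr 1 1)) w = wact [] w := by
  rw [Rsp_1_1, stW_append, lemA_46, wact_append_gens, lemS_46, lemS_47, ← wact_append_gens,
    ← red_sound ([] ++ []) w, show red ([] ++ []) = [] from by decide]
theorem lemA_49 : wact2 (Wr 0 0) [0, 0, 1, 0, 0, 1] = [0, 0, 1, 0, 1, 1] := by decide
theorem lemS_49 (w : List (Fin 2)) : wact (stW [0, 0, 1, 0, 0, 1] (Wr 0 0)) w = wact [] w := by
  rw [← red_sound (stW [0, 0, 1, 0, 0, 1] (Wr 0 0)) w, show red (stW [0, 0, 1, 0, 0, 1] (Wr 0 0)) = [] from by decide]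
theorem lemA_50 : wact2 (W 0 1) [0, 0, 1, 0, 1, 1] = [0, 0, 0, 1, 1, 1] := by decide
theorem lemS_50 (w : List (Fin 2)) : wact (stW [0, 0, 1, 0, 1, 1] (W 0 1)) w = wact [] w := by
  rw [← red_sound (stW [0, 0, 1, 0, 1, 1] (W 0 1)) w, show red (stW [0, 0, 1, 0, 1, 1] (W 0 1)) = [] from by decide]
theorem lemA_51 : wact2 (W 1 0) [0, 0, 1, 0, 0, 1] = [0, 0, 0, 1, 1, 1] := by
  rw [Wsp_1_0, wact2_append, lemA_49, lemA_50]
theorem lemS_51 (w : List (Fin 2)) : wact (stW [0, 0, 1, 0, 0, 1] (W 1 0)) w = wact [] w := by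
  rw [Wsp_1_0, stW_append, lemA_49, wact_append_gens, lemS_49, lemS_50, ← wact_append_gens,
    ← red_sound ([] ++ []) w, show red ([] ++ []) = [] from by decide]
theorem lemA_52 : wact2 (Wr 2 0) [0, 0, 0, 0, 0, 0] = [0, 0, 0, 1, 1, 1] := by
  rw [Rsp_2_0, wact2_append, lemA_48, lemA_51]
theorem lemS_52 (w : List (Fin 2)) : wact (stW [0, 0, 0, 0, 0, 0] (Wr 2 0)) w = wact [] w := by
  rw [Rsp_2_0, stW_append, lemA_48, wact_append_gens, lemS_48, lemS_51, ← wact_append_gens,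
    ← red_sound ([] ++ []) w, show red ([] ++ []) = [] from by decide]
theorem lemA_53 : wact2 (Wr 0 2) [0, 0, 0, 1, 1, 1] = [0, 0, 0, 0, 1, 1] := by decide
theorem lemS_53 (w : List (Fin 2)) : wact (stW [0, 0, 0, 1, 1, 1] (Wr 0 2)) w = wact [GrigQ.d] w := by
  rw [← red_sound (stW [0, 0, 0, 1, 1, 1] (Wr 0 2)) w, show red (stW [0, 0, 0, 1, 1, 1] (Wr 0 2)) = [GrigQ.d] from by decide]
theorem lemA_54 : wact2 (W 0 1) [0, 0, 0, 0, 1, 1] = [0, 0, 1, 1, 0, 0] := by decide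
theorem lemS_54 (w : List (Fin 2)) : wact (stW [0, 0, 0, 0, 1, 1] (W 0 1)) w = wact [] w := by
  rw [← red_sound (stW [0, 0, 0, 0, 1, 1] (W 0 1)) w, show red (stW [0, 0, 0, 0, 1, 1] (W 0 1)) = [] from by decide]
theorem lemA_55 : wact2 (Wr 1 1) [0, 0, 0, 1, 1, 1] = [0, 0, 1, 1, 0, 0] := by
  rw [Rsp_1_1, wact2_append, lemA_53, lemA_54]
theorem lemS_55 (w : List (Fin 2)) : wact (stW [0, 0, 0, 1, 1, 1] (Wr 1 1)) w = wact [GrigQ.d] w := by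
  rw [Rsp_1_1, stW_append, lemA_53, wact_append_gens, lemS_53, lemS_54, ← wact_append_gens,
    ← red_sound ([GrigQ.d] ++ []) w, show red ([GrigQ.d] ++ []) = [GrigQ.d] from by decide]
theorem lemA_56 : wact2 (Wr 0 2) [0, 0, 1, 1, 0, 0] = [0, 0, 1, 0, 0, 0] := by decide
theorem lemS_56 (w : List (Fin 2)) : wact (stW [0, 0, 1, 1, 0, 0] (Wr 0 2)) w = wact [] w := by
  rw [← red_sound (stW [0, 0, 1, 1, 0, 0] (Wr 0 2)) w, show red (stW [0, 0, 1, 1, 0, 0] (Wr 0 2)) = [] from by decide]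
theorem lemA_57 : wact2 (W 0 3) [0, 0, 1, 0, 0, 0] = [0, 0, 0, 0, 0, 0] := by decide
theorem lemS_57 (w : List (Fin 2)) : wact (stW [0, 0, 1, 0, 0, 0] (W 0 3)) w = wact [] w := by
  rw [← red_sound (stW [0, 0, 1, 0, 0, 0] (W 0 3)) w, show red (stW [0, 0, 1, 0, 0, 0] (W 0 3)) = [] from by decide]
theorem lemA_58 : wact2 (W 1 2) [0, 0, 1, 1, 0, 0] = [0, 0, 0, 0, 0, 0] := by
  rw [Wsp_1_2, wact2_append, lemA_56, lemA_57]
theorem lemS_58 (w : List (Fin 2)) : wact (stW [0, 0, 1, 1, 0, 0] (W 1 2)) w = wact [] w := by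
  rw [Wsp_1_2, stW_append, lemA_56, wact_append_gens, lemS_56, lemS_57, ← wact_append_gens,
    ← red_sound ([] ++ []) w, show red ([] ++ []) = [] from by decide]
theorem lemA_59 : wact2 (W 2 1) [0, 0, 0, 1, 1, 1] = [0, 0, 0, 0, 0, 0] := by
  rw [Wsp_2_1, wact2_append, lemA_55, lemA_58]
theorem lemS_59 (w : List (Fin 2)) : wact (stW [0, 0, 0, 1, 1, 1] (W 2 1)) w = wact [GrigQ.d] w := by
  rw [Wsp_2_1, stW_append, lemA_55, wact_append_gens, lemS_55, lemS_58, ← wact_append_gens,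
    ← red_sound ([GrigQ.d] ++ []) w, show red ([GrigQ.d] ++ []) = [GrigQ.d] from by decide]
theorem lemA_60 : wact2 (W 3 0) [0, 0, 0, 0, 0, 0] = [0, 0, 0, 0, 0, 0] := by
  rw [Wsp_3_0, wact2_append, lemA_52, lemA_59]
theorem lemS_60 (w : List (Fin 2)) : wact (stW [0, 0, 0, 0, 0, 0] (W 3 0)) w = wact [GrigQ.d] w := by
  rw [Wsp_3_0, stW_append, lemA_52, wact_append_gens, lemS_52, lemS_59, ← wact_append_gens,
    ← red_sound ([] ++ [GrigQ.d]) w, show red ([] ++ [GrigQ.d]) = [GrigQ.d] from by decide]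
theorem lemA_61 : wact2 (W 4 3) [0, 0, 0, 0, 1, 0] = [0, 0, 0, 0, 0, 0] := by
  rw [Wsp_4_3, wact2_append, lemA_45, lemA_60]
theorem lemS_61 (w : List (Fin 2)) : wact (stW [0, 0, 0, 0, 1, 0] (W 4 3)) w = wact [GrigQ.d] w := by
  rw [Wsp_4_3, stW_append, lemA_45, wact_append_gens, lemS_45, lemS_60, ← wact_append_gens,
    ← red_sound ([] ++ [GrigQ.d]) w, show red ([] ++ [GrigQ.d]) = [GrigQ.d] from by decide]
theorem lemA_62 : wact2 (Wr 5 3) [0, 0, 0, 0, 0, 1] = [0, 0, 0, 0, 0, 0] := by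
  rw [Rsp_5_3, wact2_append, lemA_30, lemA_61]
theorem lemS_62 (w : List (Fin 2)) : wact (stW [0, 0, 0, 0, 0, 1] (Wr 5 3)) w = wact [GrigQ.c, GrigQ.a, GrigQ.d] w := by
  rw [Rsp_5_3, stW_append, lemA_30, wact_append_gens, lemS_30, lemS_61, ← wact_append_gens,
    ← red_sound ([GrigQ.c, GrigQ.a] ++ [GrigQ.d]) w, show red ([GrigQ.c, GrigQ.a] ++ [GrigQ.d]) = [GrigQ.c, GrigQ.a, GrigQ.d] from by decide]
theorem lemA_63 : wact2 (Wr 0 0) [0, 0, 0, 1, 1, 1] = [0, 0, 0, 1, 1, 1] := by decide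
theorem lemS_63 (w : List (Fin 2)) : wact (stW [0, 0, 0, 1, 1, 1] (Wr 0 0)) w = wact [GrigQ.b] w := by
  rw [← red_sound (stW [0, 0, 0, 1, 1, 1] (Wr 0 0)) w, show red (stW [0, 0, 0, 1, 1, 1] (Wr 0 0)) = [GrigQ.b] from by decide]
theorem lemA_64 : wact2 (W 0 3) [0, 0, 0, 1, 1, 1] = [0, 0, 1, 1, 1, 1] := by decide
theorem lemS_64 (w : List (Fin 2)) : wact (stW [0, 0, 0, 1, 1, 1] (W 0 3)) w = wact [GrigQ.b] w := by
  rw [← red_sound (stW [0, 0, 0, 1, 1, 1] (W 0 3)) w, show red (stW [0, 0, 0, 1, 1, 1] (W 0 3)) = [GrigQ.b] from by decide]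
theorem lemA_65 : wact2 (Wr 1 3) [0, 0, 0, 1, 1, 1] = [0, 0, 1, 1, 1, 1] := by
  rw [Rsp_1_3, wact2_append, lemA_63, lemA_64]
theorem lemS_65 (w : List (Fin 2)) : wact (stW [0, 0, 0, 1, 1, 1] (Wr 1 3)) w = wact [] w := by
  rw [Rsp_1_3, stW_append, lemA_63, wact_append_gens, lemS_63, lemS_64, ← wact_append_gens,
    ← red_sound ([GrigQ.b] ++ [GrigQ.b]) w, show red ([GrigQ.b] ++ [GrigQ.b]) = [] from by decide]
theorem lemA_66 : wact2 (Wr 0 0) [0, 0, 1, 1, 1, 1] = [0, 0, 1, 1, 1, 1] := by decide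
theorem lemS_66 (w : List (Fin 2)) : wact (stW [0, 0, 1, 1, 1, 1] (Wr 0 0)) w = wact [GrigQ.b] w := by
  rw [← red_sound (stW [0, 0, 1, 1, 1, 1] (Wr 0 0)) w, show red (stW [0, 0, 1, 1, 1, 1] (Wr 0 0)) = [GrigQ.b] from by decide]
theorem lemA_67 : wact2 (W 0 1) [0, 0, 1, 1, 1, 1] = [0, 0, 0, 0, 1, 1] := by decide
theorem lemS_67 (w : List (Fin 2)) : wact (stW [0, 0, 1, 1, 1, 1] (W 0 1)) w = wact [GrigQ.d] w := by
  rw [← red_sound (stW [0, 0, 1, 1, 1, 1] (W 0 1)) w, show red (stW [0, 0, 1, 1, 1, 1] (W 0 1)) = [GrigQ.d] from by decide]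
theorem lemA_68 : wact2 (W 1 0) [0, 0, 1, 1, 1, 1] = [0, 0, 0, 0, 1, 1] := by
  rw [Wsp_1_0, wact2_append, lemA_66, lemA_67]
theorem lemS_68 (w : List (Fin 2)) : wact (stW [0, 0, 1, 1, 1, 1] (W 1 0)) w = wact [GrigQ.c] w := by
  rw [Wsp_1_0, stW_append, lemA_66, wact_append_gens, lemS_66, lemS_67, ← wact_append_gens,
    ← red_sound ([GrigQ.b] ++ [GrigQ.d]) w, show red ([GrigQ.b] ++ [GrigQ.d]) = [GrigQ.c] from by decide]
theorem lemA_69 : wact2 (W 2 3) [0, 0, 0, 1, 1, 1] = [0, 0, 0, 0, 1, 1] := by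
  rw [Wsp_2_3, wact2_append, lemA_65, lemA_68]
theorem lemS_69 (w : List (Fin 2)) : wact (stW [0, 0, 0, 1, 1, 1] (W 2 3)) w = wact [GrigQ.c] w := by
  rw [Wsp_2_3, stW_append, lemA_65, wact_append_gens, lemS_65, lemS_68, ← wact_append_gens,
    ← red_sound ([] ++ [GrigQ.c]) w, show red ([] ++ [GrigQ.c]) = [GrigQ.c] from by decide]
theorem lemA_70 : wact2 (Wr 3 3) [0, 0, 0, 0, 0, 0] = [0, 0, 0, 0, 1, 1] := by
  rw [Rsp_3_3, wact2_append, lemA_52, lemA_69]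
theorem lemS_70 (w : List (Fin 2)) : wact (stW [0, 0, 0, 0, 0, 0] (Wr 3 3)) w = wact [GrigQ.c] w := by
  rw [Rsp_3_3, stW_append, lemA_52, wact_append_gens, lemS_52, lemS_69, ← wact_append_gens,
    ← red_sound ([] ++ [GrigQ.c]) w, show red ([] ++ [GrigQ.c]) = [GrigQ.c] from by decide]
theorem lemA_71 : wact2 (Wr 0 0) [0, 0, 0, 0, 1, 1] = [0, 0, 0, 0, 0, 1] := by decide
theorem lemS_71 (w : List (Fin 2)) : wact (stW [0, 0, 0, 0, 1, 1] (Wr 0 0)) w = wact [] w := by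
  rw [← red_sound (stW [0, 0, 0, 0, 1, 1] (Wr 0 0)) w, show red (stW [0, 0, 0, 0, 1, 1] (Wr 0 0)) = [] from by decide]
theorem lemA_72 : wact2 (W 0 3) [0, 0, 0, 0, 0, 1] = [0, 0, 1, 0, 1, 1] := by decide
theorem lemS_72 (w : List (Fin 2)) : wact (stW [0, 0, 0, 0, 0, 1] (W 0 3)) w = wact [] w := by
  rw [← red_sound (stW [0, 0, 0, 0, 0, 1] (W 0 3)) w, show red (stW [0, 0, 0, 0, 0, 1] (W 0 3)) = [] from by decide]
theorem lemA_73 : wact2 (Wr 1 3) [0, 0, 0, 0, 1, 1] = [0, 0, 1, 0, 1, 1] := by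
  rw [Rsp_1_3, wact2_append, lemA_71, lemA_72]
theorem lemS_73 (w : List (Fin 2)) : wact (stW [0, 0, 0, 0, 1, 1] (Wr 1 3)) w = wact [] w := by
  rw [Rsp_1_3, stW_append, lemA_71, wact_append_gens, lemS_71, lemS_72, ← wact_append_gens,
    ← red_sound ([] ++ []) w, show red ([] ++ []) = [] from by decide]
theorem lemA_74 : wact2 (Wr 0 2) [0, 0, 1, 0, 1, 1] = [0, 0, 1, 1, 1, 1] := by decide
theorem lemS_74 (w : List (Fin 2)) : wact (stW [0, 0, 1, 0, 1, 1] (Wr 0 2)) w = wact [GrigQ.d] w := by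
  rw [← red_sound (stW [0, 0, 1, 0, 1, 1] (Wr 0 2)) w, show red (stW [0, 0, 1, 0, 1, 1] (Wr 0 2)) = [GrigQ.d] from by decide]
theorem lemA_75 : wact2 (W 0 3) [0, 0, 1, 1, 1, 1] = [0, 0, 0, 1, 1, 1] := by decide
theorem lemS_75 (w : List (Fin 2)) : wact (stW [0, 0, 1, 1, 1, 1] (W 0 3)) w = wact [] w := by
  rw [← red_sound (stW [0, 0, 1, 1, 1, 1] (W 0 3)) w, show red (stW [0, 0, 1, 1, 1, 1] (W 0 3)) = [] from by decide]
theorem lemA_76 : wact2 (W 1 2) [0, 0, 1, 0, 1, 1] = [0, 0, 0, 1, 1, 1] := by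
  rw [Wsp_1_2, wact2_append, lemA_74, lemA_75]
theorem lemS_76 (w : List (Fin 2)) : wact (stW [0, 0, 1, 0, 1, 1] (W 1 2)) w = wact [GrigQ.d] w := by
  rw [Wsp_1_2, stW_append, lemA_74, wact_append_gens, lemS_74, lemS_75, ← wact_append_gens,
    ← red_sound ([GrigQ.d] ++ []) w, show red ([GrigQ.d] ++ []) = [GrigQ.d] from by decide]
theorem lemA_77 : wact2 (Wr 2 2) [0, 0, 0, 0, 1, 1] = [0, 0, 0, 1, 1, 1] := by
  rw [Rsp_2_2, wact2_append, lemA_73, lemA_76]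
theorem lemS_77 (w : List (Fin 2)) : wact (stW [0, 0, 0, 0, 1, 1] (Wr 2 2)) w = wact [GrigQ.d] w := by
  rw [Rsp_2_2, stW_append, lemA_73, wact_append_gens, lemS_73, lemS_76, ← wact_append_gens,
    ← red_sound ([] ++ [GrigQ.d]) w, show red ([] ++ [GrigQ.d]) = [GrigQ.d] from by decide]
theorem lemA_78 : wact2 (W 3 2) [0, 0, 0, 0, 1, 1] = [0, 0, 0, 0, 1, 1] := by
  rw [Wsp_3_2, wact2_append, lemA_77, lemA_69]
theorem lemS_78 (w : List (Fin 2)) : wact (stW [0, 0, 0, 0, 1, 1] (W 3 2)) w = wact [GrigQ.b] w := by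
  rw [Wsp_3_2, stW_append, lemA_77, wact_append_gens, lemS_77, lemS_69, ← wact_append_gens,
    ← red_sound ([GrigQ.d] ++ [GrigQ.c]) w, show red ([GrigQ.d] ++ [GrigQ.c]) = [GrigQ.b] from by decide]
theorem lemA_79 : wact2 (Wr 4 2) [0, 0, 0, 0, 0, 0] = [0, 0, 0, 0, 1, 1] := by
  rw [Rsp_4_2, wact2_append, lemA_70, lemA_78]
theorem lemS_79 (w : List (Fin 2)) : wact (stW [0, 0, 0, 0, 0, 0] (Wr 4 2)) w = wact [GrigQ.d] w := by
  rw [Rsp_4_2, stW_append, lemA_70, wact_append_gens, lemS_70, lemS_78, ← wact_append_gens,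
    ← red_sound ([GrigQ.c] ++ [GrigQ.b]) w, show red ([GrigQ.c] ++ [GrigQ.b]) = [GrigQ.d] from by decide]
theorem lemA_80 : wact2 (Wr 0 0) [0, 0, 0, 1, 0, 1] = [0, 0, 0, 1, 0, 0] := by decide
theorem lemS_80 (w : List (Fin 2)) : wact (stW [0, 0, 0, 1, 0, 1] (Wr 0 0)) w = wact [] w := by
  rw [← red_sound (stW [0, 0, 0, 1, 0, 1] (Wr 0 0)) w, show red (stW [0, 0, 0, 1, 0, 1] (Wr 0 0)) = [] from by decide]
theorem lemA_81 : wact2 (W 0 3) [0, 0, 0, 1, 0, 0] = [0, 0, 1, 1, 0, 1] := by decide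
theorem lemS_81 (w : List (Fin 2)) : wact (stW [0, 0, 0, 1, 0, 0] (W 0 3)) w = wact [] w := by
  rw [← red_sound (stW [0, 0, 0, 1, 0, 0] (W 0 3)) w, show red (stW [0, 0, 0, 1, 0, 0] (W 0 3)) = [] from by decide]
theorem lemA_82 : wact2 (Wr 1 3) [0, 0, 0, 1, 0, 1] = [0, 0, 1, 1, 0, 1] := by
  rw [Rsp_1_3, wact2_append, lemA_80, lemA_81]
theorem lemS_82 (w : List (Fin 2)) : wact (stW [0, 0, 0, 1, 0, 1] (Wr 1 3)) w = wact [] w := by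
  rw [Rsp_1_3, stW_append, lemA_80, wact_append_gens, lemS_80, lemS_81, ← wact_append_gens,
    ← red_sound ([] ++ []) w, show red ([] ++ []) = [] from by decide]
theorem lemA_83 : wact2 (Wr 0 0) [0, 0, 1, 1, 0, 1] = [0, 0, 1, 1, 0, 0] := by decide
theorem lemS_83 (w : List (Fin 2)) : wact (stW [0, 0, 1, 1, 0, 1] (Wr 0 0)) w = wact [] w := by
  rw [← red_sound (stW [0, 0, 1, 1, 0, 1] (Wr 0 0)) w, show red (stW [0, 0, 1, 1, 0, 1] (Wr 0 0)) = [] from by decide]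
theorem lemA_84 : wact2 (W 0 1) [0, 0, 1, 1, 0, 0] = [0, 0, 0, 0, 0, 1] := by decide
theorem lemS_84 (w : List (Fin 2)) : wact (stW [0, 0, 1, 1, 0, 0] (W 0 1)) w = wact [] w := by
  rw [← red_sound (stW [0, 0, 1, 1, 0, 0] (W 0 1)) w, show red (stW [0, 0, 1, 1, 0, 0] (W 0 1)) = [] from by decide]
theorem lemA_85 : wact2 (W 1 0) [0, 0, 1, 1, 0, 1] = [0, 0, 0, 0, 0, 1] := by
  rw [Wsp_1_0, wact2_append, lemA_83, lemA_84]
theorem lemS_85 (w : List (Fin 2)) : wact (stW [0, 0, 1, 1, 0, 1] (W 1 0)) w = wact [] w := by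
  rw [Wsp_1_0, stW_append, lemA_83, wact_append_gens, lemS_83, lemS_84, ← wact_append_gens,
    ← red_sound ([] ++ []) w, show red ([] ++ []) = [] from by decide]
theorem lemA_86 : wact2 (W 2 3) [0, 0, 0, 1, 0, 1] = [0, 0, 0, 0, 0, 1] := by
  rw [Wsp_2_3, wact2_append, lemA_82, lemA_85]
theorem lemS_86 (w : List (Fin 2)) : wact (stW [0, 0, 0, 1, 0, 1] (W 2 3)) w = wact [] w := by
  rw [Wsp_2_3, stW_append, lemA_82, wact_append_gens, lemS_82, lemS_85, ← wact_append_gens,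
    ← red_sound ([] ++ []) w, show red ([] ++ []) = [] from by decide]
theorem lemA_87 : wact2 (Wr 3 3) [0, 0, 0, 0, 1, 1] = [0, 0, 0, 0, 0, 1] := by
  rw [Rsp_3_3, wact2_append, lemA_21, lemA_86]
theorem lemS_87 (w : List (Fin 2)) : wact (stW [0, 0, 0, 0, 1, 1] (Wr 3 3)) w = wact [GrigQ.b] w := by
  rw [Rsp_3_3, stW_append, lemA_21, wact_append_gens, lemS_21, lemS_86, ← wact_append_gens,
    ← red_sound ([GrigQ.b] ++ []) w, show red ([GrigQ.b] ++ []) = [GrigQ.b] from by decide]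
theorem lemA_88 : wact2 (Wr 0 2) [0, 0, 0, 0, 0, 1] = [0, 0, 0, 1, 0, 1] := by decide
theorem lemS_88 (w : List (Fin 2)) : wact (stW [0, 0, 0, 0, 0, 1] (Wr 0 2)) w = wact [] w := by
  rw [← red_sound (stW [0, 0, 0, 0, 0, 1] (Wr 0 2)) w, show red (stW [0, 0, 0, 0, 0, 1] (Wr 0 2)) = [] from by decide]
theorem lemA_89 : wact2 (W 0 1) [0, 0, 0, 1, 0, 1] = [0, 0, 1, 0, 0, 0] := by decide
theorem lemS_89 (w : List (Fin 2)) : wact (stW [0, 0, 0, 1, 0, 1] (W 0 1)) w = wact [] w := by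
  rw [← red_sound (stW [0, 0, 0, 1, 0, 1] (W 0 1)) w, show red (stW [0, 0, 0, 1, 0, 1] (W 0 1)) = [] from by decide]
theorem lemA_90 : wact2 (Wr 1 1) [0, 0, 0, 0, 0, 1] = [0, 0, 1, 0, 0, 0] := by
  rw [Rsp_1_1, wact2_append, lemA_88, lemA_89]
theorem lemS_90 (w : List (Fin 2)) : wact (stW [0, 0, 0, 0, 0, 1] (Wr 1 1)) w = wact [] w := by
  rw [Rsp_1_1, stW_append, lemA_88, wact_append_gens, lemS_88, lemS_89, ← wact_append_gens,
    ← red_sound ([] ++ []) w, show red ([] ++ []) = [] from by decide]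
theorem lemA_91 : wact2 (Wr 0 0) [0, 0, 1, 0, 0, 0] = [0, 0, 1, 0, 1, 0] := by decide
theorem lemS_91 (w : List (Fin 2)) : wact (stW [0, 0, 1, 0, 0, 0] (Wr 0 0)) w = wact [] w := by
  rw [← red_sound (stW [0, 0, 1, 0, 0, 0] (Wr 0 0)) w, show red (stW [0, 0, 1, 0, 0, 0] (Wr 0 0)) = [] from by decide]
theorem lemA_92 : wact2 (W 0 1) [0, 0, 1, 0, 1, 0] = [0, 0, 0, 1, 1, 0] := by decide
theorem lemS_92 (w : List (Fin 2)) : wact (stW [0, 0, 1, 0, 1, 0] (W 0 1)) w = wact [] w := by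
  rw [← red_sound (stW [0, 0, 1, 0, 1, 0] (W 0 1)) w, show red (stW [0, 0, 1, 0, 1, 0] (W 0 1)) = [] from by decide]
theorem lemA_93 : wact2 (W 1 0) [0, 0, 1, 0, 0, 0] = [0, 0, 0, 1, 1, 0] := by
  rw [Wsp_1_0, wact2_append, lemA_91, lemA_92]
theorem lemS_93 (w : List (Fin 2)) : wact (stW [0, 0, 1, 0, 0, 0] (W 1 0)) w = wact [] w := by
  rw [Wsp_1_0, stW_append, lemA_91, wact_append_gens, lemS_91, lemS_92, ← wact_append_gens,
    ← red_sound ([] ++ []) w, show red ([] ++ []) = [] from by decide]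
theorem lemA_94 : wact2 (Wr 2 0) [0, 0, 0, 0, 0, 1] = [0, 0, 0, 1, 1, 0] := by
  rw [Rsp_2_0, wact2_append, lemA_90, lemA_93]
theorem lemS_94 (w : List (Fin 2)) : wact (stW [0, 0, 0, 0, 0, 1] (Wr 2 0)) w = wact [] w := by
  rw [Rsp_2_0, stW_append, lemA_90, wact_append_gens, lemS_90, lemS_93, ← wact_append_gens,
    ← red_sound ([] ++ []) w, show red ([] ++ []) = [] from by decide]
theorem lemA_95 : wact2 (Wr 0 2) [0, 0, 0, 1, 1, 0] = [0, 0, 0, 0, 1, 0] := by decide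
theorem lemS_95 (w : List (Fin 2)) : wact (stW [0, 0, 0, 1, 1, 0] (Wr 0 2)) w = wact [GrigQ.a] w := by
  rw [← red_sound (stW [0, 0, 0, 1, 1, 0] (Wr 0 2)) w, show red (stW [0, 0, 0, 1, 1, 0] (Wr 0 2)) = [GrigQ.a] from by decide]
theorem lemA_96 : wact2 (W 0 1) [0, 0, 0, 0, 1, 0] = [0, 0, 1, 1, 0, 1] := by decide
theorem lemS_96 (w : List (Fin 2)) : wact (stW [0, 0, 0, 0, 1, 0] (W 0 1)) w = wact [] w := by
  rw [← red_sound (stW [0, 0, 0, 0, 1, 0] (W 0 1)) w, show red (stW [0, 0, 0, 0, 1, 0] (W 0 1)) = [] from by decide]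
theorem lemA_97 : wact2 (Wr 1 1) [0, 0, 0, 1, 1, 0] = [0, 0, 1, 1, 0, 1] := by
  rw [Rsp_1_1, wact2_append, lemA_95, lemA_96]
theorem lemS_97 (w : List (Fin 2)) : wact (stW [0, 0, 0, 1, 1, 0] (Wr 1 1)) w = wact [GrigQ.a] w := by
  rw [Rsp_1_1, stW_append, lemA_95, wact_append_gens, lemS_95, lemS_96, ← wact_append_gens,
    ← red_sound ([GrigQ.a] ++ []) w, show red ([GrigQ.a] ++ []) = [GrigQ.a] from by decide]
theorem lemA_98 : wact2 (Wr 0 2) [0, 0, 1, 1, 0, 1] = [0, 0, 1, 0, 0, 1] := by decide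
theorem lemS_98 (w : List (Fin 2)) : wact (stW [0, 0, 1, 1, 0, 1] (Wr 0 2)) w = wact [] w := by
  rw [← red_sound (stW [0, 0, 1, 1, 0, 1] (Wr 0 2)) w, show red (stW [0, 0, 1, 1, 0, 1] (Wr 0 2)) = [] from by decide]
theorem lemA_99 : wact2 (W 0 3) [0, 0, 1, 0, 0, 1] = [0, 0, 0, 0, 0, 1] := by decide
theorem lemS_99 (w : List (Fin 2)) : wact (stW [0, 0, 1, 0, 0, 1] (W 0 3)) w = wact [] w := by
  rw [← red_sound (stW [0, 0, 1, 0, 0, 1] (W 0 3)) w, show red (stW [0, 0, 1, 0, 0, 1] (W 0 3)) = [] from by decide]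
theorem lemA_100 : wact2 (W 1 2) [0, 0, 1, 1, 0, 1] = [0, 0, 0, 0, 0, 1] := by
  rw [Wsp_1_2, wact2_append, lemA_98, lemA_99]
theorem lemS_100 (w : List (Fin 2)) : wact (stW [0, 0, 1, 1, 0, 1] (W 1 2)) w = wact [] w := by
  rw [Wsp_1_2, stW_append, lemA_98, wact_append_gens, lemS_98, lemS_99, ← wact_append_gens,
    ← red_sound ([] ++ []) w, show red ([] ++ []) = [] from by decide]
theorem lemA_101 : wact2 (W 2 1) [0, 0, 0, 1, 1, 0] = [0, 0, 0, 0, 0, 1] := by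
  rw [Wsp_2_1, wact2_append, lemA_97, lemA_100]
theorem lemS_101 (w : List (Fin 2)) : wact (stW [0, 0, 0, 1, 1, 0] (W 2 1)) w = wact [GrigQ.a] w := by
  rw [Wsp_2_1, stW_append, lemA_97, wact_append_gens, lemS_97, lemS_100, ← wact_append_gens,
    ← red_sound ([GrigQ.a] ++ []) w, show red ([GrigQ.a] ++ []) = [GrigQ.a] from by decide]
theorem lemA_102 : wact2 (W 3 0) [0, 0, 0, 0, 0, 1] = [0, 0, 0, 0, 0, 1] := by
  rw [Wsp_3_0, wact2_append, lemA_94, lemA_101]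
theorem lemS_102 (w : List (Fin 2)) : wact (stW [0, 0, 0, 0, 0, 1] (W 3 0)) w = wact [GrigQ.a] w := by
  rw [Wsp_3_0, stW_append, lemA_94, wact_append_gens, lemS_94, lemS_101, ← wact_append_gens,
    ← red_sound ([] ++ [GrigQ.a]) w, show red ([] ++ [GrigQ.a]) = [GrigQ.a] from by decide]
theorem lemA_103 : wact2 (W 4 3) [0, 0, 0, 0, 1, 1] = [0, 0, 0, 0, 0, 1] := by
  rw [Wsp_4_3, wact2_append, lemA_87, lemA_102]
theorem lemS_103 (w : List (Fin 2)) : wact (stW [0, 0, 0, 0, 1, 1] (W 4 3)) w = wact [GrigQ.b, GrigQ.a] w := by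
  rw [Wsp_4_3, stW_append, lemA_87, wact_append_gens, lemS_87, lemS_102, ← wact_append_gens,
    ← red_sound ([GrigQ.b] ++ [GrigQ.a]) w, show red ([GrigQ.b] ++ [GrigQ.a]) = [GrigQ.b, GrigQ.a] from by decide]
theorem lemA_104 : wact2 (W 5 2) [0, 0, 0, 0, 0, 0] = [0, 0, 0, 0, 0, 1] := by
  rw [Wsp_5_2, wact2_append, lemA_79, lemA_103]
theorem lemS_104 (w : List (Fin 2)) : wact (stW [0, 0, 0, 0, 0, 0] (W 5 2)) w = wact [GrigQ.c, GrigQ.a] w := by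
  rw [Wsp_5_2, stW_append, lemA_79, wact_append_gens, lemS_79, lemS_103, ← wact_append_gens,
    ← red_sound ([GrigQ.d] ++ [GrigQ.b, GrigQ.a]) w, show red ([GrigQ.d] ++ [GrigQ.b, GrigQ.a]) = [GrigQ.c, GrigQ.a] from by decide]
theorem lemA_105 : wact2 (Wr 6 2) [0, 0, 0, 0, 0, 1] = [0, 0, 0, 0, 0, 1] := by
  rw [Rsp_6_2, wact2_append, lemA_62, lemA_104]
theorem lemS_105 (w : List (Fin 2)) : wact (stW [0, 0, 0, 0, 0, 1] (Wr 6 2)) w = wact [GrigQ.c, GrigQ.a, GrigQ.b, GrigQ.a] w := by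
  rw [Rsp_6_2, stW_append, lemA_62, wact_append_gens, lemS_62, lemS_104, ← wact_append_gens,
    ← red_sound ([GrigQ.c, GrigQ.a, GrigQ.d] ++ [GrigQ.c, GrigQ.a]) w, show red ([GrigQ.c, GrigQ.a, GrigQ.d] ++ [GrigQ.c, GrigQ.a]) = [GrigQ.c, GrigQ.a, GrigQ.b, GrigQ.a] from by decide]
theorem lemA_106 : wact2 (Wr 0 0) [0, 0, 0, 1, 1, 0] = [0, 0, 0, 1, 1, 0] := by decide
theorem lemS_106 (w : List (Fin 2)) : wact (stW [0, 0, 0, 1, 1, 0] (Wr 0 0)) w = wact [] w := by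
  rw [← red_sound (stW [0, 0, 0, 1, 1, 0] (Wr 0 0)) w, show red (stW [0, 0, 0, 1, 1, 0] (Wr 0 0)) = [] from by decide]
theorem lemA_107 : wact2 (W 0 3) [0, 0, 0, 1, 1, 0] = [0, 0, 1, 1, 1, 0] := by decide
theorem lemS_107 (w : List (Fin 2)) : wact (stW [0, 0, 0, 1, 1, 0] (W 0 3)) w = wact [] w := by
  rw [← red_sound (stW [0, 0, 0, 1, 1, 0] (W 0 3)) w, show red (stW [0, 0, 0, 1, 1, 0] (W 0 3)) = [] from by decide]
theorem lemA_108 : wact2 (Wr 1 3) [0, 0, 0, 1, 1, 0] = [0, 0, 1, 1, 1, 0] := by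
  rw [Rsp_1_3, wact2_append, lemA_106, lemA_107]
theorem lemS_108 (w : List (Fin 2)) : wact (stW [0, 0, 0, 1, 1, 0] (Wr 1 3)) w = wact [] w := by
  rw [Rsp_1_3, stW_append, lemA_106, wact_append_gens, lemS_106, lemS_107, ← wact_append_gens,
    ← red_sound ([] ++ []) w, show red ([] ++ []) = [] from by decide]
theorem lemA_109 : wact2 (Wr 0 0) [0, 0, 1, 1, 1, 0] = [0, 0, 1, 1, 1, 0] := by decide
theorem lemS_109 (w : List (Fin 2)) : wact (stW [0, 0, 1, 1, 1, 0] (Wr 0 0)) w = wact [] w := by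
  rw [← red_sound (stW [0, 0, 1, 1, 1, 0] (Wr 0 0)) w, show red (stW [0, 0, 1, 1, 1, 0] (Wr 0 0)) = [] from by decide]
theorem lemA_110 : wact2 (W 0 1) [0, 0, 1, 1, 1, 0] = [0, 0, 0, 0, 1, 0] := by decide
theorem lemS_110 (w : List (Fin 2)) : wact (stW [0, 0, 1, 1, 1, 0] (W 0 1)) w = wact [GrigQ.a] w := by
  rw [← red_sound (stW [0, 0, 1, 1, 1, 0] (W 0 1)) w, show red (stW [0, 0, 1, 1, 1, 0] (W 0 1)) = [GrigQ.a] from by decide]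
theorem lemA_111 : wact2 (W 1 0) [0, 0, 1, 1, 1, 0] = [0, 0, 0, 0, 1, 0] := by
  rw [Wsp_1_0, wact2_append, lemA_109, lemA_110]
theorem lemS_111 (w : List (Fin 2)) : wact (stW [0, 0, 1, 1, 1, 0] (W 1 0)) w = wact [GrigQ.a] w := by
  rw [Wsp_1_0, stW_append, lemA_109, wact_append_gens, lemS_109, lemS_110, ← wact_append_gens,
    ← red_sound ([] ++ [GrigQ.a]) w, show red ([] ++ [GrigQ.a]) = [GrigQ.a] from by decide]
theorem lemA_112 : wact2 (W 2 3) [0, 0, 0, 1, 1, 0] = [0, 0, 0, 0, 1, 0] := by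
  rw [Wsp_2_3, wact2_append, lemA_108, lemA_111]
theorem lemS_112 (w : List (Fin 2)) : wact (stW [0, 0, 0, 1, 1, 0] (W 2 3)) w = wact [GrigQ.a] w := by
  rw [Wsp_2_3, stW_append, lemA_108, wact_append_gens, lemS_108, lemS_111, ← wact_append_gens,
    ← red_sound ([] ++ [GrigQ.a]) w, show red ([] ++ [GrigQ.a]) = [GrigQ.a] from by decide]
theorem lemA_113 : wact2 (Wr 3 3) [0, 0, 0, 0, 0, 1] = [0, 0, 0, 0, 1, 0] := by
  rw [Rsp_3_3, wact2_append, lemA_94, lemA_112]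
theorem lemS_113 (w : List (Fin 2)) : wact (stW [0, 0, 0, 0, 0, 1] (Wr 3 3)) w = wact [GrigQ.a] w := by
  rw [Rsp_3_3, stW_append, lemA_94, wact_append_gens, lemS_94, lemS_112, ← wact_append_gens,
    ← red_sound ([] ++ [GrigQ.a]) w, show red ([] ++ [GrigQ.a]) = [GrigQ.a] from by decide]
theorem lemA_114 : wact2 (Wr 0 0) [0, 0, 0, 0, 1, 0] = [0, 0, 0, 0, 0, 0] := by decide
theorem lemS_114 (w : List (Fin 2)) : wact (stW [0, 0, 0, 0, 1, 0] (Wr 0 0)) w = wact [] w := by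
  rw [← red_sound (stW [0, 0, 0, 0, 1, 0] (Wr 0 0)) w, show red (stW [0, 0, 0, 0, 1, 0] (Wr 0 0)) = [] from by decide]
theorem lemA_115 : wact2 (W 0 3) [0, 0, 0, 0, 0, 0] = [0, 0, 1, 0, 1, 0] := by decide
theorem lemS_115 (w : List (Fin 2)) : wact (stW [0, 0, 0, 0, 0, 0] (W 0 3)) w = wact [] w := by
  rw [← red_sound (stW [0, 0, 0, 0, 0, 0] (W 0 3)) w, show red (stW [0, 0, 0, 0, 0, 0] (W 0 3)) = [] from by decide]
theorem lemA_116 : wact2 (Wr 1 3) [0, 0, 0, 0, 1, 0] = [0, 0, 1, 0, 1, 0] := by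
  rw [Rsp_1_3, wact2_append, lemA_114, lemA_115]
theorem lemS_116 (w : List (Fin 2)) : wact (stW [0, 0, 0, 0, 1, 0] (Wr 1 3)) w = wact [] w := by
  rw [Rsp_1_3, stW_append, lemA_114, wact_append_gens, lemS_114, lemS_115, ← wact_append_gens,
    ← red_sound ([] ++ []) w, show red ([] ++ []) = [] from by decide]
theorem lemA_117 : wact2 (Wr 0 2) [0, 0, 1, 0, 1, 0] = [0, 0, 1, 1, 1, 0] := by decide
theorem lemS_117 (w : List (Fin 2)) : wact (stW [0, 0, 1, 0, 1, 0] (Wr 0 2)) w = wact [GrigQ.a] w := by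
  rw [← red_sound (stW [0, 0, 1, 0, 1, 0] (Wr 0 2)) w, show red (stW [0, 0, 1, 0, 1, 0] (Wr 0 2)) = [GrigQ.a] from by decide]
theorem lemA_118 : wact2 (W 0 3) [0, 0, 1, 1, 1, 0] = [0, 0, 0, 1, 1, 0] := by decide
theorem lemS_118 (w : List (Fin 2)) : wact (stW [0, 0, 1, 1, 1, 0] (W 0 3)) w = wact [] w := by
  rw [← red_sound (stW [0, 0, 1, 1, 1, 0] (W 0 3)) w, show red (stW [0, 0, 1, 1, 1, 0] (W 0 3)) = [] from by decide]
theorem lemA_119 : wact2 (W 1 2) [0, 0, 1, 0, 1, 0] = [0, 0, 0, 1, 1, 0] := by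
  rw [Wsp_1_2, wact2_append, lemA_117, lemA_118]
theorem lemS_119 (w : List (Fin 2)) : wact (stW [0, 0, 1, 0, 1, 0] (W 1 2)) w = wact [GrigQ.a] w := by
  rw [Wsp_1_2, stW_append, lemA_117, wact_append_gens, lemS_117, lemS_118, ← wact_append_gens,
    ← red_sound ([GrigQ.a] ++ []) w, show red ([GrigQ.a] ++ []) = [GrigQ.a] from by decide]
theorem lemA_120 : wact2 (Wr 2 2) [0, 0, 0, 0, 1, 0] = [0, 0, 0, 1, 1, 0] := by
  rw [Rsp_2_2, wact2_append, lemA_116, lemA_119]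
theorem lemS_120 (w : List (Fin 2)) : wact (stW [0, 0, 0, 0, 1, 0] (Wr 2 2)) w = wact [GrigQ.a] w := by
  rw [Rsp_2_2, stW_append, lemA_116, wact_append_gens, lemS_116, lemS_119, ← wact_append_gens,
    ← red_sound ([] ++ [GrigQ.a]) w, show red ([] ++ [GrigQ.a]) = [GrigQ.a] from by decide]
theorem lemA_121 : wact2 (W 3 2) [0, 0, 0, 0, 1, 0] = [0, 0, 0, 0, 1, 0] := by
  rw [Wsp_3_2, wact2_append, lemA_120, lemA_112]
theorem lemS_121 (w : List (Fin 2)) : wact (stW [0, 0, 0, 0, 1, 0] (W 3 2)) w = wact [] w := by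
  rw [Wsp_3_2, stW_append, lemA_120, wact_append_gens, lemS_120, lemS_112, ← wact_append_gens,
    ← red_sound ([GrigQ.a] ++ [GrigQ.a]) w, show red ([GrigQ.a] ++ [GrigQ.a]) = [] from by decide]
theorem lemA_122 : wact2 (Wr 4 2) [0, 0, 0, 0, 0, 1] = [0, 0, 0, 0, 1, 0] := by
  rw [Rsp_4_2, wact2_append, lemA_113, lemA_121]
theorem lemS_122 (w : List (Fin 2)) : wact (stW [0, 0, 0, 0, 0, 1] (Wr 4 2)) w = wact [GrigQ.a] w := by
  rw [Rsp_4_2, stW_append, lemA_113, wact_append_gens, lemS_113, lemS_121, ← wact_append_gens,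
    ← red_sound ([GrigQ.a] ++ []) w, show red ([GrigQ.a] ++ []) = [GrigQ.a] from by decide]
theorem lemA_123 : wact2 (Wr 3 1) [0, 0, 0, 0, 1, 0] = [0, 0, 0, 0, 0, 1] := by
  rw [Rsp_3_1, wact2_append, lemA_120, lemA_101]
theorem lemS_123 (w : List (Fin 2)) : wact (stW [0, 0, 0, 0, 1, 0] (Wr 3 1)) w = wact [] w := by
  rw [Rsp_3_1, stW_append, lemA_120, wact_append_gens, lemS_120, lemS_101, ← wact_append_gens,
    ← red_sound ([GrigQ.a] ++ [GrigQ.a]) w, show red ([GrigQ.a] ++ [GrigQ.a]) = [] from by decide]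
theorem lemA_124 : wact2 (W 3 2) [0, 0, 0, 0, 0, 1] = [0, 0, 0, 0, 0, 0] := by
  rw [Wsp_3_2, wact2_append, lemA_6, lemA_44]
theorem lemS_124 (w : List (Fin 2)) : wact (stW [0, 0, 0, 0, 0, 1] (W 3 2)) w = wact [] w := by
  rw [Wsp_3_2, stW_append, lemA_6, wact_append_gens, lemS_6, lemS_44, ← wact_append_gens,
    ← red_sound ([] ++ []) w, show red ([] ++ []) = [] from by decide]
theorem lemA_125 : wact2 (W 4 1) [0, 0, 0, 0, 1, 0] = [0, 0, 0, 0, 0, 0] := by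
  rw [Wsp_4_1, wact2_append, lemA_123, lemA_124]
theorem lemS_125 (w : List (Fin 2)) : wact (stW [0, 0, 0, 0, 1, 0] (W 4 1)) w = wact [] w := by
  rw [Wsp_4_1, stW_append, lemA_123, wact_append_gens, lemS_123, lemS_124, ← wact_append_gens,
    ← red_sound ([] ++ []) w, show red ([] ++ []) = [] from by decide]
theorem lemA_126 : wact2 (Wr 5 1) [0, 0, 0, 0, 0, 1] = [0, 0, 0, 0, 0, 0] := by
  rw [Rsp_5_1, wact2_append, lemA_122, lemA_125]
theorem lemS_126 (w : List (Fin 2)) : wact (stW [0, 0, 0, 0, 0, 1] (Wr 5 1)) w = wact [GrigQ.a] w := by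
  rw [Rsp_5_1, stW_append, lemA_122, wact_append_gens, lemS_122, lemS_125, ← wact_append_gens,
    ← red_sound ([GrigQ.a] ++ []) w, show red ([GrigQ.a] ++ []) = [GrigQ.a] from by decide]
theorem lemA_127 : wact2 (W 6 1) [0, 0, 0, 0, 0, 1] = [0, 0, 0, 0, 0, 1] := by
  rw [Wsp_6_1, wact2_append, lemA_126, lemA_104]
theorem lemS_127 (w : List (Fin 2)) : wact (stW [0, 0, 0, 0, 0, 1] (W 6 1)) w = wact [GrigQ.a, GrigQ.c, GrigQ.a] w := by
  rw [Wsp_6_1, stW_append, lemA_126, wact_append_gens, lemS_126, lemS_104, ← wact_append_gens,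
    ← red_sound ([GrigQ.a] ++ [GrigQ.c, GrigQ.a]) w, show red ([GrigQ.a] ++ [GrigQ.c, GrigQ.a]) = [GrigQ.a, GrigQ.c, GrigQ.a] from by decide]
theorem lemA_128 : wact2 (Wr 7 1) [0, 0, 0, 0, 0, 1] = [0, 0, 0, 0, 0, 1] := by
  rw [Rsp_7_1, wact2_append, lemA_105, lemA_127]
theorem lemS_128 (w : List (Fin 2)) : wact (stW [0, 0, 0, 0, 0, 1] (Wr 7 1)) w = wact [GrigQ.c, GrigQ.a, GrigQ.d, GrigQ.a] w := by
  rw [Rsp_7_1, stW_append, lemA_105, wact_append_gens, lemS_105, lemS_127, ← wact_append_gens,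
    ← red_sound ([GrigQ.c, GrigQ.a, GrigQ.b, GrigQ.a] ++ [GrigQ.a, GrigQ.c, GrigQ.a]) w, show red ([GrigQ.c, GrigQ.a, GrigQ.b, GrigQ.a] ++ [GrigQ.a, GrigQ.c, GrigQ.a]) = [GrigQ.c, GrigQ.a, GrigQ.d, GrigQ.a] from by decide]
theorem lemA_129 : wact2 (Wr 0 0) [0, 0, 0, 0, 0, 0] = [0, 0, 0, 0, 1, 0] := by decide
theorem lemS_129 (w : List (Fin 2)) : wact (stW [0, 0, 0, 0, 0, 0] (Wr 0 0)) w = wact [] w := by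
  rw [← red_sound (stW [0, 0, 0, 0, 0, 0] (Wr 0 0)) w, show red (stW [0, 0, 0, 0, 0, 0] (Wr 0 0)) = [] from by decide]
theorem lemA_130 : wact2 (W 0 3) [0, 0, 0, 0, 1, 0] = [0, 0, 1, 0, 0, 0] := by decide
theorem lemS_130 (w : List (Fin 2)) : wact (stW [0, 0, 0, 0, 1, 0] (W 0 3)) w = wact [] w := by
  rw [← red_sound (stW [0, 0, 0, 0, 1, 0] (W 0 3)) w, show red (stW [0, 0, 0, 0, 1, 0] (W 0 3)) = [] from by decide]
theorem lemA_131 : wact2 (Wr 1 3) [0, 0, 0, 0, 0, 0] = [0, 0, 1, 0, 0, 0] := by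
  rw [Rsp_1_3, wact2_append, lemA_129, lemA_130]
theorem lemS_131 (w : List (Fin 2)) : wact (stW [0, 0, 0, 0, 0, 0] (Wr 1 3)) w = wact [] w := by
  rw [Rsp_1_3, stW_append, lemA_129, wact_append_gens, lemS_129, lemS_130, ← wact_append_gens,
    ← red_sound ([] ++ []) w, show red ([] ++ []) = [] from by decide]
theorem lemA_132 : wact2 (Wr 0 2) [0, 0, 1, 0, 0, 0] = [0, 0, 1, 1, 0, 1] := by decide
theorem lemS_132 (w : List (Fin 2)) : wact (stW [0, 0, 1, 0, 0, 0] (Wr 0 2)) w = wact [] w := by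
  rw [← red_sound (stW [0, 0, 1, 0, 0, 0] (Wr 0 2)) w, show red (stW [0, 0, 1, 0, 0, 0] (Wr 0 2)) = [] from by decide]
theorem lemA_133 : wact2 (W 0 3) [0, 0, 1, 1, 0, 1] = [0, 0, 0, 1, 0, 1] := by decide
theorem lemS_133 (w : List (Fin 2)) : wact (stW [0, 0, 1, 1, 0, 1] (W 0 3)) w = wact [] w := by
  rw [← red_sound (stW [0, 0, 1, 1, 0, 1] (W 0 3)) w, show red (stW [0, 0, 1, 1, 0, 1] (W 0 3)) = [] from by decide]
theorem lemA_134 : wact2 (W 1 2) [0, 0, 1, 0, 0, 0] = [0, 0, 0, 1, 0, 1] := by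
  rw [Wsp_1_2, wact2_append, lemA_132, lemA_133]
theorem lemS_134 (w : List (Fin 2)) : wact (stW [0, 0, 1, 0, 0, 0] (W 1 2)) w = wact [] w := by
  rw [Wsp_1_2, stW_append, lemA_132, wact_append_gens, lemS_132, lemS_133, ← wact_append_gens,
    ← red_sound ([] ++ []) w, show red ([] ++ []) = [] from by decide]
theorem lemA_135 : wact2 (Wr 2 2) [0, 0, 0, 0, 0, 0] = [0, 0, 0, 1, 0, 1] := by
  rw [Rsp_2_2, wact2_append, lemA_131, lemA_134]
theorem lemS_135 (w : List (Fin 2)) : wact (stW [0, 0, 0, 0, 0, 0] (Wr 2 2)) w = wact [] w := by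
  rw [Rsp_2_2, stW_append, lemA_131, wact_append_gens, lemS_131, lemS_134, ← wact_append_gens,
    ← red_sound ([] ++ []) w, show red ([] ++ []) = [] from by decide]
theorem lemA_136 : wact2 (Wr 3 1) [0, 0, 0, 0, 0, 0] = [0, 0, 0, 0, 1, 0] := by
  rw [Rsp_3_1, wact2_append, lemA_135, lemA_28]
theorem lemS_136 (w : List (Fin 2)) : wact (stW [0, 0, 0, 0, 0, 0] (Wr 3 1)) w = wact [GrigQ.a] w := by
  rw [Rsp_3_1, stW_append, lemA_135, wact_append_gens, lemS_135, lemS_28, ← wact_append_gens,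
    ← red_sound ([] ++ [GrigQ.a]) w, show red ([] ++ [GrigQ.a]) = [GrigQ.a] from by decide]
theorem lemA_137 : wact2 (W 3 0) [0, 0, 0, 0, 1, 0] = [0, 0, 0, 0, 1, 1] := by
  rw [Wsp_3_0, wact2_append, lemA_37, lemA_13]
theorem lemS_137 (w : List (Fin 2)) : wact (stW [0, 0, 0, 0, 1, 0] (W 3 0)) w = wact [GrigQ.d] w := by
  rw [Wsp_3_0, stW_append, lemA_37, wact_append_gens, lemS_37, lemS_13, ← wact_append_gens,
    ← red_sound ([] ++ [GrigQ.d]) w, show red ([] ++ [GrigQ.d]) = [GrigQ.d] from by decide]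
theorem lemA_138 : wact2 (Wr 4 0) [0, 0, 0, 0, 0, 0] = [0, 0, 0, 0, 1, 1] := by
  rw [Rsp_4_0, wact2_append, lemA_136, lemA_137]
theorem lemS_138 (w : List (Fin 2)) : wact (stW [0, 0, 0, 0, 0, 0] (Wr 4 0)) w = wact [GrigQ.a, GrigQ.d] w := by
  rw [Rsp_4_0, stW_append, lemA_136, wact_append_gens, lemS_136, lemS_137, ← wact_append_gens,
    ← red_sound ([GrigQ.a] ++ [GrigQ.d]) w, show red ([GrigQ.a] ++ [GrigQ.d]) = [GrigQ.a, GrigQ.d] from by decide]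
theorem lemA_139 : wact2 (Wr 3 1) [0, 0, 0, 0, 1, 1] = [0, 0, 0, 0, 0, 0] := by
  rw [Rsp_3_1, wact2_append, lemA_77, lemA_59]
theorem lemS_139 (w : List (Fin 2)) : wact (stW [0, 0, 0, 0, 1, 1] (Wr 3 1)) w = wact [] w := by
  rw [Rsp_3_1, stW_append, lemA_77, wact_append_gens, lemS_77, lemS_59, ← wact_append_gens,
    ← red_sound ([GrigQ.d] ++ [GrigQ.d]) w, show red ([GrigQ.d] ++ [GrigQ.d]) = [] from by decide]
theorem lemA_140 : wact2 (W 3 2) [0, 0, 0, 0, 0, 0] = [0, 0, 0, 0, 0, 1] := by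
  rw [Wsp_3_2, wact2_append, lemA_135, lemA_86]
theorem lemS_140 (w : List (Fin 2)) : wact (stW [0, 0, 0, 0, 0, 0] (W 3 2)) w = wact [] w := by
  rw [Wsp_3_2, stW_append, lemA_135, wact_append_gens, lemS_135, lemS_86, ← wact_append_gens,
    ← red_sound ([] ++ []) w, show red ([] ++ []) = [] from by decide]
theorem lemA_141 : wact2 (W 4 1) [0, 0, 0, 0, 1, 1] = [0, 0, 0, 0, 0, 1] := by
  rw [Wsp_4_1, wact2_append, lemA_139, lemA_140]
theorem lemS_141 (w : List (Fin 2)) : wact (stW [0, 0, 0, 0, 1, 1] (W 4 1)) w = wact [] w := by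
  rw [Wsp_4_1, stW_append, lemA_139, wact_append_gens, lemS_139, lemS_140, ← wact_append_gens,
    ← red_sound ([] ++ []) w, show red ([] ++ []) = [] from by decide]
theorem lemA_142 : wact2 (W 5 0) [0, 0, 0, 0, 0, 0] = [0, 0, 0, 0, 0, 1] := by
  rw [Wsp_5_0, wact2_append, lemA_138, lemA_141]
theorem lemS_142 (w : List (Fin 2)) : wact (stW [0, 0, 0, 0, 0, 0] (W 5 0)) w = wact [GrigQ.a, GrigQ.d] w := by
  rw [Wsp_5_0, stW_append, lemA_138, wact_append_gens, lemS_138, lemS_141, ← wact_append_gens,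
    ← red_sound ([GrigQ.a, GrigQ.d] ++ []) w, show red ([GrigQ.a, GrigQ.d] ++ []) = [GrigQ.a, GrigQ.d] from by decide]
theorem lemA_143 : wact2 (Wr 6 0) [0, 0, 0, 0, 0, 1] = [0, 0, 0, 0, 0, 1] := by
  rw [Rsp_6_0, wact2_append, lemA_126, lemA_142]
theorem lemS_143 (w : List (Fin 2)) : wact (stW [0, 0, 0, 0, 0, 1] (Wr 6 0)) w = wact [GrigQ.d] w := by
  rw [Rsp_6_0, stW_append, lemA_126, wact_append_gens, lemS_126, lemS_142, ← wact_append_gens,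
    ← red_sound ([GrigQ.a] ++ [GrigQ.a, GrigQ.d]) w, show red ([GrigQ.a] ++ [GrigQ.a, GrigQ.d]) = [GrigQ.d] from by decide]
theorem lemA_144 : wact2 (W 7 0) [0, 0, 0, 0, 0, 1] = [0, 0, 0, 0, 0, 1] := by
  rw [Wsp_7_0, wact2_append, lemA_143, lemA_127]
theorem lemS_144 (w : List (Fin 2)) : wact (stW [0, 0, 0, 0, 0, 1] (W 7 0)) w = wact [GrigQ.d, GrigQ.a, GrigQ.c, GrigQ.a] w := by
  rw [Wsp_7_0, stW_append, lemA_143, wact_append_gens, lemS_143, lemS_127, ← wact_append_gens,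
    ← red_sound ([GrigQ.d] ++ [GrigQ.a, GrigQ.c, GrigQ.a]) w, show red ([GrigQ.d] ++ [GrigQ.a, GrigQ.c, GrigQ.a]) = [GrigQ.d, GrigQ.a, GrigQ.c, GrigQ.a] from by decide]
theorem lemA_145 : wact2 (Wr 8 0) [0, 0, 0, 0, 0, 1] = [0, 0, 0, 0, 0, 1] := by
  rw [Rsp_8_0, wact2_append, lemA_128, lemA_144]
theorem lemS_145 (w : List (Fin 2)) : wact (stW [0, 0, 0, 0, 0, 1] (Wr 8 0)) w = wact [GrigQ.c, GrigQ.a, GrigQ.d, GrigQ.a, GrigQ.d, GrigQ.a, GrigQ.c, GrigQ.a] w := by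
  rw [Rsp_8_0, stW_append, lemA_128, wact_append_gens, lemS_128, lemS_144, ← wact_append_gens,
    ← red_sound ([GrigQ.c, GrigQ.a, GrigQ.d, GrigQ.a] ++ [GrigQ.d, GrigQ.a, GrigQ.c, GrigQ.a]) w, show red ([GrigQ.c, GrigQ.a, GrigQ.d, GrigQ.a] ++ [GrigQ.d, GrigQ.a, GrigQ.c, GrigQ.a]) = [GrigQ.c, GrigQ.a, GrigQ.d, GrigQ.a, GrigQ.d, GrigQ.a, GrigQ.c, GrigQ.a] from by decide]
theorem lemA_146 : wact2 (W 6 3) [0, 0, 0, 0, 0, 1] = [0, 0, 0, 0, 0, 1] := by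
  rw [Wsp_6_3, wact2_append, lemA_62, lemA_142]
theorem lemS_146 (w : List (Fin 2)) : wact (stW [0, 0, 0, 0, 0, 1] (W 6 3)) w = wact [GrigQ.c, GrigQ.a, GrigQ.d, GrigQ.a, GrigQ.d] w := by
  rw [Wsp_6_3, stW_append, lemA_62, wact_append_gens, lemS_62, lemS_142, ← wact_append_gens,
    ← red_sound ([GrigQ.c, GrigQ.a, GrigQ.d] ++ [GrigQ.a, GrigQ.d]) w, show red ([GrigQ.c, GrigQ.a, GrigQ.d] ++ [GrigQ.a, GrigQ.d]) = [GrigQ.c, GrigQ.a, GrigQ.d, GrigQ.a, GrigQ.d] from by decide]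
theorem lemA_147 : wact2 (W 7 2) [0, 0, 0, 0, 0, 1] = [0, 0, 0, 0, 0, 1] := by
  rw [Wsp_7_2, wact2_append, lemA_105, lemA_146]
theorem lemS_147 (w : List (Fin 2)) : wact (stW [0, 0, 0, 0, 0, 1] (W 7 2)) w = wact [GrigQ.c, GrigQ.a, GrigQ.b, GrigQ.a, GrigQ.c, GrigQ.a, GrigQ.d, GrigQ.a, GrigQ.d] w := by
  rw [Wsp_7_2, stW_append, lemA_105, wact_append_gens, lemS_105, lemS_146, ← wact_append_gens,
    ← red_sound ([GrigQ.c, GrigQ.a, GrigQ.b, GrigQ.a] ++ [GrigQ.c, GrigQ.a, GrigQ.d, GrigQ.a, GrigQ.d]) w, show red ([GrigQ.c, GrigQ.a, GrigQ.b, GrigQ.a] ++ [GrigQ.c, GrigQ.a, GrigQ.d, GrigQ.a, GrigQ.d]) = [GrigQ.c, GrigQ.a, GrigQ.b, GrigQ.a, GrigQ.c, GrigQ.a, GrigQ.d, GrigQ.a, GrigQ.d] from by decide]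
theorem lemA_148 : wact2 (W 8 1) [0, 0, 0, 0, 0, 1] = [0, 0, 0, 0, 0, 1] := by
  rw [Wsp_8_1, wact2_append, lemA_128, lemA_147]
theorem lemS_148 (w : List (Fin 2)) : wact (stW [0, 0, 0, 0, 0, 1] (W 8 1)) w = wact [GrigQ.c, GrigQ.a, GrigQ.d, GrigQ.a, GrigQ.c, GrigQ.a, GrigQ.b, GrigQ.a, GrigQ.c, GrigQ.a, GrigQ.d, GrigQ.a, GrigQ.d] w := by
  rw [Wsp_8_1, stW_append, lemA_128, wact_append_gens, lemS_128, lemS_147, ← wact_append_gens,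
    ← red_sound ([GrigQ.c, GrigQ.a, GrigQ.d, GrigQ.a] ++ [GrigQ.c, GrigQ.a, GrigQ.b, GrigQ.a, GrigQ.c, GrigQ.a, GrigQ.d, GrigQ.a, GrigQ.d]) w, show red ([GrigQ.c, GrigQ.a, GrigQ.d, GrigQ.a] ++ [GrigQ.c, GrigQ.a, GrigQ.b, GrigQ.a, GrigQ.c, GrigQ.a, GrigQ.d, GrigQ.a, GrigQ.d]) = [GrigQ.c, GrigQ.a, GrigQ.d, GrigQ.a, GrigQ.c, GrigQ.a, GrigQ.b, GrigQ.a, GrigQ.c, GrigQ.a, GrigQ.d, GrigQ.a, GrigQ.d] from by decide]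
theorem lemA_149 : wact2 (W 9 0) [0, 0, 0, 0, 0, 1] = [0, 0, 0, 0, 0, 1] := by
  rw [Wsp_9_0, wact2_append, lemA_145, lemA_148]
theorem lemS_149 (w : List (Fin 2)) : wact (stW [0, 0, 0, 0, 0, 1] (W 9 0)) w = wact [GrigQ.c, GrigQ.a, GrigQ.d, GrigQ.a, GrigQ.d, GrigQ.a, GrigQ.c, GrigQ.a, GrigQ.c, GrigQ.a, GrigQ.d, GrigQ.a, GrigQ.c, GrigQ.a, GrigQ.b, GrigQ.a, GrigQ.c, GrigQ.a, GrigQ.d, GrigQ.a, GrigQ.d] w := by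
  rw [Wsp_9_0, stW_append, lemA_145, wact_append_gens, lemS_145, lemS_148, ← wact_append_gens,
    ← red_sound ([GrigQ.c, GrigQ.a, GrigQ.d, GrigQ.a, GrigQ.d, GrigQ.a, GrigQ.c, GrigQ.a] ++ [GrigQ.c, GrigQ.a, GrigQ.d, GrigQ.a, GrigQ.c, GrigQ.a, GrigQ.b, GrigQ.a, GrigQ.c, GrigQ.a, GrigQ.d, GrigQ.a, GrigQ.d]) w, show red ([GrigQ.c, GrigQ.a, GrigQ.d, GrigQ.a, GrigQ.d, GrigQ.a, GrigQ.c, GrigQ.a] ++ [GrigQ.c, GrigQ.a, GrigQ.d, GrigQ.a, GrigQ.c, GrigQ.a, GrigQ.b, GrigQ.a, GrigQ.c, GrigQ.a, GrigQ.d, GrigQ.a, GrigQ.d]) = [GrigQ.c, GrigQ.a, GrigQ.d, GrigQ.a, GrigQ.d, GrigQ.a, GrigQ.c, GrigQ.a, GrigQ.c, GrigQ.a, GrigQ.d, GrigQ.a, GrigQ.c, GrigQ.a, GrigQ.b, GrigQ.a, GrigQ.c, GrigQ.a, GrigQ.d, GrigQ.a, GrigQ.d] from by decide]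
theorem lemA_150 : wact2 (Wr 0 1) [0, 0, 0, 0, 0, 1] = [0, 0, 1, 1, 0, 0] := by decide
theorem lemS_150 (w : List (Fin 2)) : wact (stW [0, 0, 0, 0, 0, 1] (Wr 0 1)) w = wact [] w := by
  rw [← red_sound (stW [0, 0, 0, 0, 0, 1] (Wr 0 1)) w, show red (stW [0, 0, 0, 0, 0, 1] (Wr 0 1)) = [] from by decide]
theorem lemA_151 : wact2 (W 0 0) [0, 0, 1, 1, 0, 0] = [0, 0, 1, 1, 0, 1] := by decide
theorem lemS_151 (w : List (Fin 2)) : wact (stW [0, 0, 1, 1, 0, 0] (W 0 0)) w = wact [] w := by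
  rw [← red_sound (stW [0, 0, 1, 1, 0, 0] (W 0 0)) w, show red (stW [0, 0, 1, 1, 0, 0] (W 0 0)) = [] from by decide]
theorem lemA_152 : wact2 (Wr 1 0) [0, 0, 0, 0, 0, 1] = [0, 0, 1, 1, 0, 1] := by
  rw [Rsp_1_0, wact2_append, lemA_150, lemA_151]
theorem lemS_152 (w : List (Fin 2)) : wact (stW [0, 0, 0, 0, 0, 1] (Wr 1 0)) w = wact [] w := by
  rw [Rsp_1_0, stW_append, lemA_150, wact_append_gens, lemS_150, lemS_151, ← wact_append_gens,
    ← red_sound ([] ++ []) w, show red ([] ++ []) = [] from by decide]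
theorem lemA_153 : wact2 (Wr 0 3) [0, 0, 1, 1, 0, 1] = [0, 0, 0, 1, 0, 0] := by decide
theorem lemS_153 (w : List (Fin 2)) : wact (stW [0, 0, 1, 1, 0, 1] (Wr 0 3)) w = wact [] w := by
  rw [← red_sound (stW [0, 0, 1, 1, 0, 1] (Wr 0 3)) w, show red (stW [0, 0, 1, 1, 0, 1] (Wr 0 3)) = [] from by decide]
theorem lemA_154 : wact2 (W 0 0) [0, 0, 0, 1, 0, 0] = [0, 0, 0, 1, 0, 1] := by decide
theorem lemS_154 (w : List (Fin 2)) : wact (stW [0, 0, 0, 1, 0, 0] (W 0 0)) w = wact [] w := by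
  rw [← red_sound (stW [0, 0, 0, 1, 0, 0] (W 0 0)) w, show red (stW [0, 0, 0, 1, 0, 0] (W 0 0)) = [] from by decide]
theorem lemA_155 : wact2 (W 1 3) [0, 0, 1, 1, 0, 1] = [0, 0, 0, 1, 0, 1] := by
  rw [Wsp_1_3, wact2_append, lemA_153, lemA_154]
theorem lemS_155 (w : List (Fin 2)) : wact (stW [0, 0, 1, 1, 0, 1] (W 1 3)) w = wact [] w := by
  rw [Wsp_1_3, stW_append, lemA_153, wact_append_gens, lemS_153, lemS_154, ← wact_append_gens,
    ← red_sound ([] ++ []) w, show red ([] ++ []) = [] from by decide]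
theorem lemA_156 : wact2 (Wr 2 3) [0, 0, 0, 0, 0, 1] = [0, 0, 0, 1, 0, 1] := by
  rw [Rsp_2_3, wact2_append, lemA_152, lemA_155]
theorem lemS_156 (w : List (Fin 2)) : wact (stW [0, 0, 0, 0, 0, 1] (Wr 2 3)) w = wact [] w := by
  rw [Rsp_2_3, stW_append, lemA_152, wact_append_gens, lemS_152, lemS_155, ← wact_append_gens,
    ← red_sound ([] ++ []) w, show red ([] ++ []) = [] from by decide]
theorem lemA_157 : wact2 (Wr 0 3) [0, 0, 0, 1, 0, 1] = [0, 0, 1, 1, 0, 1] := by decide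
theorem lemS_157 (w : List (Fin 2)) : wact (stW [0, 0, 0, 1, 0, 1] (Wr 0 3)) w = wact [] w := by
  rw [← red_sound (stW [0, 0, 0, 1, 0, 1] (Wr 0 3)) w, show red (stW [0, 0, 0, 1, 0, 1] (Wr 0 3)) = [] from by decide]
theorem lemA_158 : wact2 (W 0 2) [0, 0, 1, 1, 0, 1] = [0, 0, 1, 0, 0, 0] := by decide
theorem lemS_158 (w : List (Fin 2)) : wact (stW [0, 0, 1, 1, 0, 1] (W 0 2)) w = wact [] w := by
  rw [← red_sound (stW [0, 0, 1, 1, 0, 1] (W 0 2)) w, show red (stW [0, 0, 1, 1, 0, 1] (W 0 2)) = [] from by decide]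
theorem lemA_159 : wact2 (Wr 1 2) [0, 0, 0, 1, 0, 1] = [0, 0, 1, 0, 0, 0] := by
  rw [Rsp_1_2, wact2_append, lemA_157, lemA_158]
theorem lemS_159 (w : List (Fin 2)) : wact (stW [0, 0, 0, 1, 0, 1] (Wr 1 2)) w = wact [] w := by
  rw [Rsp_1_2, stW_append, lemA_157, wact_append_gens, lemS_157, lemS_158, ← wact_append_gens,
    ← red_sound ([] ++ []) w, show red ([] ++ []) = [] from by decide]
theorem lemA_160 : wact2 (Wr 0 3) [0, 0, 1, 0, 0, 0] = [0, 0, 0, 0, 1, 0] := by decide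
theorem lemS_160 (w : List (Fin 2)) : wact (stW [0, 0, 1, 0, 0, 0] (Wr 0 3)) w = wact [] w := by
  rw [← red_sound (stW [0, 0, 1, 0, 0, 0] (Wr 0 3)) w, show red (stW [0, 0, 1, 0, 0, 0] (Wr 0 3)) = [] from by decide]
theorem lemA_161 : wact2 (W 0 0) [0, 0, 0, 0, 1, 0] = [0, 0, 0, 0, 0, 0] := by decide
theorem lemS_161 (w : List (Fin 2)) : wact (stW [0, 0, 0, 0, 1, 0] (W 0 0)) w = wact [] w := by
  rw [← red_sound (stW [0, 0, 0, 0, 1, 0] (W 0 0)) w, show red (stW [0, 0, 0, 0, 1, 0] (W 0 0)) = [] from by decide]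
theorem lemA_162 : wact2 (W 1 3) [0, 0, 1, 0, 0, 0] = [0, 0, 0, 0, 0, 0] := by
  rw [Wsp_1_3, wact2_append, lemA_160, lemA_161]
theorem lemS_162 (w : List (Fin 2)) : wact (stW [0, 0, 1, 0, 0, 0] (W 1 3)) w = wact [] w := by
  rw [Wsp_1_3, stW_append, lemA_160, wact_append_gens, lemS_160, lemS_161, ← wact_append_gens,
    ← red_sound ([] ++ []) w, show red ([] ++ []) = [] from by decide]
theorem lemA_163 : wact2 (W 2 2) [0, 0, 0, 1, 0, 1] = [0, 0, 0, 0, 0, 0] := by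
  rw [Wsp_2_2, wact2_append, lemA_159, lemA_162]
theorem lemS_163 (w : List (Fin 2)) : wact (stW [0, 0, 0, 1, 0, 1] (W 2 2)) w = wact [] w := by
  rw [Wsp_2_2, stW_append, lemA_159, wact_append_gens, lemS_159, lemS_162, ← wact_append_gens,
    ← red_sound ([] ++ []) w, show red ([] ++ []) = [] from by decide]
theorem lemA_164 : wact2 (Wr 3 2) [0, 0, 0, 0, 0, 1] = [0, 0, 0, 0, 0, 0] := by
  rw [Rsp_3_2, wact2_append, lemA_156, lemA_163]
theorem lemS_164 (w : List (Fin 2)) : wact (stW [0, 0, 0, 0, 0, 1] (Wr 3 2)) w = wact [] w := by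
  rw [Rsp_3_2, stW_append, lemA_156, wact_append_gens, lemS_156, lemS_163, ← wact_append_gens,
    ← red_sound ([] ++ []) w, show red ([] ++ []) = [] from by decide]
theorem lemA_165 : wact2 (Wr 0 3) [0, 0, 0, 0, 0, 0] = [0, 0, 1, 0, 0, 0] := by decide
theorem lemS_165 (w : List (Fin 2)) : wact (stW [0, 0, 0, 0, 0, 0] (Wr 0 3)) w = wact [] w := by
  rw [← red_sound (stW [0, 0, 0, 0, 0, 0] (Wr 0 3)) w, show red (stW [0, 0, 0, 0, 0, 0] (Wr 0 3)) = [] from by decide]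
theorem lemA_166 : wact2 (W 0 2) [0, 0, 1, 0, 0, 0] = [0, 0, 1, 1, 0, 0] := by decide
theorem lemS_166 (w : List (Fin 2)) : wact (stW [0, 0, 1, 0, 0, 0] (W 0 2)) w = wact [] w := by
  rw [← red_sound (stW [0, 0, 1, 0, 0, 0] (W 0 2)) w, show red (stW [0, 0, 1, 0, 0, 0] (W 0 2)) = [] from by decide]
theorem lemA_167 : wact2 (Wr 1 2) [0, 0, 0, 0, 0, 0] = [0, 0, 1, 1, 0, 0] := by
  rw [Rsp_1_2, wact2_append, lemA_165, lemA_166]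
theorem lemS_167 (w : List (Fin 2)) : wact (stW [0, 0, 0, 0, 0, 0] (Wr 1 2)) w = wact [] w := by
  rw [Rsp_1_2, stW_append, lemA_165, wact_append_gens, lemS_165, lemS_166, ← wact_append_gens,
    ← red_sound ([] ++ []) w, show red ([] ++ []) = [] from by decide]
theorem lemA_168 : wact2 (Wr 0 1) [0, 0, 1, 1, 0, 0] = [0, 0, 0, 0, 1, 1] := by decide
theorem lemS_168 (w : List (Fin 2)) : wact (stW [0, 0, 1, 1, 0, 0] (Wr 0 1)) w = wact [] w := by
  rw [← red_sound (stW [0, 0, 1, 1, 0, 0] (Wr 0 1)) w, show red (stW [0, 0, 1, 1, 0, 0] (Wr 0 1)) = [] from by decide]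
theorem lemA_169 : wact2 (W 0 2) [0, 0, 0, 0, 1, 1] = [0, 0, 0, 1, 1, 1] := by decide
theorem lemS_169 (w : List (Fin 2)) : wact (stW [0, 0, 0, 0, 1, 1] (W 0 2)) w = wact [GrigQ.d] w := by
  rw [← red_sound (stW [0, 0, 0, 0, 1, 1] (W 0 2)) w, show red (stW [0, 0, 0, 0, 1, 1] (W 0 2)) = [GrigQ.d] from by decide]
theorem lemA_170 : wact2 (W 1 1) [0, 0, 1, 1, 0, 0] = [0, 0, 0, 1, 1, 1] := by
  rw [Wsp_1_1, wact2_append, lemA_168, lemA_169]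
theorem lemS_170 (w : List (Fin 2)) : wact (stW [0, 0, 1, 1, 0, 0] (W 1 1)) w = wact [GrigQ.d] w := by
  rw [Wsp_1_1, stW_append, lemA_168, wact_append_gens, lemS_168, lemS_169, ← wact_append_gens,
    ← red_sound ([] ++ [GrigQ.d]) w, show red ([] ++ [GrigQ.d]) = [GrigQ.d] from by decide]
theorem lemA_171 : wact2 (Wr 2 1) [0, 0, 0, 0, 0, 0] = [0, 0, 0, 1, 1, 1] := by
  rw [Rsp_2_1, wact2_append, lemA_167, lemA_170]
theorem lemS_171 (w : List (Fin 2)) : wact (stW [0, 0, 0, 0, 0, 0] (Wr 2 1)) w = wact [GrigQ.d] w := by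
  rw [Rsp_2_1, stW_append, lemA_167, wact_append_gens, lemS_167, lemS_170, ← wact_append_gens,
    ← red_sound ([] ++ [GrigQ.d]) w, show red ([] ++ [GrigQ.d]) = [GrigQ.d] from by decide]
theorem lemA_172 : wact2 (Wr 0 3) [0, 0, 0, 1, 1, 1] = [0, 0, 1, 1, 1, 1] := by decide
theorem lemS_172 (w : List (Fin 2)) : wact (stW [0, 0, 0, 1, 1, 1] (Wr 0 3)) w = wact [] w := by
  rw [← red_sound (stW [0, 0, 0, 1, 1, 1] (Wr 0 3)) w, show red (stW [0, 0, 0, 1, 1, 1] (Wr 0 3)) = [] from by decide]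
theorem lemA_173 : wact2 (W 0 2) [0, 0, 1, 1, 1, 1] = [0, 0, 1, 0, 1, 1] := by decide
theorem lemS_173 (w : List (Fin 2)) : wact (stW [0, 0, 1, 1, 1, 1] (W 0 2)) w = wact [GrigQ.d] w := by
  rw [← red_sound (stW [0, 0, 1, 1, 1, 1] (W 0 2)) w, show red (stW [0, 0, 1, 1, 1, 1] (W 0 2)) = [GrigQ.d] from by decide]
theorem lemA_174 : wact2 (Wr 1 2) [0, 0, 0, 1, 1, 1] = [0, 0, 1, 0, 1, 1] := by
  rw [Rsp_1_2, wact2_append, lemA_172, lemA_173]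
theorem lemS_174 (w : List (Fin 2)) : wact (stW [0, 0, 0, 1, 1, 1] (Wr 1 2)) w = wact [GrigQ.d] w := by
  rw [Rsp_1_2, stW_append, lemA_172, wact_append_gens, lemS_172, lemS_173, ← wact_append_gens,
    ← red_sound ([] ++ [GrigQ.d]) w, show red ([] ++ [GrigQ.d]) = [GrigQ.d] from by decide]
theorem lemA_175 : wact2 (Wr 0 3) [0, 0, 1, 0, 1, 1] = [0, 0, 0, 0, 0, 1] := by decide
theorem lemS_175 (w : List (Fin 2)) : wact (stW [0, 0, 1, 0, 1, 1] (Wr 0 3)) w = wact [] w := by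
  rw [← red_sound (stW [0, 0, 1, 0, 1, 1] (Wr 0 3)) w, show red (stW [0, 0, 1, 0, 1, 1] (Wr 0 3)) = [] from by decide]
theorem lemA_176 : wact2 (W 0 0) [0, 0, 0, 0, 0, 1] = [0, 0, 0, 0, 1, 1] := by decide
theorem lemS_176 (w : List (Fin 2)) : wact (stW [0, 0, 0, 0, 0, 1] (W 0 0)) w = wact [] w := by
  rw [← red_sound (stW [0, 0, 0, 0, 0, 1] (W 0 0)) w, show red (stW [0, 0, 0, 0, 0, 1] (W 0 0)) = [] from by decide]
theorem lemA_177 : wact2 (W 1 3) [0, 0, 1, 0, 1, 1] = [0, 0, 0, 0, 1, 1] := by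
  rw [Wsp_1_3, wact2_append, lemA_175, lemA_176]
theorem lemS_177 (w : List (Fin 2)) : wact (stW [0, 0, 1, 0, 1, 1] (W 1 3)) w = wact [] w := by
  rw [Wsp_1_3, stW_append, lemA_175, wact_append_gens, lemS_175, lemS_176, ← wact_append_gens,
    ← red_sound ([] ++ []) w, show red ([] ++ []) = [] from by decide]
theorem lemA_178 : wact2 (W 2 2) [0, 0, 0, 1, 1, 1] = [0, 0, 0, 0, 1, 1] := by
  rw [Wsp_2_2, wact2_append, lemA_174, lemA_177]
theorem lemS_178 (w : List (Fin 2)) : wact (stW [0, 0, 0, 1, 1, 1] (W 2 2)) w = wact [GrigQ.d] w := by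
  rw [Wsp_2_2, stW_append, lemA_174, wact_append_gens, lemS_174, lemS_177, ← wact_append_gens,
    ← red_sound ([GrigQ.d] ++ []) w, show red ([GrigQ.d] ++ []) = [GrigQ.d] from by decide]
theorem lemA_179 : wact2 (W 3 1) [0, 0, 0, 0, 0, 0] = [0, 0, 0, 0, 1, 1] := by
  rw [Wsp_3_1, wact2_append, lemA_171, lemA_178]
theorem lemS_179 (w : List (Fin 2)) : wact (stW [0, 0, 0, 0, 0, 0] (W 3 1)) w = wact [] w := by
  rw [Wsp_3_1, stW_append, lemA_171, wact_append_gens, lemS_171, lemS_178, ← wact_append_gens,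
    ← red_sound ([GrigQ.d] ++ [GrigQ.d]) w, show red ([GrigQ.d] ++ [GrigQ.d]) = [] from by decide]
theorem lemA_180 : wact2 (Wr 4 1) [0, 0, 0, 0, 0, 1] = [0, 0, 0, 0, 1, 1] := by
  rw [Rsp_4_1, wact2_append, lemA_164, lemA_179]
theorem lemS_180 (w : List (Fin 2)) : wact (stW [0, 0, 0, 0, 0, 1] (Wr 4 1)) w = wact [] w := by
  rw [Rsp_4_1, stW_append, lemA_164, wact_append_gens, lemS_164, lemS_179, ← wact_append_gens,
    ← red_sound ([] ++ []) w, show red ([] ++ []) = [] from by decide]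
theorem lemA_181 : wact2 (Wr 0 3) [0, 0, 0, 0, 1, 1] = [0, 0, 1, 0, 1, 1] := by decide
theorem lemS_181 (w : List (Fin 2)) : wact (stW [0, 0, 0, 0, 1, 1] (Wr 0 3)) w = wact [] w := by
  rw [← red_sound (stW [0, 0, 0, 0, 1, 1] (Wr 0 3)) w, show red (stW [0, 0, 0, 0, 1, 1] (Wr 0 3)) = [] from by decide]
theorem lemA_182 : wact2 (W 0 2) [0, 0, 1, 0, 1, 1] = [0, 0, 1, 1, 1, 1] := by decide
theorem lemS_182 (w : List (Fin 2)) : wact (stW [0, 0, 1, 0, 1, 1] (W 0 2)) w = wact [] w := by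
  rw [← red_sound (stW [0, 0, 1, 0, 1, 1] (W 0 2)) w, show red (stW [0, 0, 1, 0, 1, 1] (W 0 2)) = [] from by decide]
theorem lemA_183 : wact2 (Wr 1 2) [0, 0, 0, 0, 1, 1] = [0, 0, 1, 1, 1, 1] := by
  rw [Rsp_1_2, wact2_append, lemA_181, lemA_182]
theorem lemS_183 (w : List (Fin 2)) : wact (stW [0, 0, 0, 0, 1, 1] (Wr 1 2)) w = wact [] w := by
  rw [Rsp_1_2, stW_append, lemA_181, wact_append_gens, lemS_181, lemS_182, ← wact_append_gens,
    ← red_sound ([] ++ []) w, show red ([] ++ []) = [] from by decide]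
theorem lemA_184 : wact2 (Wr 0 1) [0, 0, 1, 1, 1, 1] = [0, 0, 0, 0, 0, 1] := by decide
theorem lemS_184 (w : List (Fin 2)) : wact (stW [0, 0, 1, 1, 1, 1] (Wr 0 1)) w = wact [GrigQ.d] w := by
  rw [← red_sound (stW [0, 0, 1, 1, 1, 1] (Wr 0 1)) w, show red (stW [0, 0, 1, 1, 1, 1] (Wr 0 1)) = [GrigQ.d] from by decide]
theorem lemA_185 : wact2 (W 0 2) [0, 0, 0, 0, 0, 1] = [0, 0, 0, 1, 0, 0] := by decide
theorem lemS_185 (w : List (Fin 2)) : wact (stW [0, 0, 0, 0, 0, 1] (W 0 2)) w = wact [] w := by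
  rw [← red_sound (stW [0, 0, 0, 0, 0, 1] (W 0 2)) w, show red (stW [0, 0, 0, 0, 0, 1] (W 0 2)) = [] from by decide]
theorem lemA_186 : wact2 (W 1 1) [0, 0, 1, 1, 1, 1] = [0, 0, 0, 1, 0, 0] := by
  rw [Wsp_1_1, wact2_append, lemA_184, lemA_185]
theorem lemS_186 (w : List (Fin 2)) : wact (stW [0, 0, 1, 1, 1, 1] (W 1 1)) w = wact [GrigQ.d] w := by
  rw [Wsp_1_1, stW_append, lemA_184, wact_append_gens, lemS_184, lemS_185, ← wact_append_gens,
    ← red_sound ([GrigQ.d] ++ []) w, show red ([GrigQ.d] ++ []) = [GrigQ.d] from by decide]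
theorem lemA_187 : wact2 (Wr 2 1) [0, 0, 0, 0, 1, 1] = [0, 0, 0, 1, 0, 0] := by
  rw [Rsp_2_1, wact2_append, lemA_183, lemA_186]
theorem lemS_187 (w : List (Fin 2)) : wact (stW [0, 0, 0, 0, 1, 1] (Wr 2 1)) w = wact [GrigQ.d] w := by
  rw [Rsp_2_1, stW_append, lemA_183, wact_append_gens, lemS_183, lemS_186, ← wact_append_gens,
    ← red_sound ([] ++ [GrigQ.d]) w, show red ([] ++ [GrigQ.d]) = [GrigQ.d] from by decide]
theorem lemA_188 : wact2 (Wr 0 1) [0, 0, 0, 1, 0, 0] = [0, 0, 1, 0, 0, 0] := by decide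
theorem lemS_188 (w : List (Fin 2)) : wact (stW [0, 0, 0, 1, 0, 0] (Wr 0 1)) w = wact [] w := by
  rw [← red_sound (stW [0, 0, 0, 1, 0, 0] (Wr 0 1)) w, show red (stW [0, 0, 0, 1, 0, 0] (Wr 0 1)) = [] from by decide]
theorem lemA_189 : wact2 (W 0 0) [0, 0, 1, 0, 0, 0] = [0, 0, 1, 0, 1, 0] := by decide
theorem lemS_189 (w : List (Fin 2)) : wact (stW [0, 0, 1, 0, 0, 0] (W 0 0)) w = wact [] w := by
  rw [← red_sound (stW [0, 0, 1, 0, 0, 0] (W 0 0)) w, show red (stW [0, 0, 1, 0, 0, 0] (W 0 0)) = [] from by decide]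
theorem lemA_190 : wact2 (Wr 1 0) [0, 0, 0, 1, 0, 0] = [0, 0, 1, 0, 1, 0] := by
  rw [Rsp_1_0, wact2_append, lemA_188, lemA_189]
theorem lemS_190 (w : List (Fin 2)) : wact (stW [0, 0, 0, 1, 0, 0] (Wr 1 0)) w = wact [] w := by
  rw [Rsp_1_0, stW_append, lemA_188, wact_append_gens, lemS_188, lemS_189, ← wact_append_gens,
    ← red_sound ([] ++ []) w, show red ([] ++ []) = [] from by decide]
theorem lemA_191 : wact2 (Wr 0 1) [0, 0, 1, 0, 1, 0] = [0, 0, 0, 1, 1, 0] := by decide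
theorem lemS_191 (w : List (Fin 2)) : wact (stW [0, 0, 1, 0, 1, 0] (Wr 0 1)) w = wact [] w := by
  rw [← red_sound (stW [0, 0, 1, 0, 1, 0] (Wr 0 1)) w, show red (stW [0, 0, 1, 0, 1, 0] (Wr 0 1)) = [] from by decide]
theorem lemA_192 : wact2 (W 0 2) [0, 0, 0, 1, 1, 0] = [0, 0, 0, 0, 1, 0] := by decide
theorem lemS_192 (w : List (Fin 2)) : wact (stW [0, 0, 0, 1, 1, 0] (W 0 2)) w = wact [] w := by
  rw [← red_sound (stW [0, 0, 0, 1, 1, 0] (W 0 2)) w, show red (stW [0, 0, 0, 1, 1, 0] (W 0 2)) = [] from by decide]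
theorem lemA_193 : wact2 (W 1 1) [0, 0, 1, 0, 1, 0] = [0, 0, 0, 0, 1, 0] := by
  rw [Wsp_1_1, wact2_append, lemA_191, lemA_192]
theorem lemS_193 (w : List (Fin 2)) : wact (stW [0, 0, 1, 0, 1, 0] (W 1 1)) w = wact [] w := by
  rw [Wsp_1_1, stW_append, lemA_191, wact_append_gens, lemS_191, lemS_192, ← wact_append_gens,
    ← red_sound ([] ++ []) w, show red ([] ++ []) = [] from by decide]
theorem lemA_194 : wact2 (W 2 0) [0, 0, 0, 1, 0, 0] = [0, 0, 0, 0, 1, 0] := by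
  rw [Wsp_2_0, wact2_append, lemA_190, lemA_193]
theorem lemS_194 (w : List (Fin 2)) : wact (stW [0, 0, 0, 1, 0, 0] (W 2 0)) w = wact [] w := by
  rw [Wsp_2_0, stW_append, lemA_190, wact_append_gens, lemS_190, lemS_193, ← wact_append_gens,
    ← red_sound ([] ++ []) w, show red ([] ++ []) = [] from by decide]
theorem lemA_195 : wact2 (Wr 3 0) [0, 0, 0, 0, 1, 1] = [0, 0, 0, 0, 1, 0] := by
  rw [Rsp_3_0, wact2_append, lemA_187, lemA_194]
theorem lemS_195 (w : List (Fin 2)) : wact (stW [0, 0, 0, 0, 1, 1] (Wr 3 0)) w = wact [GrigQ.d] w := by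
  rw [Rsp_3_0, stW_append, lemA_187, wact_append_gens, lemS_187, lemS_194, ← wact_append_gens,
    ← red_sound ([GrigQ.d] ++ []) w, show red ([GrigQ.d] ++ []) = [GrigQ.d] from by decide]
theorem lemA_196 : wact2 (Wr 0 3) [0, 0, 0, 0, 1, 0] = [0, 0, 1, 0, 1, 0] := by decide
theorem lemS_196 (w : List (Fin 2)) : wact (stW [0, 0, 0, 0, 1, 0] (Wr 0 3)) w = wact [] w := by
  rw [← red_sound (stW [0, 0, 0, 0, 1, 0] (Wr 0 3)) w, show red (stW [0, 0, 0, 0, 1, 0] (Wr 0 3)) = [] from by decide]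
theorem lemA_197 : wact2 (W 0 2) [0, 0, 1, 0, 1, 0] = [0, 0, 1, 1, 1, 0] := by decide
theorem lemS_197 (w : List (Fin 2)) : wact (stW [0, 0, 1, 0, 1, 0] (W 0 2)) w = wact [] w := by
  rw [← red_sound (stW [0, 0, 1, 0, 1, 0] (W 0 2)) w, show red (stW [0, 0, 1, 0, 1, 0] (W 0 2)) = [] from by decide]
theorem lemA_198 : wact2 (Wr 1 2) [0, 0, 0, 0, 1, 0] = [0, 0, 1, 1, 1, 0] := by
  rw [Rsp_1_2, wact2_append, lemA_196, lemA_197]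
theorem lemS_198 (w : List (Fin 2)) : wact (stW [0, 0, 0, 0, 1, 0] (Wr 1 2)) w = wact [] w := by
  rw [Rsp_1_2, stW_append, lemA_196, wact_append_gens, lemS_196, lemS_197, ← wact_append_gens,
    ← red_sound ([] ++ []) w, show red ([] ++ []) = [] from by decide]
theorem lemA_199 : wact2 (Wr 0 1) [0, 0, 1, 1, 1, 0] = [0, 0, 0, 0, 0, 0] := by decide
theorem lemS_199 (w : List (Fin 2)) : wact (stW [0, 0, 1, 1, 1, 0] (Wr 0 1)) w = wact [GrigQ.a] w := by
  rw [← red_sound (stW [0, 0, 1, 1, 1, 0] (Wr 0 1)) w, show red (stW [0, 0, 1, 1, 1, 0] (Wr 0 1)) = [GrigQ.a] from by decide]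
theorem lemA_200 : wact2 (W 0 2) [0, 0, 0, 0, 0, 0] = [0, 0, 0, 1, 0, 1] := by decide
theorem lemS_200 (w : List (Fin 2)) : wact (stW [0, 0, 0, 0, 0, 0] (W 0 2)) w = wact [] w := by
  rw [← red_sound (stW [0, 0, 0, 0, 0, 0] (W 0 2)) w, show red (stW [0, 0, 0, 0, 0, 0] (W 0 2)) = [] from by decide]
theorem lemA_201 : wact2 (W 1 1) [0, 0, 1, 1, 1, 0] = [0, 0, 0, 1, 0, 1] := by
  rw [Wsp_1_1, wact2_append, lemA_199, lemA_200]
theorem lemS_201 (w : List (Fin 2)) : wact (stW [0, 0, 1, 1, 1, 0] (W 1 1)) w = wact [GrigQ.a] w := by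
  rw [Wsp_1_1, stW_append, lemA_199, wact_append_gens, lemS_199, lemS_200, ← wact_append_gens,
    ← red_sound ([GrigQ.a] ++ []) w, show red ([GrigQ.a] ++ []) = [GrigQ.a] from by decide]
theorem lemA_202 : wact2 (Wr 2 1) [0, 0, 0, 0, 1, 0] = [0, 0, 0, 1, 0, 1] := by
  rw [Rsp_2_1, wact2_append, lemA_198, lemA_201]
theorem lemS_202 (w : List (Fin 2)) : wact (stW [0, 0, 0, 0, 1, 0] (Wr 2 1)) w = wact [GrigQ.a] w := by
  rw [Rsp_2_1, stW_append, lemA_198, wact_append_gens, lemS_198, lemS_201, ← wact_append_gens,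
    ← red_sound ([] ++ [GrigQ.a]) w, show red ([] ++ [GrigQ.a]) = [GrigQ.a] from by decide]
theorem lemA_203 : wact2 (W 3 1) [0, 0, 0, 0, 1, 0] = [0, 0, 0, 0, 0, 0] := by
  rw [Wsp_3_1, wact2_append, lemA_202, lemA_163]
theorem lemS_203 (w : List (Fin 2)) : wact (stW [0, 0, 0, 0, 1, 0] (W 3 1)) w = wact [GrigQ.a] w := by
  rw [Wsp_3_1, stW_append, lemA_202, wact_append_gens, lemS_202, lemS_163, ← wact_append_gens,
    ← red_sound ([GrigQ.a] ++ []) w, show red ([GrigQ.a] ++ []) = [GrigQ.a] from by decide]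
theorem lemA_204 : wact2 (W 4 0) [0, 0, 0, 0, 1, 1] = [0, 0, 0, 0, 0, 0] := by
  rw [Wsp_4_0, wact2_append, lemA_195, lemA_203]
theorem lemS_204 (w : List (Fin 2)) : wact (stW [0, 0, 0, 0, 1, 1] (W 4 0)) w = wact [GrigQ.d, GrigQ.a] w := by
  rw [Wsp_4_0, stW_append, lemA_195, wact_append_gens, lemS_195, lemS_203, ← wact_append_gens,
    ← red_sound ([GrigQ.d] ++ [GrigQ.a]) w, show red ([GrigQ.d] ++ [GrigQ.a]) = [GrigQ.d, GrigQ.a] from by decide]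
theorem lemA_205 : wact2 (Wr 5 0) [0, 0, 0, 0, 0, 1] = [0, 0, 0, 0, 0, 0] := by
  rw [Rsp_5_0, wact2_append, lemA_180, lemA_204]
theorem lemS_205 (w : List (Fin 2)) : wact (stW [0, 0, 0, 0, 0, 1] (Wr 5 0)) w = wact [GrigQ.d, GrigQ.a] w := by
  rw [Rsp_5_0, stW_append, lemA_180, wact_append_gens, lemS_180, lemS_204, ← wact_append_gens,
    ← red_sound ([] ++ [GrigQ.d, GrigQ.a]) w, show red ([] ++ [GrigQ.d, GrigQ.a]) = [GrigQ.d, GrigQ.a] from by decide]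
theorem lemA_206 : wact2 (Wr 0 1) [0, 0, 0, 1, 1, 1] = [0, 0, 1, 0, 1, 1] := by decide
theorem lemS_206 (w : List (Fin 2)) : wact (stW [0, 0, 0, 1, 1, 1] (Wr 0 1)) w = wact [] w := by
  rw [← red_sound (stW [0, 0, 0, 1, 1, 1] (Wr 0 1)) w, show red (stW [0, 0, 0, 1, 1, 1] (Wr 0 1)) = [] from by decide]
theorem lemA_207 : wact2 (W 0 0) [0, 0, 1, 0, 1, 1] = [0, 0, 1, 0, 0, 1] := by decide
theorem lemS_207 (w : List (Fin 2)) : wact (stW [0, 0, 1, 0, 1, 1] (W 0 0)) w = wact [] w := by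
  rw [← red_sound (stW [0, 0, 1, 0, 1, 1] (W 0 0)) w, show red (stW [0, 0, 1, 0, 1, 1] (W 0 0)) = [] from by decide]
theorem lemA_208 : wact2 (Wr 1 0) [0, 0, 0, 1, 1, 1] = [0, 0, 1, 0, 0, 1] := by
  rw [Rsp_1_0, wact2_append, lemA_206, lemA_207]
theorem lemS_208 (w : List (Fin 2)) : wact (stW [0, 0, 0, 1, 1, 1] (Wr 1 0)) w = wact [] w := by
  rw [Rsp_1_0, stW_append, lemA_206, wact_append_gens, lemS_206, lemS_207, ← wact_append_gens,
    ← red_sound ([] ++ []) w, show red ([] ++ []) = [] from by decide]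
theorem lemA_209 : wact2 (Wr 0 1) [0, 0, 1, 0, 0, 1] = [0, 0, 0, 1, 0, 0] := by decide
theorem lemS_209 (w : List (Fin 2)) : wact (stW [0, 0, 1, 0, 0, 1] (Wr 0 1)) w = wact [] w := by
  rw [← red_sound (stW [0, 0, 1, 0, 0, 1] (Wr 0 1)) w, show red (stW [0, 0, 1, 0, 0, 1] (Wr 0 1)) = [] from by decide]
theorem lemA_210 : wact2 (W 0 2) [0, 0, 0, 1, 0, 0] = [0, 0, 0, 0, 0, 0] := by decide
theorem lemS_210 (w : List (Fin 2)) : wact (stW [0, 0, 0, 1, 0, 0] (W 0 2)) w = wact [] w := by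
  rw [← red_sound (stW [0, 0, 0, 1, 0, 0] (W 0 2)) w, show red (stW [0, 0, 0, 1, 0, 0] (W 0 2)) = [] from by decide]
theorem lemA_211 : wact2 (W 1 1) [0, 0, 1, 0, 0, 1] = [0, 0, 0, 0, 0, 0] := by
  rw [Wsp_1_1, wact2_append, lemA_209, lemA_210]
theorem lemS_211 (w : List (Fin 2)) : wact (stW [0, 0, 1, 0, 0, 1] (W 1 1)) w = wact [] w := by
  rw [Wsp_1_1, stW_append, lemA_209, wact_append_gens, lemS_209, lemS_210, ← wact_append_gens,
    ← red_sound ([] ++ []) w, show red ([] ++ []) = [] from by decide]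
theorem lemA_212 : wact2 (W 2 0) [0, 0, 0, 1, 1, 1] = [0, 0, 0, 0, 0, 0] := by
  rw [Wsp_2_0, wact2_append, lemA_208, lemA_211]
theorem lemS_212 (w : List (Fin 2)) : wact (stW [0, 0, 0, 1, 1, 1] (W 2 0)) w = wact [] w := by
  rw [Wsp_2_0, stW_append, lemA_208, wact_append_gens, lemS_208, lemS_211, ← wact_append_gens,
    ← red_sound ([] ++ []) w, show red ([] ++ []) = [] from by decide]
theorem lemA_213 : wact2 (Wr 3 0) [0, 0, 0, 0, 0, 0] = [0, 0, 0, 0, 0, 0] := by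
  rw [Rsp_3_0, wact2_append, lemA_171, lemA_212]
theorem lemS_213 (w : List (Fin 2)) : wact (stW [0, 0, 0, 0, 0, 0] (Wr 3 0)) w = wact [GrigQ.d] w := by
  rw [Rsp_3_0, stW_append, lemA_171, wact_append_gens, lemS_171, lemS_212, ← wact_append_gens,
    ← red_sound ([GrigQ.d] ++ []) w, show red ([GrigQ.d] ++ []) = [GrigQ.d] from by decide]
theorem lemA_214 : wact2 (Wr 0 1) [0, 0, 0, 0, 0, 0] = [0, 0, 1, 1, 0, 1] := by decide
theorem lemS_214 (w : List (Fin 2)) : wact (stW [0, 0, 0, 0, 0, 0] (Wr 0 1)) w = wact [] w := by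
  rw [← red_sound (stW [0, 0, 0, 0, 0, 0] (Wr 0 1)) w, show red (stW [0, 0, 0, 0, 0, 0] (Wr 0 1)) = [] from by decide]
theorem lemA_215 : wact2 (W 0 0) [0, 0, 1, 1, 0, 1] = [0, 0, 1, 1, 0, 0] := by decide
theorem lemS_215 (w : List (Fin 2)) : wact (stW [0, 0, 1, 1, 0, 1] (W 0 0)) w = wact [] w := by
  rw [← red_sound (stW [0, 0, 1, 1, 0, 1] (W 0 0)) w, show red (stW [0, 0, 1, 1, 0, 1] (W 0 0)) = [] from by decide]
theorem lemA_216 : wact2 (Wr 1 0) [0, 0, 0, 0, 0, 0] = [0, 0, 1, 1, 0, 0] := by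
  rw [Rsp_1_0, wact2_append, lemA_214, lemA_215]
theorem lemS_216 (w : List (Fin 2)) : wact (stW [0, 0, 0, 0, 0, 0] (Wr 1 0)) w = wact [] w := by
  rw [Rsp_1_0, stW_append, lemA_214, wact_append_gens, lemS_214, lemS_215, ← wact_append_gens,
    ← red_sound ([] ++ []) w, show red ([] ++ []) = [] from by decide]
theorem lemA_217 : wact2 (Wr 0 3) [0, 0, 1, 1, 0, 0] = [0, 0, 0, 1, 0, 1] := by decide
theorem lemS_217 (w : List (Fin 2)) : wact (stW [0, 0, 1, 1, 0, 0] (Wr 0 3)) w = wact [] w := by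
  rw [← red_sound (stW [0, 0, 1, 1, 0, 0] (Wr 0 3)) w, show red (stW [0, 0, 1, 1, 0, 0] (Wr 0 3)) = [] from by decide]
theorem lemA_218 : wact2 (W 0 0) [0, 0, 0, 1, 0, 1] = [0, 0, 0, 1, 0, 0] := by decide
theorem lemS_218 (w : List (Fin 2)) : wact (stW [0, 0, 0, 1, 0, 1] (W 0 0)) w = wact [] w := by
  rw [← red_sound (stW [0, 0, 0, 1, 0, 1] (W 0 0)) w, show red (stW [0, 0, 0, 1, 0, 1] (W 0 0)) = [] from by decide]
theorem lemA_219 : wact2 (W 1 3) [0, 0, 1, 1, 0, 0] = [0, 0, 0, 1, 0, 0] := by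
  rw [Wsp_1_3, wact2_append, lemA_217, lemA_218]
theorem lemS_219 (w : List (Fin 2)) : wact (stW [0, 0, 1, 1, 0, 0] (W 1 3)) w = wact [] w := by
  rw [Wsp_1_3, stW_append, lemA_217, wact_append_gens, lemS_217, lemS_218, ← wact_append_gens,
    ← red_sound ([] ++ []) w, show red ([] ++ []) = [] from by decide]
theorem lemA_220 : wact2 (Wr 2 3) [0, 0, 0, 0, 0, 0] = [0, 0, 0, 1, 0, 0] := by
  rw [Rsp_2_3, wact2_append, lemA_216, lemA_219]
theorem lemS_220 (w : List (Fin 2)) : wact (stW [0, 0, 0, 0, 0, 0] (Wr 2 3)) w = wact [] w := by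
  rw [Rsp_2_3, stW_append, lemA_216, wact_append_gens, lemS_216, lemS_219, ← wact_append_gens,
    ← red_sound ([] ++ []) w, show red ([] ++ []) = [] from by decide]
theorem lemA_221 : wact2 (W 3 3) [0, 0, 0, 0, 0, 0] = [0, 0, 0, 0, 1, 0] := by
  rw [Wsp_3_3, wact2_append, lemA_220, lemA_194]
theorem lemS_221 (w : List (Fin 2)) : wact (stW [0, 0, 0, 0, 0, 0] (W 3 3)) w = wact [] w := by
  rw [Wsp_3_3, stW_append, lemA_220, wact_append_gens, lemS_220, lemS_194, ← wact_append_gens,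
    ← red_sound ([] ++ []) w, show red ([] ++ []) = [] from by decide]
theorem lemA_222 : wact2 (Wr 4 3) [0, 0, 0, 0, 0, 0] = [0, 0, 0, 0, 1, 0] := by
  rw [Rsp_4_3, wact2_append, lemA_213, lemA_221]
theorem lemS_222 (w : List (Fin 2)) : wact (stW [0, 0, 0, 0, 0, 0] (Wr 4 3)) w = wact [GrigQ.d] w := by
  rw [Rsp_4_3, stW_append, lemA_213, wact_append_gens, lemS_213, lemS_221, ← wact_append_gens,
    ← red_sound ([GrigQ.d] ++ []) w, show red ([GrigQ.d] ++ []) = [GrigQ.d] from by decide]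
theorem lemA_223 : wact2 (Wr 0 1) [0, 0, 0, 1, 0, 1] = [0, 0, 1, 0, 0, 1] := by decide
theorem lemS_223 (w : List (Fin 2)) : wact (stW [0, 0, 0, 1, 0, 1] (Wr 0 1)) w = wact [] w := by
  rw [← red_sound (stW [0, 0, 0, 1, 0, 1] (Wr 0 1)) w, show red (stW [0, 0, 0, 1, 0, 1] (Wr 0 1)) = [] from by decide]
theorem lemA_224 : wact2 (W 0 0) [0, 0, 1, 0, 0, 1] = [0, 0, 1, 0, 1, 1] := by decide
theorem lemS_224 (w : List (Fin 2)) : wact (stW [0, 0, 1, 0, 0, 1] (W 0 0)) w = wact [] w := by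
  rw [← red_sound (stW [0, 0, 1, 0, 0, 1] (W 0 0)) w, show red (stW [0, 0, 1, 0, 0, 1] (W 0 0)) = [] from by decide]
theorem lemA_225 : wact2 (Wr 1 0) [0, 0, 0, 1, 0, 1] = [0, 0, 1, 0, 1, 1] := by
  rw [Rsp_1_0, wact2_append, lemA_223, lemA_224]
theorem lemS_225 (w : List (Fin 2)) : wact (stW [0, 0, 0, 1, 0, 1] (Wr 1 0)) w = wact [] w := by
  rw [Rsp_1_0, stW_append, lemA_223, wact_append_gens, lemS_223, lemS_224, ← wact_append_gens,
    ← red_sound ([] ++ []) w, show red ([] ++ []) = [] from by decide]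
theorem lemA_226 : wact2 (Wr 0 1) [0, 0, 1, 0, 1, 1] = [0, 0, 0, 1, 1, 1] := by decide
theorem lemS_226 (w : List (Fin 2)) : wact (stW [0, 0, 1, 0, 1, 1] (Wr 0 1)) w = wact [GrigQ.b] w := by
  rw [← red_sound (stW [0, 0, 1, 0, 1, 1] (Wr 0 1)) w, show red (stW [0, 0, 1, 0, 1, 1] (Wr 0 1)) = [GrigQ.b] from by decide]
theorem lemA_227 : wact2 (W 0 2) [0, 0, 0, 1, 1, 1] = [0, 0, 0, 0, 1, 1] := by decide
theorem lemS_227 (w : List (Fin 2)) : wact (stW [0, 0, 0, 1, 1, 1] (W 0 2)) w = wact [] w := by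
  rw [← red_sound (stW [0, 0, 0, 1, 1, 1] (W 0 2)) w, show red (stW [0, 0, 0, 1, 1, 1] (W 0 2)) = [] from by decide]
theorem lemA_228 : wact2 (W 1 1) [0, 0, 1, 0, 1, 1] = [0, 0, 0, 0, 1, 1] := by
  rw [Wsp_1_1, wact2_append, lemA_226, lemA_227]
theorem lemS_228 (w : List (Fin 2)) : wact (stW [0, 0, 1, 0, 1, 1] (W 1 1)) w = wact [GrigQ.b] w := by
  rw [Wsp_1_1, stW_append, lemA_226, wact_append_gens, lemS_226, lemS_227, ← wact_append_gens,
    ← red_sound ([GrigQ.b] ++ []) w, show red ([GrigQ.b] ++ []) = [GrigQ.b] from by decide]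
theorem lemA_229 : wact2 (W 2 0) [0, 0, 0, 1, 0, 1] = [0, 0, 0, 0, 1, 1] := by
  rw [Wsp_2_0, wact2_append, lemA_225, lemA_228]
theorem lemS_229 (w : List (Fin 2)) : wact (stW [0, 0, 0, 1, 0, 1] (W 2 0)) w = wact [GrigQ.b] w := by
  rw [Wsp_2_0, stW_append, lemA_225, wact_append_gens, lemS_225, lemS_228, ← wact_append_gens,
    ← red_sound ([] ++ [GrigQ.b]) w, show red ([] ++ [GrigQ.b]) = [GrigQ.b] from by decide]
theorem lemA_230 : wact2 (Wr 3 0) [0, 0, 0, 0, 1, 0] = [0, 0, 0, 0, 1, 1] := by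
  rw [Rsp_3_0, wact2_append, lemA_202, lemA_229]
theorem lemS_230 (w : List (Fin 2)) : wact (stW [0, 0, 0, 0, 1, 0] (Wr 3 0)) w = wact [GrigQ.a, GrigQ.b] w := by
  rw [Rsp_3_0, stW_append, lemA_202, wact_append_gens, lemS_202, lemS_229, ← wact_append_gens,
    ← red_sound ([GrigQ.a] ++ [GrigQ.b]) w, show red ([GrigQ.a] ++ [GrigQ.b]) = [GrigQ.a, GrigQ.b] from by decide]
theorem lemA_231 : wact2 (Wr 0 3) [0, 0, 0, 1, 0, 0] = [0, 0, 1, 1, 0, 0] := by decide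
theorem lemS_231 (w : List (Fin 2)) : wact (stW [0, 0, 0, 1, 0, 0] (Wr 0 3)) w = wact [] w := by
  rw [← red_sound (stW [0, 0, 0, 1, 0, 0] (Wr 0 3)) w, show red (stW [0, 0, 0, 1, 0, 0] (Wr 0 3)) = [] from by decide]
theorem lemA_232 : wact2 (W 0 2) [0, 0, 1, 1, 0, 0] = [0, 0, 1, 0, 0, 1] := by decide
theorem lemS_232 (w : List (Fin 2)) : wact (stW [0, 0, 1, 1, 0, 0] (W 0 2)) w = wact [] w := by
  rw [← red_sound (stW [0, 0, 1, 1, 0, 0] (W 0 2)) w, show red (stW [0, 0, 1, 1, 0, 0] (W 0 2)) = [] from by decide]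
theorem lemA_233 : wact2 (Wr 1 2) [0, 0, 0, 1, 0, 0] = [0, 0, 1, 0, 0, 1] := by
  rw [Rsp_1_2, wact2_append, lemA_231, lemA_232]
theorem lemS_233 (w : List (Fin 2)) : wact (stW [0, 0, 0, 1, 0, 0] (Wr 1 2)) w = wact [] w := by
  rw [Rsp_1_2, stW_append, lemA_231, wact_append_gens, lemS_231, lemS_232, ← wact_append_gens,
    ← red_sound ([] ++ []) w, show red ([] ++ []) = [] from by decide]
theorem lemA_234 : wact2 (Wr 0 3) [0, 0, 1, 0, 0, 1] = [0, 0, 0, 0, 1, 1] := by decide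
theorem lemS_234 (w : List (Fin 2)) : wact (stW [0, 0, 1, 0, 0, 1] (Wr 0 3)) w = wact [] w := by
  rw [← red_sound (stW [0, 0, 1, 0, 0, 1] (Wr 0 3)) w, show red (stW [0, 0, 1, 0, 0, 1] (Wr 0 3)) = [] from by decide]
theorem lemA_235 : wact2 (W 0 0) [0, 0, 0, 0, 1, 1] = [0, 0, 0, 0, 0, 1] := by decide
theorem lemS_235 (w : List (Fin 2)) : wact (stW [0, 0, 0, 0, 1, 1] (W 0 0)) w = wact [] w := by
  rw [← red_sound (stW [0, 0, 0, 0, 1, 1] (W 0 0)) w, show red (stW [0, 0, 0, 0, 1, 1] (W 0 0)) = [] from by decide]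
theorem lemA_236 : wact2 (W 1 3) [0, 0, 1, 0, 0, 1] = [0, 0, 0, 0, 0, 1] := by
  rw [Wsp_1_3, wact2_append, lemA_234, lemA_235]
theorem lemS_236 (w : List (Fin 2)) : wact (stW [0, 0, 1, 0, 0, 1] (W 1 3)) w = wact [] w := by
  rw [Wsp_1_3, stW_append, lemA_234, wact_append_gens, lemS_234, lemS_235, ← wact_append_gens,
    ← red_sound ([] ++ []) w, show red ([] ++ []) = [] from by decide]
theorem lemA_237 : wact2 (W 2 2) [0, 0, 0, 1, 0, 0] = [0, 0, 0, 0, 0, 1] := by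
  rw [Wsp_2_2, wact2_append, lemA_233, lemA_236]
theorem lemS_237 (w : List (Fin 2)) : wact (stW [0, 0, 0, 1, 0, 0] (W 2 2)) w = wact [] w := by
  rw [Wsp_2_2, stW_append, lemA_233, wact_append_gens, lemS_233, lemS_236, ← wact_append_gens,
    ← red_sound ([] ++ []) w, show red ([] ++ []) = [] from by decide]
theorem lemA_238 : wact2 (W 3 1) [0, 0, 0, 0, 1, 1] = [0, 0, 0, 0, 0, 1] := by
  rw [Wsp_3_1, wact2_append, lemA_187, lemA_237]
theorem lemS_238 (w : List (Fin 2)) : wact (stW [0, 0, 0, 0, 1, 1] (W 3 1)) w = wact [GrigQ.d] w := by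
  rw [Wsp_3_1, stW_append, lemA_187, wact_append_gens, lemS_187, lemS_237, ← wact_append_gens,
    ← red_sound ([GrigQ.d] ++ []) w, show red ([GrigQ.d] ++ []) = [GrigQ.d] from by decide]
theorem lemA_239 : wact2 (W 4 0) [0, 0, 0, 0, 1, 0] = [0, 0, 0, 0, 0, 1] := by
  rw [Wsp_4_0, wact2_append, lemA_230, lemA_238]
theorem lemS_239 (w : List (Fin 2)) : wact (stW [0, 0, 0, 0, 1, 0] (W 4 0)) w = wact [GrigQ.a, GrigQ.c] w := by
  rw [Wsp_4_0, stW_append, lemA_230, wact_append_gens, lemS_230, lemS_238, ← wact_append_gens,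
    ← red_sound ([GrigQ.a, GrigQ.b] ++ [GrigQ.d]) w, show red ([GrigQ.a, GrigQ.b] ++ [GrigQ.d]) = [GrigQ.a, GrigQ.c] from by decide]
theorem lemA_240 : wact2 (W 5 3) [0, 0, 0, 0, 0, 0] = [0, 0, 0, 0, 0, 1] := by
  rw [Wsp_5_3, wact2_append, lemA_222, lemA_239]
theorem lemS_240 (w : List (Fin 2)) : wact (stW [0, 0, 0, 0, 0, 0] (W 5 3)) w = wact [GrigQ.d, GrigQ.a, GrigQ.c] w := by
  rw [Wsp_5_3, stW_append, lemA_222, wact_append_gens, lemS_222, lemS_239, ← wact_append_gens,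
    ← red_sound ([GrigQ.d] ++ [GrigQ.a, GrigQ.c]) w, show red ([GrigQ.d] ++ [GrigQ.a, GrigQ.c]) = [GrigQ.d, GrigQ.a, GrigQ.c] from by decide]
theorem lemA_241 : wact2 (Wr 6 3) [0, 0, 0, 0, 0, 1] = [0, 0, 0, 0, 0, 1] := by
  rw [Rsp_6_3, wact2_append, lemA_205, lemA_240]
theorem lemS_241 (w : List (Fin 2)) : wact (stW [0, 0, 0, 0, 0, 1] (Wr 6 3)) w = wact [GrigQ.d, GrigQ.a, GrigQ.d, GrigQ.a, GrigQ.c] w := by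
  rw [Rsp_6_3, stW_append, lemA_205, wact_append_gens, lemS_205, lemS_240, ← wact_append_gens,
    ← red_sound ([GrigQ.d, GrigQ.a] ++ [GrigQ.d, GrigQ.a, GrigQ.c]) w, show red ([GrigQ.d, GrigQ.a] ++ [GrigQ.d, GrigQ.a, GrigQ.c]) = [GrigQ.d, GrigQ.a, GrigQ.d, GrigQ.a, GrigQ.c] from by decide]
theorem lemA_242 : wact2 (Wr 0 3) [0, 0, 0, 0, 0, 1] = [0, 0, 1, 0, 0, 1] := by decide
theorem lemS_242 (w : List (Fin 2)) : wact (stW [0, 0, 0, 0, 0, 1] (Wr 0 3)) w = wact [] w := by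
  rw [← red_sound (stW [0, 0, 0, 0, 0, 1] (Wr 0 3)) w, show red (stW [0, 0, 0, 0, 0, 1] (Wr 0 3)) = [] from by decide]
theorem lemA_243 : wact2 (W 0 2) [0, 0, 1, 0, 0, 1] = [0, 0, 1, 1, 0, 1] := by decide
theorem lemS_243 (w : List (Fin 2)) : wact (stW [0, 0, 1, 0, 0, 1] (W 0 2)) w = wact [] w := by
  rw [← red_sound (stW [0, 0, 1, 0, 0, 1] (W 0 2)) w, show red (stW [0, 0, 1, 0, 0, 1] (W 0 2)) = [] from by decide]
theorem lemA_244 : wact2 (Wr 1 2) [0, 0, 0, 0, 0, 1] = [0, 0, 1, 1, 0, 1] := by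
  rw [Rsp_1_2, wact2_append, lemA_242, lemA_243]
theorem lemS_244 (w : List (Fin 2)) : wact (stW [0, 0, 0, 0, 0, 1] (Wr 1 2)) w = wact [] w := by
  rw [Rsp_1_2, stW_append, lemA_242, wact_append_gens, lemS_242, lemS_243, ← wact_append_gens,
    ← red_sound ([] ++ []) w, show red ([] ++ []) = [] from by decide]
theorem lemA_245 : wact2 (Wr 0 1) [0, 0, 1, 1, 0, 1] = [0, 0, 0, 0, 1, 0] := by decide
theorem lemS_245 (w : List (Fin 2)) : wact (stW [0, 0, 1, 1, 0, 1] (Wr 0 1)) w = wact [] w := by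
  rw [← red_sound (stW [0, 0, 1, 1, 0, 1] (Wr 0 1)) w, show red (stW [0, 0, 1, 1, 0, 1] (Wr 0 1)) = [] from by decide]
theorem lemA_246 : wact2 (W 0 2) [0, 0, 0, 0, 1, 0] = [0, 0, 0, 1, 1, 0] := by decide
theorem lemS_246 (w : List (Fin 2)) : wact (stW [0, 0, 0, 0, 1, 0] (W 0 2)) w = wact [GrigQ.a] w := by
  rw [← red_sound (stW [0, 0, 0, 0, 1, 0] (W 0 2)) w, show red (stW [0, 0, 0, 0, 1, 0] (W 0 2)) = [GrigQ.a] from by decide]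
theorem lemA_247 : wact2 (W 1 1) [0, 0, 1, 1, 0, 1] = [0, 0, 0, 1, 1, 0] := by
  rw [Wsp_1_1, wact2_append, lemA_245, lemA_246]
theorem lemS_247 (w : List (Fin 2)) : wact (stW [0, 0, 1, 1, 0, 1] (W 1 1)) w = wact [GrigQ.a] w := by
  rw [Wsp_1_1, stW_append, lemA_245, wact_append_gens, lemS_245, lemS_246, ← wact_append_gens,
    ← red_sound ([] ++ [GrigQ.a]) w, show red ([] ++ [GrigQ.a]) = [GrigQ.a] from by decide]
theorem lemA_248 : wact2 (Wr 2 1) [0, 0, 0, 0, 0, 1] = [0, 0, 0, 1, 1, 0] := by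
  rw [Rsp_2_1, wact2_append, lemA_244, lemA_247]
theorem lemS_248 (w : List (Fin 2)) : wact (stW [0, 0, 0, 0, 0, 1] (Wr 2 1)) w = wact [GrigQ.a] w := by
  rw [Rsp_2_1, stW_append, lemA_244, wact_append_gens, lemS_244, lemS_247, ← wact_append_gens,
    ← red_sound ([] ++ [GrigQ.a]) w, show red ([] ++ [GrigQ.a]) = [GrigQ.a] from by decide]
theorem lemA_249 : wact2 (Wr 0 1) [0, 0, 0, 1, 1, 0] = [0, 0, 1, 0, 1, 0] := by decide
theorem lemS_249 (w : List (Fin 2)) : wact (stW [0, 0, 0, 1, 1, 0] (Wr 0 1)) w = wact [] w := by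
  rw [← red_sound (stW [0, 0, 0, 1, 1, 0] (Wr 0 1)) w, show red (stW [0, 0, 0, 1, 1, 0] (Wr 0 1)) = [] from by decide]
theorem lemA_250 : wact2 (W 0 0) [0, 0, 1, 0, 1, 0] = [0, 0, 1, 0, 0, 0] := by decide
theorem lemS_250 (w : List (Fin 2)) : wact (stW [0, 0, 1, 0, 1, 0] (W 0 0)) w = wact [] w := by
  rw [← red_sound (stW [0, 0, 1, 0, 1, 0] (W 0 0)) w, show red (stW [0, 0, 1, 0, 1, 0] (W 0 0)) = [] from by decide]
theorem lemA_251 : wact2 (Wr 1 0) [0, 0, 0, 1, 1, 0] = [0, 0, 1, 0, 0, 0] := by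
  rw [Rsp_1_0, wact2_append, lemA_249, lemA_250]
theorem lemS_251 (w : List (Fin 2)) : wact (stW [0, 0, 0, 1, 1, 0] (Wr 1 0)) w = wact [] w := by
  rw [Rsp_1_0, stW_append, lemA_249, wact_append_gens, lemS_249, lemS_250, ← wact_append_gens,
    ← red_sound ([] ++ []) w, show red ([] ++ []) = [] from by decide]
theorem lemA_252 : wact2 (Wr 0 1) [0, 0, 1, 0, 0, 0] = [0, 0, 0, 1, 0, 1] := by decide
theorem lemS_252 (w : List (Fin 2)) : wact (stW [0, 0, 1, 0, 0, 0] (Wr 0 1)) w = wact [] w := by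
  rw [← red_sound (stW [0, 0, 1, 0, 0, 0] (Wr 0 1)) w, show red (stW [0, 0, 1, 0, 0, 0] (Wr 0 1)) = [] from by decide]
theorem lemA_253 : wact2 (W 0 2) [0, 0, 0, 1, 0, 1] = [0, 0, 0, 0, 0, 1] := by decide
theorem lemS_253 (w : List (Fin 2)) : wact (stW [0, 0, 0, 1, 0, 1] (W 0 2)) w = wact [] w := by
  rw [← red_sound (stW [0, 0, 0, 1, 0, 1] (W 0 2)) w, show red (stW [0, 0, 0, 1, 0, 1] (W 0 2)) = [] from by decide]
theorem lemA_254 : wact2 (W 1 1) [0, 0, 1, 0, 0, 0] = [0, 0, 0, 0, 0, 1] := by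
  rw [Wsp_1_1, wact2_append, lemA_252, lemA_253]
theorem lemS_254 (w : List (Fin 2)) : wact (stW [0, 0, 1, 0, 0, 0] (W 1 1)) w = wact [] w := by
  rw [Wsp_1_1, stW_append, lemA_252, wact_append_gens, lemS_252, lemS_253, ← wact_append_gens,
    ← red_sound ([] ++ []) w, show red ([] ++ []) = [] from by decide]
theorem lemA_255 : wact2 (W 2 0) [0, 0, 0, 1, 1, 0] = [0, 0, 0, 0, 0, 1] := by
  rw [Wsp_2_0, wact2_append, lemA_251, lemA_254]
theorem lemS_255 (w : List (Fin 2)) : wact (stW [0, 0, 0, 1, 1, 0] (W 2 0)) w = wact [] w := by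
  rw [Wsp_2_0, stW_append, lemA_251, wact_append_gens, lemS_251, lemS_254, ← wact_append_gens,
    ← red_sound ([] ++ []) w, show red ([] ++ []) = [] from by decide]
theorem lemA_256 : wact2 (Wr 3 0) [0, 0, 0, 0, 0, 1] = [0, 0, 0, 0, 0, 1] := by
  rw [Rsp_3_0, wact2_append, lemA_248, lemA_255]
theorem lemS_256 (w : List (Fin 2)) : wact (stW [0, 0, 0, 0, 0, 1] (Wr 3 0)) w = wact [GrigQ.a] w := by
  rw [Rsp_3_0, stW_append, lemA_248, wact_append_gens, lemS_248, lemS_255, ← wact_append_gens,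
    ← red_sound ([GrigQ.a] ++ []) w, show red ([GrigQ.a] ++ []) = [GrigQ.a] from by decide]
theorem lemA_257 : wact2 (W 3 3) [0, 0, 0, 0, 0, 1] = [0, 0, 0, 0, 1, 1] := by
  rw [Wsp_3_3, wact2_append, lemA_156, lemA_229]
theorem lemS_257 (w : List (Fin 2)) : wact (stW [0, 0, 0, 0, 0, 1] (W 3 3)) w = wact [GrigQ.b] w := by
  rw [Wsp_3_3, stW_append, lemA_156, wact_append_gens, lemS_156, lemS_229, ← wact_append_gens,
    ← red_sound ([] ++ [GrigQ.b]) w, show red ([] ++ [GrigQ.b]) = [GrigQ.b] from by decide]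
theorem lemA_258 : wact2 (Wr 4 3) [0, 0, 0, 0, 0, 1] = [0, 0, 0, 0, 1, 1] := by
  rw [Rsp_4_3, wact2_append, lemA_256, lemA_257]
theorem lemS_258 (w : List (Fin 2)) : wact (stW [0, 0, 0, 0, 0, 1] (Wr 4 3)) w = wact [GrigQ.a, GrigQ.b] w := by
  rw [Rsp_4_3, stW_append, lemA_256, wact_append_gens, lemS_256, lemS_257, ← wact_append_gens,
    ← red_sound ([GrigQ.a] ++ [GrigQ.b]) w, show red ([GrigQ.a] ++ [GrigQ.b]) = [GrigQ.a, GrigQ.b] from by decide]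
theorem lemA_259 : wact2 (Wr 0 1) [0, 0, 0, 0, 1, 1] = [0, 0, 1, 1, 1, 1] := by decide
theorem lemS_259 (w : List (Fin 2)) : wact (stW [0, 0, 0, 0, 1, 1] (Wr 0 1)) w = wact [GrigQ.d] w := by
  rw [← red_sound (stW [0, 0, 0, 0, 1, 1] (Wr 0 1)) w, show red (stW [0, 0, 0, 0, 1, 1] (Wr 0 1)) = [GrigQ.d] from by decide]
theorem lemA_260 : wact2 (W 0 0) [0, 0, 1, 1, 1, 1] = [0, 0, 1, 1, 1, 1] := by decide
theorem lemS_260 (w : List (Fin 2)) : wact (stW [0, 0, 1, 1, 1, 1] (W 0 0)) w = wact [GrigQ.b] w := by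
  rw [← red_sound (stW [0, 0, 1, 1, 1, 1] (W 0 0)) w, show red (stW [0, 0, 1, 1, 1, 1] (W 0 0)) = [GrigQ.b] from by decide]
theorem lemA_261 : wact2 (Wr 1 0) [0, 0, 0, 0, 1, 1] = [0, 0, 1, 1, 1, 1] := by
  rw [Rsp_1_0, wact2_append, lemA_259, lemA_260]
theorem lemS_261 (w : List (Fin 2)) : wact (stW [0, 0, 0, 0, 1, 1] (Wr 1 0)) w = wact [GrigQ.c] w := by
  rw [Rsp_1_0, stW_append, lemA_259, wact_append_gens, lemS_259, lemS_260, ← wact_append_gens,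
    ← red_sound ([GrigQ.d] ++ [GrigQ.b]) w, show red ([GrigQ.d] ++ [GrigQ.b]) = [GrigQ.c] from by decide]
theorem lemA_262 : wact2 (Wr 0 3) [0, 0, 1, 1, 1, 1] = [0, 0, 0, 1, 1, 1] := by decide
theorem lemS_262 (w : List (Fin 2)) : wact (stW [0, 0, 1, 1, 1, 1] (Wr 0 3)) w = wact [GrigQ.b] w := by
  rw [← red_sound (stW [0, 0, 1, 1, 1, 1] (Wr 0 3)) w, show red (stW [0, 0, 1, 1, 1, 1] (Wr 0 3)) = [GrigQ.b] from by decide]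
theorem lemA_263 : wact2 (W 0 0) [0, 0, 0, 1, 1, 1] = [0, 0, 0, 1, 1, 1] := by decide
theorem lemS_263 (w : List (Fin 2)) : wact (stW [0, 0, 0, 1, 1, 1] (W 0 0)) w = wact [GrigQ.b] w := by
  rw [← red_sound (stW [0, 0, 0, 1, 1, 1] (W 0 0)) w, show red (stW [0, 0, 0, 1, 1, 1] (W 0 0)) = [GrigQ.b] from by decide]
theorem lemA_264 : wact2 (W 1 3) [0, 0, 1, 1, 1, 1] = [0, 0, 0, 1, 1, 1] := by
  rw [Wsp_1_3, wact2_append, lemA_262, lemA_263]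
theorem lemS_264 (w : List (Fin 2)) : wact (stW [0, 0, 1, 1, 1, 1] (W 1 3)) w = wact [] w := by
  rw [Wsp_1_3, stW_append, lemA_262, wact_append_gens, lemS_262, lemS_263, ← wact_append_gens,
    ← red_sound ([GrigQ.b] ++ [GrigQ.b]) w, show red ([GrigQ.b] ++ [GrigQ.b]) = [] from by decide]
theorem lemA_265 : wact2 (Wr 2 3) [0, 0, 0, 0, 1, 1] = [0, 0, 0, 1, 1, 1] := by
  rw [Rsp_2_3, wact2_append, lemA_261, lemA_264]
theorem lemS_265 (w : List (Fin 2)) : wact (stW [0, 0, 0, 0, 1, 1] (Wr 2 3)) w = wact [GrigQ.c] w := by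
  rw [Rsp_2_3, stW_append, lemA_261, wact_append_gens, lemS_261, lemS_264, ← wact_append_gens,
    ← red_sound ([GrigQ.c] ++ []) w, show red ([GrigQ.c] ++ []) = [GrigQ.c] from by decide]
theorem lemA_266 : wact2 (Wr 3 2) [0, 0, 0, 0, 1, 1] = [0, 0, 0, 0, 1, 1] := by
  rw [Rsp_3_2, wact2_append, lemA_265, lemA_178]
theorem lemS_266 (w : List (Fin 2)) : wact (stW [0, 0, 0, 0, 1, 1] (Wr 3 2)) w = wact [GrigQ.b] w := by
  rw [Rsp_3_2, stW_append, lemA_265, wact_append_gens, lemS_265, lemS_178, ← wact_append_gens,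
    ← red_sound ([GrigQ.c] ++ [GrigQ.d]) w, show red ([GrigQ.c] ++ [GrigQ.d]) = [GrigQ.b] from by decide]
theorem lemA_267 : wact2 (W 3 3) [0, 0, 0, 0, 1, 1] = [0, 0, 0, 0, 0, 0] := by
  rw [Wsp_3_3, wact2_append, lemA_265, lemA_212]
theorem lemS_267 (w : List (Fin 2)) : wact (stW [0, 0, 0, 0, 1, 1] (W 3 3)) w = wact [GrigQ.c] w := by
  rw [Wsp_3_3, stW_append, lemA_265, wact_append_gens, lemS_265, lemS_212, ← wact_append_gens,
    ← red_sound ([GrigQ.c] ++ []) w, show red ([GrigQ.c] ++ []) = [GrigQ.c] from by decide]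
theorem lemA_268 : wact2 (W 4 2) [0, 0, 0, 0, 1, 1] = [0, 0, 0, 0, 0, 0] := by
  rw [Wsp_4_2, wact2_append, lemA_266, lemA_267]
theorem lemS_268 (w : List (Fin 2)) : wact (stW [0, 0, 0, 0, 1, 1] (W 4 2)) w = wact [GrigQ.d] w := by
  rw [Wsp_4_2, stW_append, lemA_266, wact_append_gens, lemS_266, lemS_267, ← wact_append_gens,
    ← red_sound ([GrigQ.b] ++ [GrigQ.c]) w, show red ([GrigQ.b] ++ [GrigQ.c]) = [GrigQ.d] from by decide]
theorem lemA_269 : wact2 (Wr 5 2) [0, 0, 0, 0, 0, 1] = [0, 0, 0, 0, 0, 0] := by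
  rw [Rsp_5_2, wact2_append, lemA_258, lemA_268]
theorem lemS_269 (w : List (Fin 2)) : wact (stW [0, 0, 0, 0, 0, 1] (Wr 5 2)) w = wact [GrigQ.a, GrigQ.c] w := by
  rw [Rsp_5_2, stW_append, lemA_258, wact_append_gens, lemS_258, lemS_268, ← wact_append_gens,
    ← red_sound ([GrigQ.a, GrigQ.b] ++ [GrigQ.d]) w, show red ([GrigQ.a, GrigQ.b] ++ [GrigQ.d]) = [GrigQ.a, GrigQ.c] from by decide]
theorem lemA_270 : wact2 (W 6 2) [0, 0, 0, 0, 0, 1] = [0, 0, 0, 0, 0, 1] := by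
  rw [Wsp_6_2, wact2_append, lemA_269, lemA_240]
theorem lemS_270 (w : List (Fin 2)) : wact (stW [0, 0, 0, 0, 0, 1] (W 6 2)) w = wact [GrigQ.a, GrigQ.b, GrigQ.a, GrigQ.c] w := by
  rw [Wsp_6_2, stW_append, lemA_269, wact_append_gens, lemS_269, lemS_240, ← wact_append_gens,
    ← red_sound ([GrigQ.a, GrigQ.c] ++ [GrigQ.d, GrigQ.a, GrigQ.c]) w, show red ([GrigQ.a, GrigQ.c] ++ [GrigQ.d, GrigQ.a, GrigQ.c]) = [GrigQ.a, GrigQ.b, GrigQ.a, GrigQ.c] from by decide]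
theorem lemA_271 : wact2 (Wr 7 2) [0, 0, 0, 0, 0, 1] = [0, 0, 0, 0, 0, 1] := by
  rw [Rsp_7_2, wact2_append, lemA_241, lemA_270]
theorem lemS_271 (w : List (Fin 2)) : wact (stW [0, 0, 0, 0, 0, 1] (Wr 7 2)) w = wact [GrigQ.d, GrigQ.a, GrigQ.d, GrigQ.a, GrigQ.c, GrigQ.a, GrigQ.b, GrigQ.a, GrigQ.c] w := by
  rw [Rsp_7_2, stW_append, lemA_241, wact_append_gens, lemS_241, lemS_270, ← wact_append_gens,
    ← red_sound ([GrigQ.d, GrigQ.a, GrigQ.d, GrigQ.a, GrigQ.c] ++ [GrigQ.a, GrigQ.b, GrigQ.a, GrigQ.c]) w, show red ([GrigQ.d, GrigQ.a, GrigQ.d, GrigQ.a, GrigQ.c] ++ [GrigQ.a, GrigQ.b, GrigQ.a, GrigQ.c]) = [GrigQ.d, GrigQ.a, GrigQ.d, GrigQ.a, GrigQ.c, GrigQ.a, GrigQ.b, GrigQ.a, GrigQ.c] from by decide]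
theorem lemA_272 : wact2 (Wr 3 2) [0, 0, 0, 0, 0, 0] = [0, 0, 0, 0, 0, 1] := by
  rw [Rsp_3_2, wact2_append, lemA_220, lemA_237]
theorem lemS_272 (w : List (Fin 2)) : wact (stW [0, 0, 0, 0, 0, 0] (Wr 3 2)) w = wact [] w := by
  rw [Rsp_3_2, stW_append, lemA_220, wact_append_gens, lemS_220, lemS_237, ← wact_append_gens,
    ← red_sound ([] ++ []) w, show red ([] ++ []) = [] from by decide]
theorem lemA_273 : wact2 (Wr 0 3) [0, 0, 0, 1, 1, 0] = [0, 0, 1, 1, 1, 0] := by decide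
theorem lemS_273 (w : List (Fin 2)) : wact (stW [0, 0, 0, 1, 1, 0] (Wr 0 3)) w = wact [] w := by
  rw [← red_sound (stW [0, 0, 0, 1, 1, 0] (Wr 0 3)) w, show red (stW [0, 0, 0, 1, 1, 0] (Wr 0 3)) = [] from by decide]
theorem lemA_274 : wact2 (W 0 2) [0, 0, 1, 1, 1, 0] = [0, 0, 1, 0, 1, 0] := by decide
theorem lemS_274 (w : List (Fin 2)) : wact (stW [0, 0, 1, 1, 1, 0] (W 0 2)) w = wact [GrigQ.a] w := by
  rw [← red_sound (stW [0, 0, 1, 1, 1, 0] (W 0 2)) w, show red (stW [0, 0, 1, 1, 1, 0] (W 0 2)) = [GrigQ.a] from by decide]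
theorem lemA_275 : wact2 (Wr 1 2) [0, 0, 0, 1, 1, 0] = [0, 0, 1, 0, 1, 0] := by
  rw [Rsp_1_2, wact2_append, lemA_273, lemA_274]
theorem lemS_275 (w : List (Fin 2)) : wact (stW [0, 0, 0, 1, 1, 0] (Wr 1 2)) w = wact [GrigQ.a] w := by
  rw [Rsp_1_2, stW_append, lemA_273, wact_append_gens, lemS_273, lemS_274, ← wact_append_gens,
    ← red_sound ([] ++ [GrigQ.a]) w, show red ([] ++ [GrigQ.a]) = [GrigQ.a] from by decide]
theorem lemA_276 : wact2 (Wr 0 3) [0, 0, 1, 0, 1, 0] = [0, 0, 0, 0, 0, 0] := by decide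
theorem lemS_276 (w : List (Fin 2)) : wact (stW [0, 0, 1, 0, 1, 0] (Wr 0 3)) w = wact [] w := by
  rw [← red_sound (stW [0, 0, 1, 0, 1, 0] (Wr 0 3)) w, show red (stW [0, 0, 1, 0, 1, 0] (Wr 0 3)) = [] from by decide]
theorem lemA_277 : wact2 (W 0 0) [0, 0, 0, 0, 0, 0] = [0, 0, 0, 0, 1, 0] := by decide
theorem lemS_277 (w : List (Fin 2)) : wact (stW [0, 0, 0, 0, 0, 0] (W 0 0)) w = wact [] w := by
  rw [← red_sound (stW [0, 0, 0, 0, 0, 0] (W 0 0)) w, show red (stW [0, 0, 0, 0, 0, 0] (W 0 0)) = [] from by decide]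
theorem lemA_278 : wact2 (W 1 3) [0, 0, 1, 0, 1, 0] = [0, 0, 0, 0, 1, 0] := by
  rw [Wsp_1_3, wact2_append, lemA_276, lemA_277]
theorem lemS_278 (w : List (Fin 2)) : wact (stW [0, 0, 1, 0, 1, 0] (W 1 3)) w = wact [] w := by
  rw [Wsp_1_3, stW_append, lemA_276, wact_append_gens, lemS_276, lemS_277, ← wact_append_gens,
    ← red_sound ([] ++ []) w, show red ([] ++ []) = [] from by decide]
theorem lemA_279 : wact2 (W 2 2) [0, 0, 0, 1, 1, 0] = [0, 0, 0, 0, 1, 0] := by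
  rw [Wsp_2_2, wact2_append, lemA_275, lemA_278]
theorem lemS_279 (w : List (Fin 2)) : wact (stW [0, 0, 0, 1, 1, 0] (W 2 2)) w = wact [GrigQ.a] w := by
  rw [Wsp_2_2, stW_append, lemA_275, wact_append_gens, lemS_275, lemS_278, ← wact_append_gens,
    ← red_sound ([GrigQ.a] ++ []) w, show red ([GrigQ.a] ++ []) = [GrigQ.a] from by decide]
theorem lemA_280 : wact2 (W 3 1) [0, 0, 0, 0, 0, 1] = [0, 0, 0, 0, 1, 0] := by
  rw [Wsp_3_1, wact2_append, lemA_248, lemA_279]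
theorem lemS_280 (w : List (Fin 2)) : wact (stW [0, 0, 0, 0, 0, 1] (W 3 1)) w = wact [] w := by
  rw [Wsp_3_1, stW_append, lemA_248, wact_append_gens, lemS_248, lemS_279, ← wact_append_gens,
    ← red_sound ([GrigQ.a] ++ [GrigQ.a]) w, show red ([GrigQ.a] ++ [GrigQ.a]) = [] from by decide]
theorem lemA_281 : wact2 (Wr 4 1) [0, 0, 0, 0, 0, 0] = [0, 0, 0, 0, 1, 0] := by
  rw [Rsp_4_1, wact2_append, lemA_272, lemA_280]
theorem lemS_281 (w : List (Fin 2)) : wact (stW [0, 0, 0, 0, 0, 0] (Wr 4 1)) w = wact [] w := by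
  rw [Rsp_4_1, stW_append, lemA_272, wact_append_gens, lemS_272, lemS_280, ← wact_append_gens,
    ← red_sound ([] ++ []) w, show red ([] ++ []) = [] from by decide]
theorem lemA_282 : wact2 (Wr 0 1) [0, 0, 0, 0, 1, 0] = [0, 0, 1, 1, 1, 0] := by decide
theorem lemS_282 (w : List (Fin 2)) : wact (stW [0, 0, 0, 0, 1, 0] (Wr 0 1)) w = wact [GrigQ.a] w := by
  rw [← red_sound (stW [0, 0, 0, 0, 1, 0] (Wr 0 1)) w, show red (stW [0, 0, 0, 0, 1, 0] (Wr 0 1)) = [GrigQ.a] from by decide]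
theorem lemA_283 : wact2 (W 0 0) [0, 0, 1, 1, 1, 0] = [0, 0, 1, 1, 1, 0] := by decide
theorem lemS_283 (w : List (Fin 2)) : wact (stW [0, 0, 1, 1, 1, 0] (W 0 0)) w = wact [] w := by
  rw [← red_sound (stW [0, 0, 1, 1, 1, 0] (W 0 0)) w, show red (stW [0, 0, 1, 1, 1, 0] (W 0 0)) = [] from by decide]
theorem lemA_284 : wact2 (Wr 1 0) [0, 0, 0, 0, 1, 0] = [0, 0, 1, 1, 1, 0] := by
  rw [Rsp_1_0, wact2_append, lemA_282, lemA_283]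
theorem lemS_284 (w : List (Fin 2)) : wact (stW [0, 0, 0, 0, 1, 0] (Wr 1 0)) w = wact [GrigQ.a] w := by
  rw [Rsp_1_0, stW_append, lemA_282, wact_append_gens, lemS_282, lemS_283, ← wact_append_gens,
    ← red_sound ([GrigQ.a] ++ []) w, show red ([GrigQ.a] ++ []) = [GrigQ.a] from by decide]
theorem lemA_285 : wact2 (Wr 0 3) [0, 0, 1, 1, 1, 0] = [0, 0, 0, 1, 1, 0] := by decide
theorem lemS_285 (w : List (Fin 2)) : wact (stW [0, 0, 1, 1, 1, 0] (Wr 0 3)) w = wact [] w := by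
  rw [← red_sound (stW [0, 0, 1, 1, 1, 0] (Wr 0 3)) w, show red (stW [0, 0, 1, 1, 1, 0] (Wr 0 3)) = [] from by decide]
theorem lemA_286 : wact2 (W 0 0) [0, 0, 0, 1, 1, 0] = [0, 0, 0, 1, 1, 0] := by decide
theorem lemS_286 (w : List (Fin 2)) : wact (stW [0, 0, 0, 1, 1, 0] (W 0 0)) w = wact [] w := by
  rw [← red_sound (stW [0, 0, 0, 1, 1, 0] (W 0 0)) w, show red (stW [0, 0, 0, 1, 1, 0] (W 0 0)) = [] from by decide]
theorem lemA_287 : wact2 (W 1 3) [0, 0, 1, 1, 1, 0] = [0, 0, 0, 1, 1, 0] := by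
  rw [Wsp_1_3, wact2_append, lemA_285, lemA_286]
theorem lemS_287 (w : List (Fin 2)) : wact (stW [0, 0, 1, 1, 1, 0] (W 1 3)) w = wact [] w := by
  rw [Wsp_1_3, stW_append, lemA_285, wact_append_gens, lemS_285, lemS_286, ← wact_append_gens,
    ← red_sound ([] ++ []) w, show red ([] ++ []) = [] from by decide]
theorem lemA_288 : wact2 (Wr 2 3) [0, 0, 0, 0, 1, 0] = [0, 0, 0, 1, 1, 0] := by
  rw [Rsp_2_3, wact2_append, lemA_284, lemA_287]
theorem lemS_288 (w : List (Fin 2)) : wact (stW [0, 0, 0, 0, 1, 0] (Wr 2 3)) w = wact [GrigQ.a] w := by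
  rw [Rsp_2_3, stW_append, lemA_284, wact_append_gens, lemS_284, lemS_287, ← wact_append_gens,
    ← red_sound ([GrigQ.a] ++ []) w, show red ([GrigQ.a] ++ []) = [GrigQ.a] from by decide]
theorem lemA_289 : wact2 (Wr 3 2) [0, 0, 0, 0, 1, 0] = [0, 0, 0, 0, 1, 0] := by
  rw [Rsp_3_2, wact2_append, lemA_288, lemA_279]
theorem lemS_289 (w : List (Fin 2)) : wact (stW [0, 0, 0, 0, 1, 0] (Wr 3 2)) w = wact [] w := by
  rw [Rsp_3_2, stW_append, lemA_288, wact_append_gens, lemS_288, lemS_279, ← wact_append_gens,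
    ← red_sound ([GrigQ.a] ++ [GrigQ.a]) w, show red ([GrigQ.a] ++ [GrigQ.a]) = [] from by decide]
theorem lemA_290 : wact2 (W 3 3) [0, 0, 0, 0, 1, 0] = [0, 0, 0, 0, 0, 1] := by
  rw [Wsp_3_3, wact2_append, lemA_288, lemA_255]
theorem lemS_290 (w : List (Fin 2)) : wact (stW [0, 0, 0, 0, 1, 0] (W 3 3)) w = wact [GrigQ.a] w := by
  rw [Wsp_3_3, stW_append, lemA_288, wact_append_gens, lemS_288, lemS_255, ← wact_append_gens,
    ← red_sound ([GrigQ.a] ++ []) w, show red ([GrigQ.a] ++ []) = [GrigQ.a] from by decide]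
theorem lemA_291 : wact2 (W 4 2) [0, 0, 0, 0, 1, 0] = [0, 0, 0, 0, 0, 1] := by
  rw [Wsp_4_2, wact2_append, lemA_289, lemA_290]
theorem lemS_291 (w : List (Fin 2)) : wact (stW [0, 0, 0, 0, 1, 0] (W 4 2)) w = wact [GrigQ.a] w := by
  rw [Wsp_4_2, stW_append, lemA_289, wact_append_gens, lemS_289, lemS_290, ← wact_append_gens,
    ← red_sound ([] ++ [GrigQ.a]) w, show red ([] ++ [GrigQ.a]) = [GrigQ.a] from by decide]
theorem lemA_292 : wact2 (W 5 1) [0, 0, 0, 0, 0, 0] = [0, 0, 0, 0, 0, 1] := by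
  rw [Wsp_5_1, wact2_append, lemA_281, lemA_291]
theorem lemS_292 (w : List (Fin 2)) : wact (stW [0, 0, 0, 0, 0, 0] (W 5 1)) w = wact [GrigQ.a] w := by
  rw [Wsp_5_1, stW_append, lemA_281, wact_append_gens, lemS_281, lemS_291, ← wact_append_gens,
    ← red_sound ([] ++ [GrigQ.a]) w, show red ([] ++ [GrigQ.a]) = [GrigQ.a] from by decide]
theorem lemA_293 : wact2 (Wr 6 1) [0, 0, 0, 0, 0, 1] = [0, 0, 0, 0, 0, 1] := by
  rw [Rsp_6_1, wact2_append, lemA_269, lemA_292]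
theorem lemS_293 (w : List (Fin 2)) : wact (stW [0, 0, 0, 0, 0, 1] (Wr 6 1)) w = wact [GrigQ.a, GrigQ.c, GrigQ.a] w := by
  rw [Rsp_6_1, stW_append, lemA_269, wact_append_gens, lemS_269, lemS_292, ← wact_append_gens,
    ← red_sound ([GrigQ.a, GrigQ.c] ++ [GrigQ.a]) w, show red ([GrigQ.a, GrigQ.c] ++ [GrigQ.a]) = [GrigQ.a, GrigQ.c, GrigQ.a] from by decide]
theorem lemA_294 : wact2 (W 7 1) [0, 0, 0, 0, 0, 1] = [0, 0, 0, 0, 0, 1] := by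
  rw [Wsp_7_1, wact2_append, lemA_293, lemA_270]
theorem lemS_294 (w : List (Fin 2)) : wact (stW [0, 0, 0, 0, 0, 1] (W 7 1)) w = wact [GrigQ.a, GrigQ.d, GrigQ.a, GrigQ.c] w := by
  rw [Wsp_7_1, stW_append, lemA_293, wact_append_gens, lemS_293, lemS_270, ← wact_append_gens,
    ← red_sound ([GrigQ.a, GrigQ.c, GrigQ.a] ++ [GrigQ.a, GrigQ.b, GrigQ.a, GrigQ.c]) w, show red ([GrigQ.a, GrigQ.c, GrigQ.a] ++ [GrigQ.a, GrigQ.b, GrigQ.a, GrigQ.c]) = [GrigQ.a, GrigQ.d, GrigQ.a, GrigQ.c] from by decide]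
theorem lemA_295 : wact2 (Wr 8 1) [0, 0, 0, 0, 0, 1] = [0, 0, 0, 0, 0, 1] := by
  rw [Rsp_8_1, wact2_append, lemA_271, lemA_294]
theorem lemS_295 (w : List (Fin 2)) : wact (stW [0, 0, 0, 0, 0, 1] (Wr 8 1)) w = wact [GrigQ.d, GrigQ.a, GrigQ.d, GrigQ.a, GrigQ.c, GrigQ.a, GrigQ.b, GrigQ.a, GrigQ.c, GrigQ.a, GrigQ.d, GrigQ.a, GrigQ.c] w := by
  rw [Rsp_8_1, stW_append, lemA_271, wact_append_gens, lemS_271, lemS_294, ← wact_append_gens,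
    ← red_sound ([GrigQ.d, GrigQ.a, GrigQ.d, GrigQ.a, GrigQ.c, GrigQ.a, GrigQ.b, GrigQ.a, GrigQ.c] ++ [GrigQ.a, GrigQ.d, GrigQ.a, GrigQ.c]) w, show red ([GrigQ.d, GrigQ.a, GrigQ.d, GrigQ.a, GrigQ.c, GrigQ.a, GrigQ.b, GrigQ.a, GrigQ.c] ++ [GrigQ.a, GrigQ.d, GrigQ.a, GrigQ.c]) = [GrigQ.d, GrigQ.a, GrigQ.d, GrigQ.a, GrigQ.c, GrigQ.a, GrigQ.b, GrigQ.a, GrigQ.c, GrigQ.a, GrigQ.d, GrigQ.a, GrigQ.c] from by decide]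
theorem lemA_296 : wact2 (W 6 0) [0, 0, 0, 0, 0, 1] = [0, 0, 0, 0, 0, 1] := by
  rw [Wsp_6_0, wact2_append, lemA_205, lemA_292]
theorem lemS_296 (w : List (Fin 2)) : wact (stW [0, 0, 0, 0, 0, 1] (W 6 0)) w = wact [GrigQ.d] w := by
  rw [Wsp_6_0, stW_append, lemA_205, wact_append_gens, lemS_205, lemS_292, ← wact_append_gens,
    ← red_sound ([GrigQ.d, GrigQ.a] ++ [GrigQ.a]) w, show red ([GrigQ.d, GrigQ.a] ++ [GrigQ.a]) = [GrigQ.d] from by decide]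
theorem lemA_297 : wact2 (W 7 3) [0, 0, 0, 0, 0, 1] = [0, 0, 0, 0, 0, 1] := by
  rw [Wsp_7_3, wact2_append, lemA_241, lemA_296]
theorem lemS_297 (w : List (Fin 2)) : wact (stW [0, 0, 0, 0, 0, 1] (W 7 3)) w = wact [GrigQ.d, GrigQ.a, GrigQ.d, GrigQ.a, GrigQ.b] w := by
  rw [Wsp_7_3, stW_append, lemA_241, wact_append_gens, lemS_241, lemS_296, ← wact_append_gens,
    ← red_sound ([GrigQ.d, GrigQ.a, GrigQ.d, GrigQ.a, GrigQ.c] ++ [GrigQ.d]) w, show red ([GrigQ.d, GrigQ.a, GrigQ.d, GrigQ.a, GrigQ.c] ++ [GrigQ.d]) = [GrigQ.d, GrigQ.a, GrigQ.d, GrigQ.a, GrigQ.b] from by decide]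
theorem lemA_298 : wact2 (W 8 2) [0, 0, 0, 0, 0, 1] = [0, 0, 0, 0, 0, 1] := by
  rw [Wsp_8_2, wact2_append, lemA_271, lemA_297]
theorem lemS_298 (w : List (Fin 2)) : wact (stW [0, 0, 0, 0, 0, 1] (W 8 2)) w = wact [GrigQ.d, GrigQ.a, GrigQ.d, GrigQ.a, GrigQ.c, GrigQ.a, GrigQ.b, GrigQ.a, GrigQ.b, GrigQ.a, GrigQ.d, GrigQ.a, GrigQ.b] w := by
  rw [Wsp_8_2, stW_append, lemA_271, wact_append_gens, lemS_271, lemS_297, ← wact_append_gens,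
    ← red_sound ([GrigQ.d, GrigQ.a, GrigQ.d, GrigQ.a, GrigQ.c, GrigQ.a, GrigQ.b, GrigQ.a, GrigQ.c] ++ [GrigQ.d, GrigQ.a, GrigQ.d, GrigQ.a, GrigQ.b]) w, show red ([GrigQ.d, GrigQ.a, GrigQ.d, GrigQ.a, GrigQ.c, GrigQ.a, GrigQ.b, GrigQ.a, GrigQ.c] ++ [GrigQ.d, GrigQ.a, GrigQ.d, GrigQ.a, GrigQ.b]) = [GrigQ.d, GrigQ.a, GrigQ.d, GrigQ.a, GrigQ.c, GrigQ.a, GrigQ.b, GrigQ.a, GrigQ.b, GrigQ.a, GrigQ.d, GrigQ.a, GrigQ.b] from by decide]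
theorem lemA_299 : wact2 (W 9 1) [0, 0, 0, 0, 0, 1] = [0, 0, 0, 0, 0, 1] := by
  rw [Wsp_9_1, wact2_append, lemA_295, lemA_298]
theorem lemS_299 (w : List (Fin 2)) : wact (stW [0, 0, 0, 0, 0, 1] (W 9 1)) w = wact [GrigQ.d, GrigQ.a, GrigQ.d, GrigQ.a, GrigQ.c, GrigQ.a, GrigQ.b, GrigQ.a, GrigQ.c, GrigQ.a, GrigQ.d, GrigQ.a, GrigQ.b, GrigQ.a, GrigQ.d, GrigQ.a, GrigQ.c, GrigQ.a, GrigQ.b, GrigQ.a, GrigQ.b, GrigQ.a, GrigQ.d, GrigQ.a, GrigQ.b] w := by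
  rw [Wsp_9_1, stW_append, lemA_295, wact_append_gens, lemS_295, lemS_298, ← wact_append_gens,
    ← red_sound ([GrigQ.d, GrigQ.a, GrigQ.d, GrigQ.a, GrigQ.c, GrigQ.a, GrigQ.b, GrigQ.a, GrigQ.c, GrigQ.a, GrigQ.d, GrigQ.a, GrigQ.c] ++ [GrigQ.d, GrigQ.a, GrigQ.d, GrigQ.a, GrigQ.c, GrigQ.a, GrigQ.b, GrigQ.a, GrigQ.b, GrigQ.a, GrigQ.d, GrigQ.a, GrigQ.b]) w, show red ([GrigQ.d, GrigQ.a, GrigQ.d, GrigQ.a, GrigQ.c, GrigQ.a, GrigQ.b, GrigQ.a, GrigQ.c, GrigQ.a, GrigQ.d, GrigQ.a, GrigQ.c] ++ [GrigQ.d, GrigQ.a, GrigQ.d, GrigQ.a, GrigQ.c, GrigQ.a, GrigQ.b, GrigQ.a, GrigQ.b, GrigQ.a, GrigQ.d, GrigQ.a, GrigQ.b]) = [GrigQ.d, GrigQ.a, GrigQ.d, GrigQ.a, GrigQ.c, GrigQ.a, GrigQ.b, GrigQ.a, GrigQ.c, GrigQ.a, GrigQ.d, GrigQ.a, GrigQ.b,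 GrigQ.a, GrigQ.d, GrigQ.a, GrigQ.c, GrigQ.a, GrigQ.b, GrigQ.a, GrigQ.b, GrigQ.a, GrigQ.d, GrigQ.a, GrigQ.b] from by decide]
theorem lemA_300 : wact2 (Wr 7 3) [0, 0, 0, 0, 0, 1] = [0, 0, 0, 0, 0, 1] := by
  rw [Rsp_7_3, wact2_append, lemA_143, lemA_146]
theorem lemS_300 (w : List (Fin 2)) : wact (stW [0, 0, 0, 0, 0, 1] (Wr 7 3)) w = wact [GrigQ.b, GrigQ.a, GrigQ.d, GrigQ.a, GrigQ.d] w := by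
  rw [Rsp_7_3, stW_append, lemA_143, wact_append_gens, lemS_143, lemS_146, ← wact_append_gens,
    ← red_sound ([GrigQ.d] ++ [GrigQ.c, GrigQ.a, GrigQ.d, GrigQ.a, GrigQ.d]) w, show red ([GrigQ.d] ++ [GrigQ.c, GrigQ.a, GrigQ.d, GrigQ.a, GrigQ.d]) = [GrigQ.b, GrigQ.a, GrigQ.d, GrigQ.a, GrigQ.d] from by decide]
theorem lemA_301 : wact2 (Wr 8 2) [0, 0, 0, 0, 0, 1] = [0, 0, 0, 0, 0, 1] := by
  rw [Rsp_8_2, wact2_append, lemA_300, lemA_147]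
theorem lemS_301 (w : List (Fin 2)) : wact (stW [0, 0, 0, 0, 0, 1] (Wr 8 2)) w = wact [GrigQ.b, GrigQ.a, GrigQ.d, GrigQ.a, GrigQ.b, GrigQ.a, GrigQ.b, GrigQ.a, GrigQ.c, GrigQ.a, GrigQ.d, GrigQ.a, GrigQ.d] w := by
  rw [Rsp_8_2, stW_append, lemA_300, wact_append_gens, lemS_300, lemS_147, ← wact_append_gens,
    ← red_sound ([GrigQ.b, GrigQ.a, GrigQ.d, GrigQ.a, GrigQ.d] ++ [GrigQ.c, GrigQ.a, GrigQ.b, GrigQ.a, GrigQ.c, GrigQ.a, GrigQ.d, GrigQ.a, GrigQ.d]) w, show red ([GrigQ.b, GrigQ.a, GrigQ.d, GrigQ.a, GrigQ.d] ++ [GrigQ.c, GrigQ.a, GrigQ.b, GrigQ.a, GrigQ.c, GrigQ.a, GrigQ.d, GrigQ.a, GrigQ.d]) = [GrigQ.b, GrigQ.a, GrigQ.d, GrigQ.a, GrigQ.b, GrigQ.a, GrigQ.b, GrigQ.a, GrigQ.c, GrigQ.a, GrigQ.d, GrigQ.a, GrigQ.d] from by decide]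
theorem lemA_302 : wact2 (W 8 3) [0, 0, 0, 0, 0, 1] = [0, 0, 0, 0, 0, 1] := by
  rw [Wsp_8_3, wact2_append, lemA_300, lemA_144]
theorem lemS_302 (w : List (Fin 2)) : wact (stW [0, 0, 0, 0, 0, 1] (W 8 3)) w = wact [GrigQ.b, GrigQ.a, GrigQ.b, GrigQ.a] w := by
  rw [Wsp_8_3, stW_append, lemA_300, wact_append_gens, lemS_300, lemS_144, ← wact_append_gens,
    ← red_sound ([GrigQ.b, GrigQ.a, GrigQ.d, GrigQ.a, GrigQ.d] ++ [GrigQ.d, GrigQ.a, GrigQ.c, GrigQ.a]) w, show red ([GrigQ.b, GrigQ.a, GrigQ.d, GrigQ.a, GrigQ.d] ++ [GrigQ.d, GrigQ.a, GrigQ.c, GrigQ.a]) = [GrigQ.b, GrigQ.a, GrigQ.b, GrigQ.a] from by decide]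
theorem lemA_303 : wact2 (W 9 2) [0, 0, 0, 0, 0, 1] = [0, 0, 0, 0, 0, 1] := by
  rw [Wsp_9_2, wact2_append, lemA_301, lemA_302]
theorem lemS_303 (w : List (Fin 2)) : wact (stW [0, 0, 0, 0, 0, 1] (W 9 2)) w = wact [GrigQ.b, GrigQ.a, GrigQ.d, GrigQ.a, GrigQ.b, GrigQ.a, GrigQ.b, GrigQ.a, GrigQ.c, GrigQ.a, GrigQ.d, GrigQ.a, GrigQ.c, GrigQ.a, GrigQ.b, GrigQ.a] w := by
  rw [Wsp_9_2, stW_append, lemA_301, wact_append_gens, lemS_301, lemS_302, ← wact_append_gens,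
    ← red_sound ([GrigQ.b, GrigQ.a, GrigQ.d, GrigQ.a, GrigQ.b, GrigQ.a, GrigQ.b, GrigQ.a, GrigQ.c, GrigQ.a, GrigQ.d, GrigQ.a, GrigQ.d] ++ [GrigQ.b, GrigQ.a, GrigQ.b, GrigQ.a]) w, show red ([GrigQ.b, GrigQ.a, GrigQ.d, GrigQ.a, GrigQ.b, GrigQ.a, GrigQ.b, GrigQ.a, GrigQ.c, GrigQ.a, GrigQ.d, GrigQ.a, GrigQ.d] ++ [GrigQ.b, GrigQ.a, GrigQ.b, GrigQ.a]) = [GrigQ.b, GrigQ.a, GrigQ.d, GrigQ.a, GrigQ.b, GrigQ.a, GrigQ.b, GrigQ.a, GrigQ.c, GrigQ.a, GrigQ.d, GrigQ.a, GrigQ.c, GrigQ.a, GrigQ.b, GrigQ.a] from by decide]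
theorem lemA_304 : wact2 (Wr 7 0) [0, 0, 0, 0, 0, 1] = [0, 0, 0, 0, 0, 1] := by
  rw [Rsp_7_0, wact2_append, lemA_293, lemA_296]
theorem lemS_304 (w : List (Fin 2)) : wact (stW [0, 0, 0, 0, 0, 1] (Wr 7 0)) w = wact [GrigQ.a, GrigQ.c, GrigQ.a, GrigQ.d] w := by
  rw [Rsp_7_0, stW_append, lemA_293, wact_append_gens, lemS_293, lemS_296, ← wact_append_gens,
    ← red_sound ([GrigQ.a, GrigQ.c, GrigQ.a] ++ [GrigQ.d]) w, show red ([GrigQ.a, GrigQ.c, GrigQ.a] ++ [GrigQ.d]) = [GrigQ.a, GrigQ.c, GrigQ.a, GrigQ.d] from by decide]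
theorem lemA_305 : wact2 (Wr 8 3) [0, 0, 0, 0, 0, 1] = [0, 0, 0, 0, 0, 1] := by
  rw [Rsp_8_3, wact2_append, lemA_304, lemA_297]
theorem lemS_305 (w : List (Fin 2)) : wact (stW [0, 0, 0, 0, 0, 1] (Wr 8 3)) w = wact [GrigQ.a, GrigQ.b, GrigQ.a, GrigQ.b] w := by
  rw [Rsp_8_3, stW_append, lemA_304, wact_append_gens, lemS_304, lemS_297, ← wact_append_gens,
    ← red_sound ([GrigQ.a, GrigQ.c, GrigQ.a, GrigQ.d] ++ [GrigQ.d, GrigQ.a, GrigQ.d, GrigQ.a, GrigQ.b]) w, show red ([GrigQ.a, GrigQ.c, GrigQ.a, GrigQ.d] ++ [GrigQ.d, GrigQ.a, GrigQ.d, GrigQ.a, GrigQ.b]) = [GrigQ.a, GrigQ.b, GrigQ.a, GrigQ.b] from by decide]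
theorem lemA_306 : wact2 (W 8 0) [0, 0, 0, 0, 0, 1] = [0, 0, 0, 0, 0, 1] := by
  rw [Wsp_8_0, wact2_append, lemA_304, lemA_294]
theorem lemS_306 (w : List (Fin 2)) : wact (stW [0, 0, 0, 0, 0, 1] (W 8 0)) w = wact [GrigQ.a, GrigQ.c, GrigQ.a, GrigQ.d, GrigQ.a, GrigQ.d, GrigQ.a, GrigQ.c] w := by
  rw [Wsp_8_0, stW_append, lemA_304, wact_append_gens, lemS_304, lemS_294, ← wact_append_gens,
    ← red_sound ([GrigQ.a, GrigQ.c, GrigQ.a, GrigQ.d] ++ [GrigQ.a, GrigQ.d, GrigQ.a, GrigQ.c]) w, show red ([GrigQ.a, GrigQ.c, GrigQ.a, GrigQ.d] ++ [GrigQ.a, GrigQ.d, GrigQ.a, GrigQ.c]) = [GrigQ.a, GrigQ.c, GrigQ.a, GrigQ.d, GrigQ.a, GrigQ.d, GrigQ.a, GrigQ.c] from by decide]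
theorem lemA_307 : wact2 (W 9 3) [0, 0, 0, 0, 0, 1] = [0, 0, 0, 0, 0, 1] := by
  rw [Wsp_9_3, wact2_append, lemA_305, lemA_306]
theorem lemS_307 (w : List (Fin 2)) : wact (stW [0, 0, 0, 0, 0, 1] (W 9 3)) w = wact [GrigQ.a, GrigQ.b, GrigQ.a, GrigQ.b, GrigQ.a, GrigQ.c, GrigQ.a, GrigQ.d, GrigQ.a, GrigQ.d, GrigQ.a, GrigQ.c] w := by
  rw [Wsp_9_3, stW_append, lemA_305, wact_append_gens, lemS_305, lemS_306, ← wact_append_gens,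
    ← red_sound ([GrigQ.a, GrigQ.b, GrigQ.a, GrigQ.b] ++ [GrigQ.a, GrigQ.c, GrigQ.a, GrigQ.d, GrigQ.a, GrigQ.d, GrigQ.a, GrigQ.c]) w, show red ([GrigQ.a, GrigQ.b, GrigQ.a, GrigQ.b] ++ [GrigQ.a, GrigQ.c, GrigQ.a, GrigQ.d, GrigQ.a, GrigQ.d, GrigQ.a, GrigQ.c]) = [GrigQ.a, GrigQ.b, GrigQ.a, GrigQ.b, GrigQ.a, GrigQ.c, GrigQ.a, GrigQ.d, GrigQ.a, GrigQ.d, GrigQ.a, GrigQ.c] from by decide]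

theorem mainAt (i : Fin 4) (u : List GrigQ) (wit : List (Fin 2))
    (hA : wact2 (W 9 i) grigWord = grigWord)
    (hS : ∀ w, wact (stW grigWord (W 9 i)) w = wact u w)
    (hm : (u, red (W 0 i)) ∈ Rlist)
    (hwit : wact2 (W 0 i) wit ≠ wit) :
    grigA 9 i ≠ 1 ∧ rApp (grigA 9 i) grigWord = grigWord ∧
      ∀ w : List (Fin 2),
        rApp (grigA 9 i) (grigWord ++ w) = grigWord ++ rApp (grigA 0 i) w := by
  have hw := grigA_word 9 i
  have e2 : wact (W 9 i) grigWord = grigWord := (wact_eq_wact2 _ _).trans hA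
  have h3 : ∀ w, rApp (grigA 9 i) (grigWord ++ w) = grigWord ++ rApp (grigA 0 i) w := by
    intro w
    rw [hw, rApp_prodW, grigA_word 0 i, rApp_prodW, wact_append, e2]
    refine congrArg (grigWord ++ ·) ?_
    rw [wstates_eq_stW, hS w, ← red_sound (W 0 i) w]
    exact bisim Rlist hRlist w (u, red (W 0 i)) hm
  refine ⟨?_, ?_, h3⟩
  · intro h
    apply hwit
    have h4 := h3 wit
    rw [h, rApp_one] at h4
    rw [← wact_eq_wact2, ← rApp_prodW, ← grigA_word 0 i]
    exact (List.append_cancel_left h4).symm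
  · rw [hw, rApp_prodW]; exact e2

/-- For each `i`, the element `A₉,ᵢ` is nontrivial, fixes the word `111112`,
and its state at `111112` is `A₀,ᵢ`, i.e. `(111112·w)^{A₉,ᵢ} = 111112·(w^{A₀,ᵢ})`
for all words `w`. -/
theorem grigorchuk_lemma_calculation :
    ∀ i : Fin 4, grigA 9 i ≠ 1 ∧ rApp (grigA 9 i) grigWord = grigWord ∧
      ∀ w : List (Fin 2),
        rApp (grigA 9 i) (grigWord ++ w) = grigWord ++ rApp (grigA 0 i) w := by
  intro i
  fin_cases i
  · exact mainAt 0 [GrigQ.c, GrigQ.a, GrigQ.d, GrigQ.a, GrigQ.d, GrigQ.a, GrigQ.c, GrigQ.a, GrigQ.c, GrigQ.a, GrigQ.d, GrigQ.a, GrigQ.c, GrigQ.a, GrigQ.b, GrigQ.a, GrigQ.c, GrigQ.a, GrigQ.d, GrigQ.a, GrigQ.d] [0, 1, 0, 0] lemA_149 lemS_149 (by decide) (by decide)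
  · exact mainAt 1 [GrigQ.d, GrigQ.a, GrigQ.d, GrigQ.a, GrigQ.c, GrigQ.a, GrigQ.b, GrigQ.a, GrigQ.c, GrigQ.a, GrigQ.d, GrigQ.a, GrigQ.b, GrigQ.a, GrigQ.d, GrigQ.a, GrigQ.c, GrigQ.a, GrigQ.b, GrigQ.a, GrigQ.b, GrigQ.a, GrigQ.d, GrigQ.a, GrigQ.b] [0, 0, 0] lemA_299 lemS_299 (by decide) (by decide)
  · exact mainAt 2 [GrigQ.b, GrigQ.a, GrigQ.d, GrigQ.a, GrigQ.b, GrigQ.a, GrigQ.b, GrigQ.a, GrigQ.c, GrigQ.a, GrigQ.d, GrigQ.a, GrigQ.c, GrigQ.a, GrigQ.b, GrigQ.a] [0, 0, 0, 0] lemA_303 lemS_303 (by decide) (by decide)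
  · exact mainAt 3 [GrigQ.a, GrigQ.b, GrigQ.a, GrigQ.b, GrigQ.a, GrigQ.c, GrigQ.a, GrigQ.d, GrigQ.a, GrigQ.d, GrigQ.a, GrigQ.c] [0, 0, 0] lemA_307 lemS_307 (by decide) (by decide)

end AutSG
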